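/- arXiv:2603.22712 — 8 statements merged into one kernel-verified Lean document; each statement's English description precedes it below -/
import Mathlib

section
/- Let A_UU := Σ_{1≤i<i*≤u} (e_i − e_{i*})ᵀ C⁺ (e_i − e_{i*}), A_WW := Σ_{j=1}^b s_j(s_j − 1) + Σ_{1≤j<j*≤b} s_j s_{j*} [2 + (ẽ_j − ẽ_{j*})ᵀ C̃⁺ (ẽ_j − ẽ_{j*})], and A_UW := Σ_{i=1}^u Σ_{j=1}^b s_j [(3/2) + ξ_{ij}ᵀ C̃⁺ ξ_{ij}]. Then A_UU + A_WW + A_UW = (1/2)w(3u + 2w − b − 1) + u·tr(C⁺) + (1/2)k[w·tr(C̃⁺) + b·tr(C̃⁺S)]. -/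
open Matrix BigOperators

lemma half_ite_sum {n : ℕ} (f : Fin n → Fin n → ℝ) (hsym : ∀ i j, f i j = f j i) :
    ∑ i, ∑ j, (if i < j then f i j else 0)
      = (1/2) * ((∑ i, ∑ j, f i j) - ∑ i, f i i) := by
  have split : ∀ i j : Fin n, f i j
      = (if i < j then f i j else 0) + (if j < i then f i j else 0)
        + (if i = j then f i j else 0) := by
    intro i j
    rcases lt_trichotomy i j with h | h | h
    · simp [h, asymm h, h.ne]
    · simp [h, lt_irrefl]
    · simp [h, asymm h, h.ne']
  have h1 : ∑ i, ∑ j, f i j = (∑ i, ∑ j, (if i < j then f i j else 0))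
      + (∑ i, ∑ j, (if j < i then f i j else 0)) + ∑ i, f i i := by
    calc ∑ i, ∑ j, f i j = ∑ i : Fin n, ∑ j : Fin n,
        ((if i < j then f i j else 0) + (if j < i then f i j else 0)
          + (if i = j then f i j else 0)) :=
      Finset.sum_congr rfl fun i _ => Finset.sum_congr rfl fun j _ => split i j
    _ = _ := by simp [Finset.sum_add_distrib, Finset.sum_ite_eq]
  have h2 : (∑ i, ∑ j, (if j < i then f i j else 0))
      = ∑ i, ∑ j, (if i < j then f i j else 0) := by
    rw [Finset.sum_comm]
    exact Finset.sum_congr rfl fun i _ => Finset.sum_congr rfl fun j _ => by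
      rw [hsym]
  rw [h2] at h1
  linarith

lemma mp_unique {n : ℕ} (A X Y : Matrix (Fin n) (Fin n) ℝ)
    (hX1 : A*X*A = A) (hX2 : X*A*X = X) (hX3 : (A*X)ᵀ = A*X) (hX4 : (X*A)ᵀ = X*A)
    (hY1 : A*Y*A = A) (hY2 : Y*A*Y = Y) (hY3 : (A*Y)ᵀ = A*Y) (hY4 : (Y*A)ᵀ = Y*A) :
    X = Y := by
  have hAX : A*X = A*Y := by
    calc A*X = (A*X)ᵀ := hX3.symm
    _ = Xᵀ * Aᵀ := by rw [Matrix.transpose_mul]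
    _ = Xᵀ * (A*Y*A)ᵀ := by rw [hY1]
    _ = Xᵀ * (Aᵀ * (A*Y)ᵀ) := by rw [Matrix.transpose_mul]
    _ = Xᵀ * (Aᵀ * (A*Y)) := by rw [hY3]
    _ = (Xᵀ * Aᵀ) * (A*Y) := by rw [Matrix.mul_assoc]
    _ = (A*X)ᵀ * (A*Y) := by rw [Matrix.transpose_mul]
    _ = (A*X) * (A*Y) := by rw [hX3]
    _ = (A*X*A)*Y := by simp only [Matrix.mul_assoc]
    _ = A*Y := by rw [hX1]
  have hXA : X*A = Y*A := by
    calc X*A = (X*A)ᵀ := hX4.symm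
    _ = Aᵀ * Xᵀ := by rw [Matrix.transpose_mul]
    _ = (A*Y*A)ᵀ * Xᵀ := by rw [hY1]
    _ = ((Y*A)ᵀ * Aᵀ) * Xᵀ := by
        rw [Matrix.mul_assoc, Matrix.transpose_mul, Matrix.transpose_mul]
    _ = (Y*A)ᵀ * (Aᵀ * Xᵀ) := by rw [Matrix.mul_assoc]
    _ = (Y*A) * (X*A)ᵀ := by rw [hY4, Matrix.transpose_mul]
    _ = (Y*A) * (X*A) := by rw [hX4]
    _ = Y*(A*X*A) := by simp only [Matrix.mul_assoc]
    _ = Y*A := by rw [hX1]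
  calc X = X*A*X := hX2.symm
  _ = X*(A*Y) := by rw [Matrix.mul_assoc, hAX]
  _ = (X*A)*Y := by rw [Matrix.mul_assoc]
  _ = (Y*A)*Y := by rw [hXA]
  _ = Y := hY2

lemma mp_transpose_symm {n : ℕ} (A X : Matrix (Fin n) (Fin n) ℝ) (hA : Aᵀ = A)
    (h1 : A*X*A = A) (h2 : X*A*X = X) (h3 : (A*X)ᵀ = A*X) (h4 : (X*A)ᵀ = X*A) :
    Xᵀ = X := by
  have e3 : A*Xᵀ = X*A := by
    conv_lhs => rw [← hA]
    rw [← Matrix.transpose_mul, h4]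
  have e4 : Xᵀ*A = A*X := by
    conv_lhs => rw [← hA]
    rw [← Matrix.transpose_mul, h3]
  apply mp_unique A Xᵀ X _ _ _ _ h1 h2 h3 h4
  · have t1 : (A*X*A)ᵀ = A*Xᵀ*A := by
      rw [Matrix.transpose_mul, Matrix.transpose_mul, hA]
      simp only [Matrix.mul_assoc]
    rw [← t1, h1, hA]
  · have t2 : (X*A*X)ᵀ = Xᵀ*A*Xᵀ := by
      rw [Matrix.transpose_mul, Matrix.transpose_mul, hA]
      simp only [Matrix.mul_assoc]
    rw [← t2, h2]
  · rw [e3]; exact h4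
  · rw [e4]; exact h3

lemma qform {n : ℕ} (M : Matrix (Fin n) (Fin n) ℝ) (i i' : Fin n) :
    ((Pi.single i 1 : Fin n → ℝ) - Pi.single i' 1) ⬝ᵥ
      M.mulVec ((Pi.single i 1 : Fin n → ℝ) - Pi.single i' 1)
      = M i i + M i' i' - M i i' - M i' i := by
  simp only [sub_dotProduct, dotProduct_sub, Matrix.mulVec_sub,
    Matrix.mulVec_single_one, single_dotProduct, Matrix.col_apply, Pi.sub_apply, one_mul, mul_one]
  ring
/-- Theorem 1 of the paper: the sum `A_UU + A_WW + A_UW` of variance contributions equals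
`(1/2)w(3u + 2w − b − 1) + u·tr(C⁺) + (1/2)k[w·tr(C̃⁺) + b·tr(C̃⁺S)]`. -/
theorem stmt0
    (u b k : ℕ) (hu : 0 < u) (hb : 3 ≤ b) (hk : 1 ≤ k) (hub : b - 1 ≤ u)
    (w : ℕ) (hw : 2 * u + w = b * k) (hw1 : 1 ≤ w)
    (s : Fin b → ℕ) (hs : ∀ j, s j ≤ k - 1) (hssum : ∑ j, s j = w)
    (N : Matrix (Fin u) (Fin b) ℕ)
    (hrow : ∀ i, ∑ j, N i j = 2)
    (hcol : ∀ j, ∑ i, N i j = k - s j)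
    (Nr : Matrix (Fin u) (Fin b) ℝ) (hNr : Nr = N.map (Nat.cast : ℕ → ℝ))
    (S : Matrix (Fin b) (Fin b) ℝ) (hS : S = Matrix.diagonal fun j => (s j : ℝ))
    (C : Matrix (Fin u) (Fin u) ℝ)
    (hC : C = (2 : ℝ) • (1 : Matrix (Fin u) (Fin u) ℝ)
        - Nr * ((k : ℝ) • (1 : Matrix (Fin b) (Fin b) ℝ) - S)⁻¹ * Nrᵀ)
    (Ct : Matrix (Fin b) (Fin b) ℝ)
    (hCt : Ct = (k : ℝ) • (1 : Matrix (Fin b) (Fin b) ℝ) - S - (1/2 : ℝ) • (Nrᵀ * Nr))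
    (hCpsd : C.PosSemidef)
    (hCker : ∀ x : Fin u → ℝ, C.mulVec x = 0 ↔ ∃ c : ℝ, x = fun _ => c)
    (hCtpsd : Ct.PosSemidef)
    (hCtker : ∀ x : Fin b → ℝ, Ct.mulVec x = 0 ↔ ∃ c : ℝ, x = fun _ => c)
    (Cp : Matrix (Fin u) (Fin u) ℝ)
    (hCp1 : C * Cp * C = C) (hCp2 : Cp * C * Cp = Cp)
    (hCp3 : (C * Cp)ᵀ = C * Cp) (hCp4 : (Cp * C)ᵀ = Cp * C)
    (Ctp : Matrix (Fin b) (Fin b) ℝ)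
    (hCtp1 : Ct * Ctp * Ct = Ct) (hCtp2 : Ctp * Ct * Ctp = Ctp)
    (hCtp3 : (Ct * Ctp)ᵀ = Ct * Ctp) (hCtp4 : (Ctp * Ct)ᵀ = Ctp * Ct)
    (ξ : Fin u → Fin b → Fin b → ℝ)
    (hξ : ∀ i j, ξ i j
        = (Pi.single j 1 : Fin b → ℝ) - (1/2 : ℝ) • Nrᵀ.mulVec (Pi.single i 1))
    (AUU AWW AUW : ℝ)
    (hAUU : AUU = ∑ i : Fin u, ∑ i' : Fin u,
      if i < i' then
        ((Pi.single i 1 : Fin u → ℝ) - Pi.single i' 1) ⬝ᵥ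
          Cp.mulVec ((Pi.single i 1 : Fin u → ℝ) - Pi.single i' 1)
      else 0)
    (hAWW : AWW = (∑ j : Fin b, (s j : ℝ) * ((s j : ℝ) - 1)) +
      ∑ j : Fin b, ∑ j' : Fin b,
        if j < j' then
          (s j : ℝ) * (s j' : ℝ) *
            (2 + ((Pi.single j 1 : Fin b → ℝ) - Pi.single j' 1) ⬝ᵥ
              Ctp.mulVec ((Pi.single j 1 : Fin b → ℝ) - Pi.single j' 1))
        else 0)
    (hAUW : AUW = ∑ i : Fin u, ∑ j : Fin b, (s j : ℝ) *
      ((3/2 : ℝ) + (ξ i j) ⬝ᵥ Ctp.mulVec (ξ i j))) :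
    AUU + AWW + AUW
      = (1/2 : ℝ) * (w : ℝ) * (3 * (u : ℝ) + 2 * (w : ℝ) - (b : ℝ) - 1)
        + (u : ℝ) * Cp.trace
        + (1/2 : ℝ) * (k : ℝ) * ((w : ℝ) * Ctp.trace + (b : ℝ) * (Ctp * S).trace) := by

  -- basic casts
  have hbne : (b:ℝ) ≠ 0 := Nat.cast_ne_zero.mpr (by omega)
  have hwR : 2*(u:ℝ) + (w:ℝ) = (b:ℝ)*(k:ℝ) := by exact_mod_cast hw
  have hsvsum : ∑ j, (s j : ℝ) = (w:ℝ) := by exact_mod_cast hssum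
  have hcolR : ∀ j, ∑ i, Nr i j = (k:ℝ) - (s j : ℝ) := by
    intro j
    have h1 : s j ≤ k := le_trans (hs j) (Nat.sub_le _ _)
    rw [hNr]
    calc ∑ i, (N.map (Nat.cast : ℕ → ℝ)) i j = ((∑ i, N i j : ℕ) : ℝ) := by
          simp [Matrix.map_apply]
    _ = ((k - s j : ℕ) : ℝ) := by rw [hcol j]
    _ = (k:ℝ) - (s j:ℝ) := by rw [Nat.cast_sub h1]
  -- symmetry
  have hCsym : Cᵀ = C := by
    have := hCpsd.1
    rwa [Matrix.IsHermitian, Matrix.conjTranspose_eq_transpose_of_trivial] at this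
  have hCtsym : Ctᵀ = Ct := by
    have := hCtpsd.1
    rwa [Matrix.IsHermitian, Matrix.conjTranspose_eq_transpose_of_trivial] at this
  have hCtpsym : Ctpᵀ = Ctp := mp_transpose_symm Ct Ctp hCtsym hCtp1 hCtp2 hCtp3 hCtp4
  -- kernel facts
  have hC1v : C.mulVec (fun _ => (1:ℝ)) = 0 := (hCker _).mpr ⟨1, rfl⟩
  have hCt1v : Ct.mulVec (fun _ => (1:ℝ)) = 0 := (hCtker _).mpr ⟨1, rfl⟩
  have hCp1v : Cp.mulVec (fun _ => (1:ℝ)) = 0 := by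
    have hsp : C * Cp = Cpᵀ * C := by rw [← hCp3, Matrix.transpose_mul, hCsym]
    calc Cp.mulVec (fun _ => (1:ℝ)) = (Cp*(C*Cp)).mulVec (fun _ => (1:ℝ)) := by
          rw [← Matrix.mul_assoc, hCp2]
    _ = Cp.mulVec (Cpᵀ.mulVec (C.mulVec (fun _ => (1:ℝ)))) := by
          rw [hsp]; simp only [Matrix.mulVec_mulVec, Matrix.mul_assoc]
    _ = 0 := by rw [hC1v, Matrix.mulVec_zero, Matrix.mulVec_zero]
  have hCtp1v : Ctp.mulVec (fun _ => (1:ℝ)) = 0 := by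
    have hsp : Ct * Ctp = Ctpᵀ * Ct := by rw [← hCtp3, Matrix.transpose_mul, hCtsym]
    calc Ctp.mulVec (fun _ => (1:ℝ)) = (Ctp*(Ct*Ctp)).mulVec (fun _ => (1:ℝ)) := by
          rw [← Matrix.mul_assoc, hCtp2]
    _ = Ctp.mulVec (Ctpᵀ.mulVec (Ct.mulVec (fun _ => (1:ℝ)))) := by
          rw [hsp]; simp only [Matrix.mulVec_mulVec, Matrix.mul_assoc]
    _ = 0 := by rw [hCt1v, Matrix.mulVec_zero, Matrix.mulVec_zero]
  have hCp_row : ∀ r, ∑ c, Cp r c = 0 := by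
    intro r
    have := congrFun hCp1v r
    simpa [Matrix.mulVec, dotProduct] using this
  have hCtp_row : ∀ r, ∑ c, Ctp r c = 0 := by
    intro r
    have := congrFun hCtp1v r
    simpa [Matrix.mulVec, dotProduct] using this
  have hCtpE : ∀ a c, Ctp a c = Ctp c a := by
    intro a c
    have h := congrFun (congrFun hCtpsym a) c
    rw [Matrix.transpose_apply] at h
    exact h.symm
  have hCtp_col : ∀ c, ∑ r, Ctp r c = 0 := by
    intro c
    calc ∑ r, Ctp r c = ∑ r, Ctp c r := Finset.sum_congr rfl fun r _ => hCtpE r c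
    _ = 0 := hCtp_row c
  -- key projection identity
  have hkey : ∀ x : Fin b → ℝ,
      (Ctp * Ct).mulVec x = x - ((∑ r, x r)/(b:ℝ)) • (fun _ => (1:ℝ)) := by
    intro x
    have h0 : Ct.mulVec (x - (Ctp * Ct).mulVec x) = 0 := by
      rw [Matrix.mulVec_sub, Matrix.mulVec_mulVec]
      have : Ct * (Ctp * Ct) = Ct := by rw [← Matrix.mul_assoc, hCtp1]
      rw [this, sub_self]
    obtain ⟨c, hc⟩ := (hCtker _).mp h0
    have hsum0 : ∑ r, ((Ctp * Ct).mulVec x) r = 0 := by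
      have hv : (fun _ => (1:ℝ)) ᵥ* (Ctp * Ct) = 0 := by
        rw [← hCtp4, Matrix.vecMul_transpose, ← Matrix.mulVec_mulVec, hCt1v,
          Matrix.mulVec_zero]
      calc ∑ r, ((Ctp * Ct).mulVec x) r
          = (fun _ => (1:ℝ)) ⬝ᵥ (Ctp*Ct).mulVec x := by simp [dotProduct]
      _ = ((fun _ => (1:ℝ)) ᵥ* (Ctp*Ct)) ⬝ᵥ x := Matrix.dotProduct_mulVec _ _ _
      _ = 0 := by rw [hv, zero_dotProduct]
    have hyx : ∑ r, (x - (Ctp * Ct).mulVec x) r = ∑ r, x r := by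
      simp [Finset.sum_sub_distrib, hsum0]
    have hcb : (b:ℝ) * c = ∑ r, x r := by
      rw [← hyx, hc]
      simp [Finset.sum_const, Finset.card_univ, mul_comm]
    have hcval : c = (∑ r, x r)/(b:ℝ) := by
      field_simp
      linarith [hcb]
    have hfin : (Ctp * Ct).mulVec x = x - (fun _ => c) := by
      rw [← hc]
      funext r
      simp
    rw [hfin, hcval]
    congr 1
    funext r
    simp
  have htrCtpCt : (Ctp * Ct).trace = (b:ℝ) - 1 := by
    have hdiag : ∀ j, (Ctp * Ct) j j = 1 - 1/(b:ℝ) := by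
      intro j
      have h := congrFun (hkey (Pi.single j 1)) j
      rw [Matrix.mulVec_single] at h
      simpa using h
    rw [Matrix.trace]
    simp only [Matrix.diag]
    rw [Finset.sum_congr rfl fun j _ => hdiag j]
    simp [Finset.sum_const, Finset.card_univ]
    field_simp
  have htrCtpS : (Ctp * S).trace = ∑ j, (s j : ℝ) * Ctp j j := by
    rw [hS, Matrix.trace]
    simp [Matrix.diag, Matrix.mul_diagonal, mul_comm]
  -- Step 1 : AUU
  have hAUUval : AUU = (u:ℝ) * Cp.trace := by
    rw [hAUU]
    simp only [qform]
    rw [half_ite_sum _ (fun i j => by ring)]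
    have hdiag : ∑ i : Fin u, (Cp i i + Cp i i - Cp i i - Cp i i) = 0 := by simp
    have h1 : ∑ _i : Fin u, ∑ _i' : Fin u, Cp _i _i = (u:ℝ) * Cp.trace := by
      simp only [Finset.sum_const, Finset.card_univ, Fintype.card_fin, nsmul_eq_mul]
      rw [← Finset.mul_sum, Matrix.trace]
      rfl
    have h2 : ∑ _i : Fin u, ∑ i' : Fin u, Cp i' i' = (u:ℝ) * Cp.trace := by
      rw [Finset.sum_const, Finset.card_univ, Fintype.card_fin, nsmul_eq_mul, Matrix.trace]
      rfl
    have h3 : ∑ i : Fin u, ∑ i' : Fin u, Cp i i' = 0 := by simp [hCp_row]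
    have h4 : ∑ i : Fin u, ∑ i' : Fin u, Cp i' i = 0 := by
      rw [Finset.sum_comm]; simp [hCp_row]
    have htot : ∑ i : Fin u, ∑ i' : Fin u, (Cp i i + Cp i' i' - Cp i i' - Cp i' i)
        = 2 * (u:ℝ) * Cp.trace := by
      simp only [Finset.sum_add_distrib, Finset.sum_sub_distrib]
      rw [h1, h2, h3, h4]
      ring
    rw [htot, hdiag]
    ring
  -- Step 2 : AWW
  set Q : ℝ := ∑ j : Fin b, ∑ j' : Fin b, (s j:ℝ) * (Ctp j j' * (s j':ℝ)) with hQdef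
  have T2 : ∑ j : Fin b, ∑ j' : Fin b, ((s j:ℝ)*Ctp j j)*(s j':ℝ)
      = (w:ℝ) * ∑ j : Fin b, (s j:ℝ)*Ctp j j := by
    simp only [← Finset.mul_sum, hsvsum]
    rw [← Finset.sum_mul]
    ring
  have hAWWval : AWW = (w:ℝ)*((w:ℝ)-1) + (w:ℝ)*((Ctp*S).trace) - Q := by
    rw [hAWW]
    simp only [qform]
    rw [half_ite_sum _ (fun j j' => by ring)]
    have hdiag : ∑ j : Fin b, (s j:ℝ)*(s j:ℝ)*(2 + (Ctp j j + Ctp j j - Ctp j j - Ctp j j))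
        = 2 * ∑ j : Fin b, (s j:ℝ)*(s j:ℝ) := by
      rw [Finset.mul_sum]
      exact Finset.sum_congr rfl fun j _ => by ring
    have T1 : ∑ j : Fin b, ∑ j' : Fin b, (s j:ℝ)*(2*(s j':ℝ)) = 2*(w:ℝ)*(w:ℝ) := by
      simp only [← Finset.mul_sum, hsvsum]
      rw [← Finset.sum_mul, hsvsum]
      ring
    have T3 : ∑ j : Fin b, ∑ j' : Fin b, (s j:ℝ)*((s j':ℝ)*Ctp j' j')
        = (w:ℝ) * ∑ j : Fin b, (s j:ℝ)*Ctp j j := by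
      simp only [← Finset.mul_sum]
      rw [← Finset.sum_mul, hsvsum]
    have T5 : ∑ j : Fin b, ∑ j' : Fin b, (s j:ℝ)*(Ctp j' j * (s j':ℝ)) = Q := by
      rw [hQdef, Finset.sum_comm]
      exact Finset.sum_congr rfl fun a _ => Finset.sum_congr rfl fun c _ => by ring
    have htot : ∑ j : Fin b, ∑ j' : Fin b,
        (s j:ℝ)*(s j':ℝ)*(2 + (Ctp j j + Ctp j' j' - Ctp j j' - Ctp j' j))
        = 2*(w:ℝ)*(w:ℝ) + 2*(w:ℝ)*(∑ j : Fin b, (s j:ℝ)*Ctp j j) - 2*Q := by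
      calc ∑ j : Fin b, ∑ j' : Fin b,
          (s j:ℝ)*(s j':ℝ)*(2 + (Ctp j j + Ctp j' j' - Ctp j j' - Ctp j' j))
          = ∑ j : Fin b, ∑ j' : Fin b,
            ((s j:ℝ)*(2*(s j':ℝ)) + ((s j:ℝ)*Ctp j j)*(s j':ℝ)
              + (s j:ℝ)*((s j':ℝ)*Ctp j' j') - (s j:ℝ)*(Ctp j j' * (s j':ℝ))
              - (s j:ℝ)*(Ctp j' j * (s j':ℝ))) :=
        Finset.sum_congr rfl fun j _ => Finset.sum_congr rfl fun j' _ => by ring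
      _ = _ := by
        simp only [Finset.sum_add_distrib, Finset.sum_sub_distrib]
        rw [T1, T2, T3, hQdef.symm, T5]
        ring
    have hss : ∑ j : Fin b, (s j:ℝ)*((s j:ℝ)-1)
        = (∑ j : Fin b, (s j:ℝ)*(s j:ℝ)) - (w:ℝ) := by
      simp only [mul_sub, mul_one, Finset.sum_sub_distrib, hsvsum]
    rw [htot, hdiag, hss, htrCtpS]
    ring
  -- Step 3 : AUW
  have hν : ∀ i : Fin u, Nrᵀ.mulVec (Pi.single i 1) = fun j' => Nr i j' := by
    intro i
    rw [Matrix.mulVec_single]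
    funext j'
    simp [Matrix.transpose_apply]
  have hξq : ∀ (i : Fin u) (j : Fin b), (ξ i j) ⬝ᵥ Ctp.mulVec (ξ i j)
      = Ctp j j - (1/2)*((Ctp.mulVec (fun j' => Nr i j')) j)
        - (1/2)*((fun j' => Nr i j') ⬝ᵥ Ctp.mulVec (Pi.single j 1))
        + (1/4)*((fun j' => Nr i j') ⬝ᵥ Ctp.mulVec (fun j' => Nr i j')) := by
    intro i j
    rw [hξ, hν]
    simp only [sub_dotProduct, dotProduct_sub, Matrix.mulVec_sub,
      Matrix.mulVec_smul, smul_dotProduct, dotProduct_smul,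
      Matrix.mulVec_single_one, single_dotProduct, Matrix.col_apply, smul_eq_mul, mul_one, one_mul]
    ring
  have ha : ∀ j : Fin b, ∑ i : Fin u, (Ctp.mulVec (fun j' => Nr i j')) j
      = -(∑ j' : Fin b, Ctp j j' * (s j':ℝ)) := by
    intro j
    calc ∑ i : Fin u, (Ctp.mulVec fun j' => Nr i j') j
        = ∑ i : Fin u, ∑ j' : Fin b, Ctp j j' * Nr i j' := by
          simp [Matrix.mulVec, dotProduct]
    _ = ∑ j' : Fin b, ∑ i : Fin u, Ctp j j' * Nr i j' := Finset.sum_comm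
    _ = ∑ j' : Fin b, Ctp j j' * ((k:ℝ) - (s j':ℝ)) := by
        refine Finset.sum_congr rfl fun j' _ => ?_
        rw [← Finset.mul_sum, hcolR]
    _ = -(∑ j' : Fin b, Ctp j j' * (s j':ℝ)) := by
        simp only [mul_sub, Finset.sum_sub_distrib, ← Finset.sum_mul, hCtp_row j]
        ring
  have hbj : ∀ j : Fin b, ∑ i : Fin u, ((fun j' => Nr i j') ⬝ᵥ Ctp.mulVec (Pi.single j 1))
      = -(∑ j' : Fin b, (s j':ℝ) * Ctp j' j) := by
    intro j
    calc ∑ i : Fin u, ((fun j' => Nr i j') ⬝ᵥ Ctp.mulVec (Pi.single j 1))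
        = ∑ i : Fin u, ∑ j' : Fin b, Nr i j' * Ctp j' j := by
          refine Finset.sum_congr rfl fun i _ => ?_
          simp [Matrix.mulVec_single, dotProduct]
    _ = ∑ j' : Fin b, ∑ i : Fin u, Nr i j' * Ctp j' j := Finset.sum_comm
    _ = ∑ j' : Fin b, ((k:ℝ) - (s j':ℝ)) * Ctp j' j := by
        refine Finset.sum_congr rfl fun j' _ => ?_
        rw [← Finset.sum_mul, hcolR]
    _ = -(∑ j' : Fin b, (s j':ℝ) * Ctp j' j) := by
        simp only [sub_mul, Finset.sum_sub_distrib, ← Finset.mul_sum, hCtp_col j]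
        ring
  have hc4 : ∑ i : Fin u, ((fun j' => Nr i j') ⬝ᵥ Ctp.mulVec (fun j' => Nr i j'))
      = (Ctp * (Nrᵀ * Nr)).trace := by
    calc ∑ i : Fin u, ((fun j' => Nr i j') ⬝ᵥ Ctp.mulVec (fun j' => Nr i j'))
        = ∑ i : Fin u, ∑ j' : Fin b, ∑ j'' : Fin b, Nr i j' * (Ctp j' j'' * Nr i j'') := by
          refine Finset.sum_congr rfl fun i _ => ?_
          simp [Matrix.mulVec, dotProduct, Finset.mul_sum]
    _ = ∑ j' : Fin b, ∑ j'' : Fin b, ∑ i : Fin u, Nr i j' * (Ctp j' j'' * Nr i j'') := by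
          rw [Finset.sum_comm]
          exact Finset.sum_congr rfl fun j' _ => Finset.sum_comm
    _ = (Ctp * (Nrᵀ * Nr)).trace := by
          symm
          simp only [Matrix.trace, Matrix.diag, Matrix.mul_apply, Matrix.transpose_apply,
            Finset.mul_sum]
          exact Finset.sum_congr rfl fun j' _ => Finset.sum_congr rfl fun j'' _ =>
            Finset.sum_congr rfl fun i _ => by ring
  have hNN : Nrᵀ * Nr = (2:ℝ) • ((k:ℝ) • (1 : Matrix (Fin b) (Fin b) ℝ) - S - Ct) := by
    rw [hCt]
    ext i j
    simp only [Matrix.smul_apply, Matrix.sub_apply, smul_eq_mul]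
    ring
  have hT4tr : (Ctp * (Nrᵀ * Nr)).trace
      = 2*((k:ℝ) * Ctp.trace - (Ctp*S).trace - ((b:ℝ)-1)) := by
    rw [hNN, Matrix.mul_smul, Matrix.trace_smul, Matrix.mul_sub, Matrix.mul_sub,
      Matrix.trace_sub, Matrix.trace_sub, Matrix.mul_smul, Matrix.trace_smul,
      Matrix.mul_one, htrCtpCt]
    simp only [smul_eq_mul]
  have hinner : ∀ j : Fin b, ∑ i : Fin u, ((3/2:ℝ) + (ξ i j) ⬝ᵥ Ctp.mulVec (ξ i j))
      = (3/2)*(u:ℝ) + (u:ℝ)*Ctp j j + (1/2)*(∑ j' : Fin b, Ctp j j' * (s j':ℝ))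
        + (1/2)*(∑ j' : Fin b, (s j':ℝ) * Ctp j' j)
        + (1/4)*((Ctp * (Nrᵀ * Nr)).trace) := by
    intro j
    calc ∑ i : Fin u, ((3/2:ℝ) + (ξ i j) ⬝ᵥ Ctp.mulVec (ξ i j))
        = ∑ i : Fin u, ((3/2:ℝ) + (Ctp j j - (1/2)*((Ctp.mulVec (fun j' => Nr i j')) j)
          - (1/2)*((fun j' => Nr i j') ⬝ᵥ Ctp.mulVec (Pi.single j 1))
          + (1/4)*((fun j' => Nr i j') ⬝ᵥ Ctp.mulVec (fun j' => Nr i j')))) :=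
        Finset.sum_congr rfl fun i _ => by rw [hξq]
    _ = _ := by
        simp only [Finset.sum_add_distrib, Finset.sum_sub_distrib, ← Finset.mul_sum,
          Finset.sum_const, Finset.card_univ, Fintype.card_fin, nsmul_eq_mul]
        rw [ha j, hbj j, hc4]
        ring
  have hQA : ∑ j : Fin b, (s j:ℝ) * (∑ j' : Fin b, Ctp j j' * (s j':ℝ)) = Q := by
    rw [hQdef]
    exact Finset.sum_congr rfl fun j _ => by rw [Finset.mul_sum]
  have hQB : ∑ j : Fin b, (s j:ℝ) * (∑ j' : Fin b, (s j':ℝ) * Ctp j' j) = Q := by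
    calc ∑ j : Fin b, (s j:ℝ) * (∑ j' : Fin b, (s j':ℝ) * Ctp j' j)
        = ∑ j : Fin b, ∑ j' : Fin b, (s j:ℝ) * ((s j':ℝ) * Ctp j' j) := by
          exact Finset.sum_congr rfl fun j _ => by rw [Finset.mul_sum]
    _ = ∑ j' : Fin b, ∑ j : Fin b, (s j:ℝ) * ((s j':ℝ) * Ctp j' j) := Finset.sum_comm
    _ = Q := by
        rw [hQdef]
        exact Finset.sum_congr rfl fun a _ => Finset.sum_congr rfl fun c _ => by ring
  have hAUWval : AUW = (3/2)*(u:ℝ)*(w:ℝ) + (u:ℝ)*(∑ j : Fin b, (s j:ℝ)*Ctp j j) + Q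
      + ((w:ℝ)/4)*((Ctp * (Nrᵀ * Nr)).trace) := by
    rw [hAUW, Finset.sum_comm]
    calc ∑ j : Fin b, ∑ i : Fin u, (s j:ℝ) * ((3/2:ℝ) + (ξ i j) ⬝ᵥ Ctp.mulVec (ξ i j))
        = ∑ j : Fin b, (s j:ℝ) * ((3/2)*(u:ℝ) + (u:ℝ)*Ctp j j
            + (1/2)*(∑ j' : Fin b, Ctp j j' * (s j':ℝ))
            + (1/2)*(∑ j' : Fin b, (s j':ℝ) * Ctp j' j)
            + (1/4)*((Ctp * (Nrᵀ * Nr)).trace)) := by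
          refine Finset.sum_congr rfl fun j _ => ?_
          rw [← Finset.mul_sum, hinner j]
    _ = ∑ j : Fin b, ((s j:ℝ) * ((3/2)*(u:ℝ)) + (u:ℝ)*((s j:ℝ)*Ctp j j)
            + (1/2)*((s j:ℝ) * (∑ j' : Fin b, Ctp j j' * (s j':ℝ)))
            + (1/2)*((s j:ℝ) * (∑ j' : Fin b, (s j':ℝ) * Ctp j' j))
            + (s j:ℝ) * ((1/4)*((Ctp * (Nrᵀ * Nr)).trace))) :=
        Finset.sum_congr rfl fun j _ => by ring
    _ = _ := by
        simp only [Finset.sum_add_distrib, ← Finset.mul_sum, ← Finset.sum_mul, hQA, hQB,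
          hsvsum]
        ring
  -- conclusion
  rw [hAUUval, hAWWval, hAUWval, hT4tr, htrCtpS]
  linear_combination ((∑ j : Fin b, (s j:ℝ) * Ctp j j) / 2) * hwR
end

section
/- For any nonnegative definite real b × b matrix Δ, tr(C̃Δ)·tr(C̃⁺Δ) ≥ (tr(Δ) − b⁻¹·1_bᵀΔ1_b)². -/
open Matrix BigOperators


private lemma mp_comm {n : ℕ} (A X : Matrix (Fin n) (Fin n) ℝ)
    (tA : Aᵀ = A) (e1 : A*X*A = A) (e2 : X*A*X = X)
    (e3 : (A*X)ᵀ = A*X) (e4 : (X*A)ᵀ = X*A) : A*X = X*A := by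
  have f3 : Xᵀ * A = A * X := by
    calc Xᵀ * A = Xᵀ * Aᵀ := by rw [tA]
    _ = (A*X)ᵀ := by rw [Matrix.transpose_mul]
    _ = A*X := e3
  have f4 : A * Xᵀ = X * A := by
    calc A * Xᵀ = Aᵀ * Xᵀ := by rw [tA]
    _ = (X*A)ᵀ := by rw [Matrix.transpose_mul]
    _ = X*A := e4
  have h1 : A*X = (A*X)*(X*A) := by
    calc A*X = Xᵀ*A := f3.symm
    _ = Xᵀ*(A*X*A) := by rw [e1]
    _ = (Xᵀ*A)*(X*A) := by simp only [Matrix.mul_assoc]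
    _ = (A*X)*(X*A) := by rw [f3]
  have h2 : X*A = (A*X)*(X*A) := by
    calc X*A = A*Xᵀ := f4.symm
    _ = (A*X*A)*Xᵀ := by rw [e1]
    _ = (A*X)*(A*Xᵀ) := by simp only [Matrix.mul_assoc]
    _ = (A*X)*(X*A) := by rw [f4]
  exact h1.trans h2.symm

private lemma mp_symm {n : ℕ} (A X : Matrix (Fin n) (Fin n) ℝ)
    (tA : Aᵀ = A) (e1 : A*X*A = A) (e2 : X*A*X = X)
    (e3 : (A*X)ᵀ = A*X) (e4 : (X*A)ᵀ = X*A) : Xᵀ = X := by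
  have f3 : Xᵀ * A = A * X := by
    calc Xᵀ * A = Xᵀ * Aᵀ := by rw [tA]
    _ = (A*X)ᵀ := by rw [Matrix.transpose_mul]
    _ = A*X := e3
  have f4 : A * Xᵀ = X * A := by
    calc A * Xᵀ = Aᵀ * Xᵀ := by rw [tA]
    _ = (X*A)ᵀ := by rw [Matrix.transpose_mul]
    _ = X*A := e4
  have comm := mp_comm A X tA e1 e2 e3 e4
  have g : Xᵀ = Xᵀ*A*Xᵀ := by
    conv_lhs => rw [← e2]
    simp only [Matrix.transpose_mul, tA, Matrix.mul_assoc]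
  calc Xᵀ = Xᵀ*A*Xᵀ := g
  _ = (A*X)*Xᵀ := by rw [f3]
  _ = (X*A)*Xᵀ := by rw [comm]
  _ = X*(A*Xᵀ) := by rw [Matrix.mul_assoc]
  _ = X*(X*A) := by rw [f4]
  _ = X*(A*X) := by rw [← comm]
  _ = X := by rw [← Matrix.mul_assoc, e2]

private lemma trace_mul_sq {n : ℕ} (A S : Matrix (Fin n) (Fin n) ℝ) (hS : Sᵀ = S) :
    (A * (S * S)).trace = ∑ j, (fun i => S i j) ⬝ᵥ A.mulVec (fun i => S i j) := by
  have hs : ∀ i j, S j i = S i j := fun i j => by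
    conv_lhs => rw [show S j i = Sᵀ i j from rfl, hS]
  rw [← Matrix.mul_assoc, Matrix.trace_mul_comm (A*S) S]
  simp only [Matrix.trace, Matrix.diag, Matrix.mul_apply, dotProduct, Matrix.mulVec,
    Finset.sum_mul, Finset.mul_sum]
  refine Finset.sum_congr rfl fun j _ => Finset.sum_congr rfl fun i _ =>
    Finset.sum_congr rfl fun k _ => ?_
  rw [hs j i]

section
variable {b : ℕ}

private lemma dotsym (M : Matrix (Fin b) (Fin b) ℝ) (hM : Mᵀ = M) (x y : Fin b → ℝ) :
    x ⬝ᵥ M.mulVec y = y ⬝ᵥ M.mulVec x := by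
  rw [Matrix.dotProduct_mulVec]
  conv_lhs => rw [← hM]
  rw [Matrix.vecMul_transpose, dotProduct_comm]

end

section
variable {b : ℕ}

private lemma dot_move (M : Matrix (Fin b) (Fin b) ℝ) (hM : Mᵀ = M) (x z : Fin b → ℝ) :
    x ⬝ᵥ M.mulVec z = (M.mulVec x) ⬝ᵥ z := by
  rw [Matrix.dotProduct_mulVec]
  congr 1
  conv_lhs => rw [← hM]
  rw [Matrix.vecMul_transpose]

private lemma quad_eq (Ct Ctp : Matrix (Fin b) (Fin b) ℝ) (sX : Ctpᵀ = Ctp)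
    (hCtp2 : Ctp * Ct * Ctp = Ctp) (x : Fin b → ℝ) :
    x ⬝ᵥ Ctp.mulVec x = (Ctp.mulVec x) ⬝ᵥ Ct.mulVec (Ctp.mulVec x) := by
  calc x ⬝ᵥ Ctp.mulVec x = x ⬝ᵥ (Ctp * Ct * Ctp).mulVec x := by rw [hCtp2]
  _ = x ⬝ᵥ Ctp.mulVec (Ct.mulVec (Ctp.mulVec x)) := by
      rw [Matrix.mulVec_mulVec, Matrix.mulVec_mulVec, Matrix.mul_assoc]
  _ = (Ctp.mulVec x) ⬝ᵥ Ct.mulVec (Ctp.mulVec x) := dot_move Ctp sX x _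

private lemma cs_pointwise (Ct Ctp : Matrix (Fin b) (Fin b) ℝ) (tA : Ctᵀ = Ct)
    (sX : Ctpᵀ = Ctp) (hCtp2 : Ctp * Ct * Ctp = Ctp)
    (hCq : ∀ y : Fin b → ℝ, 0 ≤ y ⬝ᵥ Ct.mulVec y) (x : Fin b → ℝ) :
    (x ⬝ᵥ (Ct * Ctp).mulVec x) ^ 2 ≤ (x ⬝ᵥ Ct.mulVec x) * (x ⬝ᵥ Ctp.mulVec x) := by
  set w := Ctp.mulVec x with hw
  set a := w ⬝ᵥ Ct.mulVec w with ha
  set c := x ⬝ᵥ Ct.mulVec x with hc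
  set q := x ⬝ᵥ Ct.mulVec w with hq
  have hsym2 : w ⬝ᵥ Ct.mulVec x = q := dotsym Ct tA w x
  have expand : ∀ t : ℝ, 0 ≤ a * (t * t) + (2 * q) * t + c := by
    intro t
    have h1 : (x + t • w) ⬝ᵥ Ct.mulVec (x + t • w) = a * (t * t) + (2 * q) * t + c := by
      rw [Matrix.mulVec_add, Matrix.mulVec_smul, dotProduct_add, add_dotProduct,
        add_dotProduct, dotProduct_smul, smul_dotProduct, smul_dotProduct,
        dotProduct_smul, hsym2]
      simp only [smul_eq_mul]
      ring
    rw [← h1]; exact hCq _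
  have hd := discrim_le_zero expand
  rw [discrim] at hd
  have hqq : x ⬝ᵥ (Ct * Ctp).mulVec x = q := by
    rw [← Matrix.mulVec_mulVec]
  have haa : x ⬝ᵥ Ctp.mulVec x = a := quad_eq Ct Ctp sX hCtp2 x
  rw [hqq, haa]
  nlinarith [hd]

end

section
variable {b : ℕ}

private lemma surj_aux {b : ℕ} (hb : 2 ≤ b) (Ct : Matrix (Fin b) (Fin b) ℝ)
    (tA : Ctᵀ = Ct)
    (hCtker : ∀ x : Fin b → ℝ, Ct.mulVec x = 0 ↔ ∃ c : ℝ, x = fun _ => c) :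
    ∀ v : Fin b → ℝ, ∃ x : Fin b → ℝ, ∃ c : ℝ, v = Ct.mulVec x + c • (fun _ => (1:ℝ)) := by
  classical
  have hb0 : (b : ℝ) ≠ 0 := by positivity
  set ones : Fin b → ℝ := fun _ => (1:ℝ) with hones
  have hCt1 : Ct.mulVec ones = 0 := (hCtker ones).mpr ⟨1, rfl⟩
  set f := Ct.mulVecLin with hf
  set K := LinearMap.range f with hK
  set L := Submodule.span ℝ {ones} with hL
  have hker : LinearMap.ker f = L := by
    ext x
    rw [LinearMap.mem_ker, hL, Submodule.mem_span_singleton]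
    rw [hf, Matrix.mulVecLin_apply, hCtker]
    constructor
    · rintro ⟨c, rfl⟩; exact ⟨c, by ext i; simp [hones]⟩
    · rintro ⟨a, rfl⟩; exact ⟨a, by ext i; simp [hones]⟩
  have hones0 : ones ≠ 0 := by
    intro h
    have := congrFun h ⟨0, by omega⟩
    simp [hones] at this
  have hLrank : Module.finrank ℝ L = 1 := finrank_span_singleton hones0
  have hrn : Module.finrank ℝ K + 1 = b := by
    have h1 := LinearMap.finrank_range_add_finrank_ker f
    rw [hker, hLrank, Module.finrank_fin_fun] at h1
    exact h1
  have hinf : K ⊓ L = ⊥ := by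
    rw [Submodule.eq_bot_iff]
    rintro v ⟨hvK, hvL⟩
    obtain ⟨x, hx⟩ := hvK
    obtain ⟨c, rfl⟩ := Submodule.mem_span_singleton.mp hvL
    have hdot : ones ⬝ᵥ (c • ones) = c * b := by
      simp [dotProduct, hones, Finset.mul_sum, mul_comm]
    have hdot2 : ones ⬝ᵥ (c • ones) = 0 := by
      rw [← hx, hf, Matrix.mulVecLin_apply, Matrix.dotProduct_mulVec]
      have : ones ᵥ* Ct = 0 := by
        conv_lhs => rw [← tA]
        rw [Matrix.vecMul_transpose, hCt1]
      rw [this, zero_dotProduct]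
    have : c = 0 := by
      have := hdot ▸ hdot2
      rcases mul_eq_zero.mp this with h | h
      · exact h
      · exact absurd h hb0
    simp [this]
  have hsup : K ⊔ L = ⊤ := by
    apply Submodule.eq_top_of_finrank_eq
    have h2 := Submodule.finrank_sup_add_finrank_inf_eq K L
    rw [hinf, hLrank] at h2
    simp only [finrank_bot, add_zero] at h2
    rw [Module.finrank_fin_fun]
    omega
  intro v
  have hv : v ∈ K ⊔ L := hsup ▸ Submodule.mem_top
  obtain ⟨y, hy, z, hz, rfl⟩ := Submodule.mem_sup.mp hv
  obtain ⟨x, rfl⟩ := hy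
  obtain ⟨c, rfl⟩ := Submodule.mem_span_singleton.mp hz
  exact ⟨x, c, by rw [hf, Matrix.mulVecLin_apply]⟩

private lemma proj_eq (hb : 2 ≤ b) (Ct Ctp : Matrix (Fin b) (Fin b) ℝ)
    (tA : Ctᵀ = Ct)
    (hCtker : ∀ x : Fin b → ℝ, Ct.mulVec x = 0 ↔ ∃ c : ℝ, x = fun _ => c)
    (hCtp1 : Ct * Ctp * Ct = Ct)
    (comm : Ct * Ctp = Ctp * Ct) :
    (1 : Matrix (Fin b) (Fin b) ℝ) - (b : ℝ)⁻¹ • (Matrix.of fun _ _ => (1:ℝ)) = Ct * Ctp := by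
  classical
  have hb0 : (b : ℝ) ≠ 0 := by positivity
  set ones : Fin b → ℝ := fun _ => (1:ℝ) with hones
  set J : Matrix (Fin b) (Fin b) ℝ := Matrix.of fun _ _ => (1:ℝ) with hJ
  set Q : Matrix (Fin b) (Fin b) ℝ := 1 - (b : ℝ)⁻¹ • J with hQdef
  have hCt1 : Ct.mulVec ones = 0 := (hCtker ones).mpr ⟨1, rfl⟩
  have rowsum : ∀ i, ∑ k, Ct i k = 0 := by
    intro i
    have := congrFun hCt1 i
    simpa [Matrix.mulVec, dotProduct, hones] using this
  have colsum : ∀ j, ∑ k, Ct k j = 0 := by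
    intro j
    have : ∀ k, Ct k j = Ct j k := fun k => by
      conv_lhs => rw [show Ct k j = Ctᵀ j k from rfl, tA]
    rw [Finset.sum_congr rfl fun k _ => this k]
    exact rowsum j
  have hJC : J * Ct = 0 := by
    ext i j
    simp only [Matrix.mul_apply, hJ, Matrix.of_apply, one_mul, Matrix.zero_apply]
    exact colsum j
  have hQC : (Q - Ct * Ctp) * Ct = 0 := by
    rw [Matrix.sub_mul, hQdef, Matrix.sub_mul, Matrix.one_mul, Matrix.smul_mul, hJC,
      smul_zero, sub_zero, Matrix.mul_assoc, ← Matrix.mul_assoc, hCtp1, sub_self]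
  have hJones : J.mulVec ones = fun _ => (b : ℝ) := by
    ext i
    simp [Matrix.mulVec, dotProduct, hJ, hones]
  have hQones : (Q - Ct * Ctp).mulVec ones = 0 := by
    rw [Matrix.sub_mulVec, hQdef, Matrix.sub_mulVec, Matrix.one_mulVec,
      Matrix.smul_mulVec, hJones, comm, ← Matrix.mulVec_mulVec, hCt1,
      Matrix.mulVec_zero, sub_zero]
    ext i
    simp [hones, hb0]
  -- surjectivity
  have surj : ∀ v : Fin b → ℝ, ∃ x : Fin b → ℝ, ∃ c : ℝ, v = Ct.mulVec x + c • ones :=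
    surj_aux hb Ct tA hCtker
  have hMv : ∀ v : Fin b → ℝ, (Q - Ct * Ctp).mulVec v = 0 := by
    intro v
    obtain ⟨x, c, rfl⟩ := surj v
    rw [Matrix.mulVec_add, Matrix.mulVec_smul, hQones, Matrix.mulVec_mulVec, hQC,
      Matrix.zero_mulVec, smul_zero, add_zero]
  have hM0 : Q - Ct * Ctp = 0 := by
    ext i j
    have h := hMv (Pi.single j 1)
    rw [Matrix.mulVec_single] at h
    have := congrFun h i
    simpa using this
  have := sub_eq_zero.mp hM0
  rw [hQdef] at this
  exact this
end


/-- Lemma 1(a): for any nonnegative definite `b × b` matrix `Δ`,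
`tr(C̃Δ)·tr(C̃⁺Δ) ≥ (tr(Δ) − b⁻¹·1ᵀΔ1)²`. -/
theorem stmt1
    (b : ℕ) (hb : 2 ≤ b)
    (Ct : Matrix (Fin b) (Fin b) ℝ)
    (hCtpsd : Ct.PosSemidef)
    (hCtker : ∀ x : Fin b → ℝ, Ct.mulVec x = 0 ↔ ∃ c : ℝ, x = fun _ => c)
    (Ctp : Matrix (Fin b) (Fin b) ℝ)
    (hCtp1 : Ct * Ctp * Ct = Ct) (hCtp2 : Ctp * Ct * Ctp = Ctp)
    (hCtp3 : (Ct * Ctp)ᵀ = Ct * Ctp) (hCtp4 : (Ctp * Ct)ᵀ = Ctp * Ct)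
    (Δ : Matrix (Fin b) (Fin b) ℝ) (hΔ : Δ.PosSemidef) :
    (Δ.trace - (b : ℝ)⁻¹ * ((fun _ => (1 : ℝ)) ⬝ᵥ Δ.mulVec fun _ => (1 : ℝ))) ^ 2
      ≤ (Ct * Δ).trace * (Ctp * Δ).trace := by
  classical
  have tA : Ctᵀ = Ct := by
    have h := hCtpsd.1
    exact Matrix.isHermitian_iff_isSymm.mp h
  have hCq : ∀ y : Fin b → ℝ, 0 ≤ y ⬝ᵥ Ct.mulVec y := fun y => by
    have := hCtpsd.dotProduct_mulVec_nonneg y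
    simpa using this
  have comm : Ct * Ctp = Ctp * Ct := mp_comm Ct Ctp tA hCtp1 hCtp2 hCtp3 hCtp4
  have sX : Ctpᵀ = Ctp := mp_symm Ct Ctp tA hCtp1 hCtp2 hCtp3 hCtp4
  have hQP := proj_eq hb Ct Ctp tA hCtker hCtp1 comm
  -- trace identity for the left-hand side
  set J : Matrix (Fin b) (Fin b) ℝ := Matrix.of fun _ _ => (1:ℝ) with hJ
  have hJtr : (J * Δ).trace = (fun _ => (1:ℝ)) ⬝ᵥ Δ.mulVec (fun _ => (1:ℝ)) := by
    simp only [Matrix.trace, Matrix.diag, Matrix.mul_apply, hJ, Matrix.of_apply, one_mul,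
      dotProduct, Matrix.mulVec, mul_one]
    exact Finset.sum_comm
  have hLHS : Δ.trace - (b : ℝ)⁻¹ * ((fun _ => (1:ℝ)) ⬝ᵥ Δ.mulVec (fun _ => (1:ℝ)))
      = ((Ct * Ctp) * Δ).trace := by
    rw [← hQP, Matrix.sub_mul, Matrix.one_mul, Matrix.smul_mul, Matrix.trace_sub,
      Matrix.trace_smul, hJtr, smul_eq_mul]
  -- square root of Δ
  open scoped MatrixOrder in
  set S := CFC.sqrt Δ with hSdef
  open scoped MatrixOrder in
  have hSS : S * S = Δ := CFC.sqrt_mul_sqrt_self Δ hΔ.nonneg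
  have hSt : Sᵀ = S := by
    open scoped MatrixOrder in
    have h := (CFC.sqrt_nonneg Δ).posSemidef.1
    exact Matrix.isHermitian_iff_isSymm.mp h
  have key : ∀ A : Matrix (Fin b) (Fin b) ℝ,
      (A * Δ).trace = ∑ j, (fun i => S i j) ⬝ᵥ A.mulVec (fun i => S i j) := by
    intro A
    rw [← hSS]
    exact trace_mul_sq A S hSt
  set v : Fin b → Fin b → ℝ := fun j i => S i j with hv
  set qC : Fin b → ℝ := fun j => v j ⬝ᵥ Ct.mulVec (v j) with hqC
  set qP : Fin b → ℝ := fun j => v j ⬝ᵥ Ctp.mulVec (v j) with hqP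
  set qQ : Fin b → ℝ := fun j => v j ⬝ᵥ (Ct * Ctp).mulVec (v j) with hqQ
  rw [hLHS, key (Ct * Ctp), key Ct, key Ctp]
  have hqCn : ∀ j, 0 ≤ qC j := fun j => hCq (v j)
  have hqPn : ∀ j, 0 ≤ qP j := fun j => by
    rw [hqP]
    simp only
    rw [quad_eq Ct Ctp sX hCtp2 (v j)]
    exact hCq _
  have hcs : ∀ j, (qQ j) ^ 2 ≤ qC j * qP j := fun j =>
    cs_pointwise Ct Ctp tA sX hCtp2 hCq (v j)
  -- Cauchy–Schwarz on sums
  have habs : ∀ j, |qQ j| ≤ Real.sqrt (qC j * qP j) := by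
    intro j
    rw [← Real.sqrt_sq_eq_abs]
    exact Real.sqrt_le_sqrt (hcs j)
  have hsum1 : |∑ j, qQ j| ≤ ∑ j, Real.sqrt (qC j * qP j) :=
    (Finset.abs_sum_le_sum_abs _ _).trans (Finset.sum_le_sum fun j _ => habs j)
  have hsum2 : (∑ j, Real.sqrt (qC j * qP j)) ^ 2 ≤ (∑ j, qC j) * (∑ j, qP j) :=
    Finset.sum_sq_le_sum_mul_sum_of_sq_eq_mul _ (fun j _ => hqCn j) (fun j _ => hqPn j)
      (fun j _ => Real.sq_sqrt (mul_nonneg (hqCn j) (hqPn j)))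
  calc (∑ j, qQ j) ^ 2 = |∑ j, qQ j| ^ 2 := (sq_abs _).symm
  _ ≤ (∑ j, Real.sqrt (qC j * qP j)) ^ 2 := by
      exact pow_le_pow_left₀ (abs_nonneg _) hsum1 2
  _ ≤ (∑ j, qC j) * (∑ j, qP j) := hsum2
end

section
/- Assume additionally that k(b − 1) ≥ 2u (i.e. k ≥ k^#, the smallest integer ≥ 2u/(b−1)). Let G := {j : s_j ≥ 1}, MV_UU := max_{1≤i<i*≤u} (e_i − e_{i*})ᵀC⁺(e_i − e_{i*}), MV_WW := 2 + max_{j,j*∈G, j<j*} (ẽ_j − ẽ_{j*})ᵀC̃⁺(ẽ_j − ẽ_{j*}), MV_UW := 3/2 + max_{1≤i≤u, j∈G} ξ_{ij}ᵀC̃⁺ξ_{ij}, and MV(d₀) := max{MV_UU, MV_WW, MV_UW}. Then G has at least two elements and MV(d₀) ≥ 2 + 2(b − 1)/u. -/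
open Matrix BigOperators

private lemma psd_cs {n : ℕ} {B : Matrix (Fin n) (Fin n) ℝ} (hB : B.PosSemidef)
    (x z : Fin n → ℝ) :
    (x ⬝ᵥ B *ᵥ z) ^ 2 ≤ (x ⬝ᵥ B *ᵥ x) * (z ⬝ᵥ B *ᵥ z) := by
  have hBt : Bᵀ = B := by
    ext i j
    simpa using hB.1.apply i j
  have hnn : ∀ v : Fin n → ℝ, 0 ≤ v ⬝ᵥ B *ᵥ v := fun v => by simpa using hB.dotProduct_mulVec_nonneg v
  have hsym : ∀ v w : Fin n → ℝ, v ⬝ᵥ B *ᵥ w = w ⬝ᵥ B *ᵥ v := by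
    intro v w
    rw [dotProduct_mulVec, ← mulVec_transpose, hBt, dotProduct_comm]
  have key : ∀ t : ℝ, 0 ≤ (z ⬝ᵥ B *ᵥ z) * (t * t) + (2 * (x ⬝ᵥ B *ᵥ z)) * t + x ⬝ᵥ B *ᵥ x := by
    intro t
    have h := hnn (x + t • z)
    have hexp : (x + t • z) ⬝ᵥ B *ᵥ (x + t • z)
        = (z ⬝ᵥ B *ᵥ z) * (t * t) + (2 * (x ⬝ᵥ B *ᵥ z)) * t + x ⬝ᵥ B *ᵥ x := by
      simp only [mulVec_add, mulVec_smul, dotProduct_add, add_dotProduct, dotProduct_smul,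
        smul_dotProduct, smul_eq_mul]
      rw [hsym z x]
      ring
    rw [hexp] at h
    exact h
  have hd := discrim_le_zero key
  rw [discrim] at hd
  nlinarith [hd]

private lemma offdiag_sum {b : ℕ} (g : Fin b → Fin b → ℝ) :
    ∑ p ∈ Finset.univ.filter (fun p : Fin b × Fin b => p.1 ≠ p.2), g p.1 p.2
      = (∑ j, ∑ j', g j j') - ∑ j, g j j := by
  rw [Finset.sum_filter, Fintype.sum_prod_type]
  have h : ∀ j : Fin b, (∑ j', if j ≠ j' then g j j' else 0) = (∑ j', g j j') - g j j := by
    intro j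
    have h1 : ∀ j' : Fin b, (if j ≠ j' then g j j' else 0) = g j j' - if j = j' then g j j' else 0 := by
      intro j'; by_cases h : j = j' <;> simp [h]
    rw [Finset.sum_congr rfl fun j' _ => h1 j', Finset.sum_sub_distrib, Finset.sum_ite_eq]
    simp
  rw [Finset.sum_congr rfl fun j _ => h j, Finset.sum_sub_distrib]

private lemma double_sum_factor {b : ℕ} (f g : Fin b → ℝ) :
    ∑ j : Fin b, ∑ j' : Fin b, f j * g j' = (∑ j, f j) * (∑ j, g j) := by
  rw [Finset.sum_mul]
  exact Finset.sum_congr rfl fun j _ => (Finset.mul_sum _ _ _).symm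

set_option maxHeartbeats 1000000 in
/-- Theorem 2(a): if `k(b−1) ≥ 2u`, then `G = {j : s_j ≥ 1}` has at least two elements and
`MV(d₀) ≥ 2 + 2(b−1)/u`. -/
theorem stmt5
    (u b k : ℕ) (hu : 0 < u) (hb : 3 ≤ b) (hk : 1 ≤ k) (hub : b - 1 ≤ u)
    (w : ℕ) (hw : 2 * u + w = b * k) (hw1 : 1 ≤ w)
    (hkb : 2 * u ≤ k * (b - 1))
    (s : Fin b → ℕ) (hs : ∀ j, s j ≤ k - 1) (hssum : ∑ j, s j = w)
    (N : Matrix (Fin u) (Fin b) ℕ)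
    (hrow : ∀ i, ∑ j, N i j = 2)
    (hcol : ∀ j, ∑ i, N i j = k - s j)
    (Nr : Matrix (Fin u) (Fin b) ℝ) (hNr : Nr = N.map (Nat.cast : ℕ → ℝ))
    (S : Matrix (Fin b) (Fin b) ℝ) (hS : S = Matrix.diagonal fun j => (s j : ℝ))
    (C : Matrix (Fin u) (Fin u) ℝ)
    (hC : C = (2 : ℝ) • (1 : Matrix (Fin u) (Fin u) ℝ)
        - Nr * ((k : ℝ) • (1 : Matrix (Fin b) (Fin b) ℝ) - S)⁻¹ * Nrᵀ)
    (Ct : Matrix (Fin b) (Fin b) ℝ)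
    (hCt : Ct = (k : ℝ) • (1 : Matrix (Fin b) (Fin b) ℝ) - S - (1/2 : ℝ) • (Nrᵀ * Nr))
    (hCpsd : C.PosSemidef)
    (hCker : ∀ x : Fin u → ℝ, C.mulVec x = 0 ↔ ∃ c : ℝ, x = fun _ => c)
    (hCtpsd : Ct.PosSemidef)
    (hCtker : ∀ x : Fin b → ℝ, Ct.mulVec x = 0 ↔ ∃ c : ℝ, x = fun _ => c)
    (Cp : Matrix (Fin u) (Fin u) ℝ)
    (hCp1 : C * Cp * C = C) (hCp2 : Cp * C * Cp = Cp)
    (hCp3 : (C * Cp)ᵀ = C * Cp) (hCp4 : (Cp * C)ᵀ = Cp * C)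
    (Ctp : Matrix (Fin b) (Fin b) ℝ)
    (hCtp1 : Ct * Ctp * Ct = Ct) (hCtp2 : Ctp * Ct * Ctp = Ctp)
    (hCtp3 : (Ct * Ctp)ᵀ = Ct * Ctp) (hCtp4 : (Ctp * Ct)ᵀ = Ctp * Ct)
    (G : Finset (Fin b)) (hG : G = Finset.univ.filter fun j => 1 ≤ s j)
    (ξ : Fin u → Fin b → Fin b → ℝ)
    (hξ : ∀ i j, ξ i j
        = (Pi.single j 1 : Fin b → ℝ) - (1/2 : ℝ) • Nrᵀ.mulVec (Pi.single i 1))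
    (MVUU MVWW MVUW MV : ℝ)
    (hMVUU : MVUU = sSup {x : ℝ | ∃ i i' : Fin u, i < i' ∧
      x = ((Pi.single i 1 : Fin u → ℝ) - Pi.single i' 1) ⬝ᵥ
            Cp.mulVec ((Pi.single i 1 : Fin u → ℝ) - Pi.single i' 1)})
    (hMVWW : MVWW = 2 + sSup {x : ℝ | ∃ j j' : Fin b, j ∈ G ∧ j' ∈ G ∧ j < j' ∧
      x = ((Pi.single j 1 : Fin b → ℝ) - Pi.single j' 1) ⬝ᵥ
            Ctp.mulVec ((Pi.single j 1 : Fin b → ℝ) - Pi.single j' 1)})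
    (hMVUW : MVUW = 3/2 + sSup {x : ℝ | ∃ (i : Fin u) (j : Fin b), j ∈ G ∧
      x = (ξ i j) ⬝ᵥ Ctp.mulVec (ξ i j)})
    (hMV : MV = max (max MVUU MVWW) MVUW) :
    2 ≤ G.card ∧ 2 + 2 * ((b : ℝ) - 1) / (u : ℝ) ≤ MV := by
  -- basic casts and numeric facts
  have hb1 : 1 ≤ b := by omega
  have huR : (0:ℝ) < u := by exact_mod_cast hu
  have hbR : (3:ℝ) ≤ b := by exact_mod_cast hb
  have hwR : 2*(u:ℝ) + w = (b:ℝ)*k := by exact_mod_cast hw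
  have hkbR : 2*(u:ℝ) ≤ (k:ℝ)*((b:ℝ)-1) := by
    have h1 : ((2*u : ℕ):ℝ) ≤ ((k*(b-1) : ℕ):ℝ) := Nat.cast_le.2 hkb
    rw [Nat.cast_mul, Nat.cast_mul, Nat.cast_sub hb1] at h1
    push_cast at h1 ⊢
    linarith
  have hkw : (k:ℝ) ≤ (w:ℝ) := by nlinarith [hwR, hkbR]
  have hkwN : k ≤ w := by exact_mod_cast hkw
  have hsk : ∀ j, s j ≤ k := fun j => le_trans (hs j) (Nat.sub_le k 1)
  -- membership in G
  have hGmem : ∀ j, j ∈ G ↔ 1 ≤ s j := by intro j; rw [hG]; simp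
  -- Part 1 : G has at least 2 elements
  have hG2 : 2 ≤ G.card := by
    by_contra hcon
    push_neg at hcon
    have hzero : ∀ j, j ∉ G → s j = 0 := by
      intro j hj
      have h : ¬ 1 ≤ s j := fun hh => hj ((hGmem j).2 hh)
      omega
    have hsumG : ∑ j ∈ G, s j = w := by
      rw [← hssum]
      exact Finset.sum_subset (Finset.subset_univ G) (fun x _ hx => hzero x hx)
    have hle : w ≤ G.card * (k-1) := by
      calc w = ∑ j ∈ G, s j := hsumG.symm
      _ ≤ ∑ _j ∈ G, (k-1) := Finset.sum_le_sum (fun j _ => hs j)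
      _ = G.card * (k-1) := by rw [Finset.sum_const, smul_eq_mul]
    have hcard1 : G.card ≤ 1 := by omega
    have h2 : G.card * (k-1) ≤ 1 * (k-1) := Nat.mul_le_mul_right _ hcard1
    omega
  refine ⟨hG2, ?_⟩
  rcases le_or_gt (2 + 2 * ((b : ℝ) - 1) / (u : ℝ)) MV with hok | hfin
  · exact hok
  exfalso
  set T : ℝ := 2 * ((b : ℝ) - 1) / (u : ℝ) with hTdef
  have hTpos : 0 < T := by
    rw [hTdef]
    apply div_pos (by linarith) huR
  -- cast of s as a real vector
  have hcW : ∑ j, (s j:ℝ) = (w:ℝ) := by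
    rw [← hssum]; push_cast; rfl
  set sq : ℝ := ∑ j, ((s j:ℝ))^2 with hsq
  -- entry formula for Ct
  have hNrapp : ∀ i j, Nr i j = (N i j : ℝ) := by
    intro i j; rw [hNr]; rfl
  have hCtapp : ∀ a a' : Fin b,
      Ct a a' = (if a = a' then ((k:ℝ) - s a) else 0) - (1/2)*∑ i, (N i a : ℝ)*(N i a') := by
    intro a a'
    rw [hCt, hS]
    simp only [Matrix.sub_apply, Matrix.smul_apply, Matrix.one_apply, Matrix.diagonal_apply,
      Matrix.mul_apply, Matrix.transpose_apply, smul_eq_mul]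
    rw [Finset.sum_congr rfl (fun i _ => by rw [hNrapp, hNrapp])]
    split_ifs with h
    · ring
    · ring
  -- Ct symmetric
  have hCts : Ctᵀ = Ct := by
    rw [hCt, hS]
    simp [Matrix.transpose_sub, Matrix.transpose_smul, Matrix.transpose_one,
      Matrix.diagonal_transpose, Matrix.transpose_mul, Matrix.transpose_transpose]
  -- nonnegativity of the quadratic form
  have hnnCt : ∀ v : Fin b → ℝ, 0 ≤ v ⬝ᵥ Ct *ᵥ v := fun v => by simpa using hCtpsd.dotProduct_mulVec_nonneg v
  -- Ct kills constants
  have hone : Ct *ᵥ (fun _ => (1:ℝ)) = 0 := (hCtker _).2 ⟨1, rfl⟩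
  have honev : (fun _ => (1:ℝ)) ᵥ* Ct = 0 := by
    rw [← mulVec_transpose, hCts]; exact hone
  -- projection property : Ct *ᵥ (Ctp *ᵥ x) = x for x summing to zero
  have hproj : ∀ x : Fin b → ℝ, (∑ j, x j) = 0 → Ct *ᵥ (Ctp *ᵥ x) = x := by
    intro x hx
    have hPP : Ct * Ctp * (Ct * Ctp) = Ct * Ctp := by
      rw [← Matrix.mul_assoc, hCtp1]
    have hPx : (Ct*Ctp) *ᵥ ((Ct*Ctp) *ᵥ x) = (Ct*Ctp) *ᵥ x := by
      rw [mulVec_mulVec, hPP]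
    set y := x - (Ct*Ctp) *ᵥ x with hy
    have hPy : (Ct*Ctp) *ᵥ y = 0 := by
      rw [hy, mulVec_sub, hPx, sub_self]
    have hyP : y ᵥ* (Ct*Ctp) = 0 := by
      rw [← mulVec_transpose, hCtp3]; exact hPy
    have hyCt : y ᵥ* Ct = 0 := by
      calc y ᵥ* Ct = y ᵥ* (Ct*Ctp*Ct) := by rw [hCtp1]
      _ = (y ᵥ* (Ct*Ctp)) ᵥ* Ct := (vecMul_vecMul y (Ct*Ctp) Ct).symm
      _ = (0 : Fin b → ℝ) ᵥ* Ct := by rw [hyP]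
      _ = 0 := Matrix.zero_vecMul Ct
    have hCty : Ct *ᵥ y = 0 := by
      rw [← hCts, mulVec_transpose, hyCt]
    obtain ⟨cc, hyc⟩ := (hCtker y).1 hCty
    have hsPx : ∑ j, ((Ct*Ctp) *ᵥ x) j = 0 := by
      have h1 : ∑ j, ((Ct*Ctp) *ᵥ x) j = (fun _ => (1:ℝ)) ⬝ᵥ ((Ct*Ctp) *ᵥ x) := by
        simp [dotProduct]
      rw [h1, dotProduct_mulVec]
      have h2 : (fun _ => (1:ℝ)) ᵥ* (Ct*Ctp) = 0 := by
        rw [← vecMul_vecMul, honev, Matrix.zero_vecMul]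
      rw [h2, zero_dotProduct]
    have hsy : ∑ j, y j = 0 := by
      rw [hy]
      simp only [Pi.sub_apply, Finset.sum_sub_distrib, hx, hsPx, sub_zero]
    have hcc : cc = 0 := by
      rw [hyc] at hsy
      simp only [Finset.sum_const, Finset.card_univ, Fintype.card_fin, nsmul_eq_mul] at hsy
      have hbne : ((b:ℝ)) ≠ 0 := by positivity
      rcases mul_eq_zero.mp hsy with h | h
      · exact absurd h hbne
      · exact h
    have hy0 : y = 0 := by
      rw [hyc, hcc]; funext l; rfl
    have hxPx : (Ct*Ctp) *ᵥ x = x := by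
      have h3 : x - (Ct*Ctp) *ᵥ x = 0 := by rw [← hy, hy0]
      have := sub_eq_zero.mp h3
      exact this.symm
    rw [mulVec_mulVec, hxPx]
  -- per-pair Cauchy–Schwarz bound
  have hpair : ∀ j j' : Fin b, j ≠ j' →
      (4:ℝ) ≤ (Ct j j + Ct j' j' - Ct j j' - Ct j' j) *
        (((Pi.single j 1 : Fin b → ℝ) - Pi.single j' 1) ⬝ᵥ
          Ctp *ᵥ ((Pi.single j 1 : Fin b → ℝ) - Pi.single j' 1)) ∧
      0 ≤ ((Pi.single j 1 : Fin b → ℝ) - Pi.single j' 1) ⬝ᵥ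
          Ctp *ᵥ ((Pi.single j 1 : Fin b → ℝ) - Pi.single j' 1) := by
    intro j j' hne
    set x : Fin b → ℝ := (Pi.single j 1 : Fin b → ℝ) - Pi.single j' 1 with hxdef
    have hx0 : ∑ l, x l = 0 := by
      rw [hxdef]
      simp [Pi.sub_apply, Finset.sum_sub_distrib, Pi.single_apply]
    have hP := hproj x hx0
    have hterm : ∀ a a' : Fin b,
        (Pi.single a 1 : Fin b → ℝ) ⬝ᵥ Ct *ᵥ (Pi.single a' 1 : Fin b → ℝ) = Ct a a' := by
      intro a a'
      simp [single_dotProduct, mulVec_single]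
    have hE9 : x ⬝ᵥ Ct *ᵥ x = Ct j j + Ct j' j' - Ct j j' - Ct j' j := by
      rw [hxdef, mulVec_sub, dotProduct_sub, sub_dotProduct, sub_dotProduct,
        hterm, hterm, hterm, hterm]
      ring
    have hVz : (Ctp *ᵥ x) ⬝ᵥ x = x ⬝ᵥ Ctp *ᵥ x := dotProduct_comm _ _
    have hV0 : 0 ≤ x ⬝ᵥ Ctp *ᵥ x := by
      have h := hnnCt (Ctp *ᵥ x)
      rw [hP, hVz] at h
      exact h
    have hCS := psd_cs hCtpsd x (Ctp *ᵥ x)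
    rw [hP] at hCS
    have hxx : x ⬝ᵥ x = 2 := by
      rw [hxdef]
      simp [dotProduct, Pi.single_apply, sub_mul, mul_sub, Finset.sum_sub_distrib, hne, hne.symm]
      norm_num
    rw [hxx, hVz, hE9] at hCS
    exact ⟨by nlinarith [hCS], hV0⟩
  -- all pair variances within G are < T
  have hMVWWle : MVWW ≤ MV := by
    rw [hMV]
    exact le_trans (le_max_right MVUU MVWW) (le_max_left _ MVUW)
  have hSup : sSup {x : ℝ | ∃ j j' : Fin b, j ∈ G ∧ j' ∈ G ∧ j < j' ∧
      x = ((Pi.single j 1 : Fin b → ℝ) - Pi.single j' 1) ⬝ᵥ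
            Ctp.mulVec ((Pi.single j 1 : Fin b → ℝ) - Pi.single j' 1)} < T := by
    rw [hMVWW] at hMVWWle
    linarith
  have hbdd : BddAbove {x : ℝ | ∃ j j' : Fin b, j ∈ G ∧ j' ∈ G ∧ j < j' ∧
      x = ((Pi.single j 1 : Fin b → ℝ) - Pi.single j' 1) ⬝ᵥ
            Ctp.mulVec ((Pi.single j 1 : Fin b → ℝ) - Pi.single j' 1)} := by
    apply Set.Finite.bddAbove
    have hsub : {x : ℝ | ∃ j j' : Fin b, j ∈ G ∧ j' ∈ G ∧ j < j' ∧
        x = ((Pi.single j 1 : Fin b → ℝ) - Pi.single j' 1) ⬝ᵥ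
              Ctp.mulVec ((Pi.single j 1 : Fin b → ℝ) - Pi.single j' 1)} ⊆
        Set.range (fun p : Fin b × Fin b =>
          ((Pi.single p.1 1 : Fin b → ℝ) - Pi.single p.2 1) ⬝ᵥ
            Ctp.mulVec ((Pi.single p.1 1 : Fin b → ℝ) - Pi.single p.2 1)) := by
      rintro x ⟨j, j', _, _, _, rfl⟩
      exact ⟨(j, j'), rfl⟩
    exact (Set.finite_range _).subset hsub
  have hVlt : ∀ j j' : Fin b, j ∈ G → j' ∈ G → j ≠ j' →
      ((Pi.single j 1 : Fin b → ℝ) - Pi.single j' 1) ⬝ᵥ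
        Ctp *ᵥ ((Pi.single j 1 : Fin b → ℝ) - Pi.single j' 1) < T := by
    intro j j' hj hj' hne
    have hVsym : ((Pi.single j 1 : Fin b → ℝ) - Pi.single j' 1) ⬝ᵥ
        Ctp *ᵥ ((Pi.single j 1 : Fin b → ℝ) - Pi.single j' 1)
        = ((Pi.single j' 1 : Fin b → ℝ) - Pi.single j 1) ⬝ᵥ
        Ctp *ᵥ ((Pi.single j' 1 : Fin b → ℝ) - Pi.single j 1) := by
      have hnegx : (Pi.single j' 1 : Fin b → ℝ) - Pi.single j 1
          = -((Pi.single j 1 : Fin b → ℝ) - Pi.single j' 1) := by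
        rw [neg_sub]
      rw [hnegx, mulVec_neg, dotProduct_neg, neg_dotProduct, neg_neg]
    rcases lt_or_gt_of_ne hne with h | h
    · refine lt_of_le_of_lt (le_csSup hbdd ?_) hSup
      exact ⟨j, j', hj, hj', h, rfl⟩
    · rw [hVsym]
      refine lt_of_le_of_lt (le_csSup hbdd ?_) hSup
      exact ⟨j', j, hj', hj, h, rfl⟩
  -- strict per-pair bound for pairs in G
  have hstrict : ∀ j j' : Fin b, j ∈ G → j' ∈ G → j ≠ j' →
      (4:ℝ) < T * (Ct j j + Ct j' j' - Ct j j' - Ct j' j) := by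
    intro j j' hj hj' hne
    obtain ⟨h4, hV0⟩ := hpair j j' hne
    have hVlt' := hVlt j j' hj hj' hne
    set V := ((Pi.single j 1 : Fin b → ℝ) - Pi.single j' 1) ⬝ᵥ
        Ctp *ᵥ ((Pi.single j 1 : Fin b → ℝ) - Pi.single j' 1) with hVdef
    set E := Ct j j + Ct j' j' - Ct j j' - Ct j' j with hEdef
    have hVpos : 0 < V := by
      rcases lt_or_eq_of_le hV0 with h | h
      · exact h
      · exfalso
        rw [← h, mul_zero] at h4
        linarith
    have hEpos : 0 < E := by nlinarith
    nlinarith [mul_lt_mul_of_pos_left hVlt' hEpos]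
  -- diagonal bound
  have hdiag : ∀ j, (s j:ℝ) * Ct j j ≤ (s j:ℝ) * (((k:ℝ) - s j)/2) := by
    intro j
    apply mul_le_mul_of_nonneg_left _ (Nat.cast_nonneg _)
    rw [hCtapp j j, if_pos rfl]
    have h2 : (k - s j : ℕ) ≤ ∑ i, N i j * N i j := by
      rw [← hcol j]
      refine Finset.sum_le_sum (fun i _ => ?_)
      rcases Nat.eq_zero_or_pos (N i j) with h | h
      · simp [h]
      · exact Nat.le_mul_of_pos_left _ h
    have h3 : ((k:ℝ) - s j) ≤ ∑ i, (N i j:ℝ)*(N i j) := by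
      calc ((k:ℝ) - s j) = ((k - s j : ℕ):ℝ) := by rw [Nat.cast_sub (hsk j)]
      _ ≤ ((∑ i, N i j * N i j : ℕ):ℝ) := Nat.cast_le.2 h2
      _ = ∑ i, (N i j:ℝ)*(N i j) := by push_cast; rfl
    linarith
  have hSd : ∑ j, (s j:ℝ)*Ct j j ≤ ((k:ℝ)*w - sq)/2 := by
    calc ∑ j, (s j:ℝ)*Ct j j ≤ ∑ j, (s j:ℝ)*(((k:ℝ) - s j)/2) :=
          Finset.sum_le_sum fun j _ => hdiag j
    _ = (∑ j, ((k:ℝ)*(s j:ℝ) - ((s j:ℝ))^2))/2 := by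
        rw [Finset.sum_div]
        exact Finset.sum_congr rfl fun j _ => by ring
    _ = ((k:ℝ)*w - sq)/2 := by
        rw [Finset.sum_sub_distrib, ← Finset.mul_sum, hcW, ← hsq]
  -- the key sum identity
  have hdq : (fun j => (s j:ℝ)) ⬝ᵥ Ct *ᵥ (fun j => (s j:ℝ))
      = ∑ j, ∑ j', (s j:ℝ) * Ct j j' * (s j':ℝ) := by
    simp only [dotProduct, Matrix.mulVec, Finset.mul_sum]
    exact Finset.sum_congr rfl fun j _ => Finset.sum_congr rfl fun j' _ => by ring
  have hq0 : 0 ≤ ∑ j, ∑ j', (s j:ℝ) * Ct j j' * (s j':ℝ) := by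
    rw [← hdq]; exact hnnCt _
  have hT1 : ∑ j, ∑ j', (s j:ℝ)*(s j':ℝ)*Ct j j = (∑ j, (s j:ℝ)*Ct j j) * (w:ℝ) := by
    rw [← hcW]
    rw [← double_sum_factor (fun j => (s j:ℝ)*Ct j j) (fun j => (s j:ℝ))]
    exact Finset.sum_congr rfl fun j _ => Finset.sum_congr rfl fun j' _ => by ring
  have swap1 : ∑ j, ∑ j', (s j:ℝ)*(s j':ℝ)*Ct j' j' = ∑ j, ∑ j', (s j:ℝ)*(s j':ℝ)*Ct j j := by
    rw [Finset.sum_comm]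
    exact Finset.sum_congr rfl fun a _ => Finset.sum_congr rfl fun b' _ => by ring
  have swap2 : ∑ j, ∑ j', (s j:ℝ)*(s j':ℝ)*Ct j' j = ∑ j, ∑ j', (s j:ℝ)*Ct j j'*(s j':ℝ) := by
    rw [Finset.sum_comm]
    exact Finset.sum_congr rfl fun a _ => Finset.sum_congr rfl fun b' _ => by ring
  have hsumE : ∑ j, ∑ j', (s j:ℝ)*(s j':ℝ)*(Ct j j + Ct j' j' - Ct j j' - Ct j' j)
      = 2*(w:ℝ)*(∑ j, (s j:ℝ)*Ct j j) - 2*(∑ j, ∑ j', (s j:ℝ) * Ct j j' * (s j':ℝ)) := by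
    have expand : ∀ j j' : Fin b, (s j:ℝ)*(s j':ℝ)*(Ct j j + Ct j' j' - Ct j j' - Ct j' j)
        = (s j:ℝ)*(s j':ℝ)*Ct j j + (s j:ℝ)*(s j':ℝ)*Ct j' j'
          - (s j:ℝ)*Ct j j'*(s j':ℝ) - (s j:ℝ)*(s j':ℝ)*Ct j' j := fun j j' => by ring
    calc ∑ j, ∑ j', (s j:ℝ)*(s j':ℝ)*(Ct j j + Ct j' j' - Ct j j' - Ct j' j)
        = ∑ j, ∑ j', ((s j:ℝ)*(s j':ℝ)*Ct j j + (s j:ℝ)*(s j':ℝ)*Ct j' j'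
          - (s j:ℝ)*Ct j j'*(s j':ℝ) - (s j:ℝ)*(s j':ℝ)*Ct j' j) :=
        Finset.sum_congr rfl fun j _ => Finset.sum_congr rfl fun j' _ => expand j j'
      _ = (∑ j, ∑ j', (s j:ℝ)*(s j':ℝ)*Ct j j) + (∑ j, ∑ j', (s j:ℝ)*(s j':ℝ)*Ct j' j')
          - (∑ j, ∑ j', (s j:ℝ)*Ct j j'*(s j':ℝ)) - (∑ j, ∑ j', (s j:ℝ)*(s j':ℝ)*Ct j' j) := by
          simp only [Finset.sum_add_distrib, Finset.sum_sub_distrib]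
      _ = 2*(w:ℝ)*(∑ j, (s j:ℝ)*Ct j j) - 2*(∑ j, ∑ j', (s j:ℝ) * Ct j j' * (s j':ℝ)) := by
          rw [swap1, swap2, hT1]; ring
  have hsumEle : ∑ j, ∑ j', (s j:ℝ)*(s j':ℝ)*(Ct j j + Ct j' j' - Ct j j' - Ct j' j)
      ≤ (w:ℝ)*((k:ℝ)*w - sq) := by
    rw [hsumE]
    have hw0 : (0:ℝ) ≤ w := Nat.cast_nonneg w
    have h5 := mul_le_mul_of_nonneg_left hSd hw0
    linarith
  -- Cauchy–Schwarz on the weights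
  have hCS2 : (w:ℝ)^2 ≤ (b:ℝ) * sq := by
    have h := Finset.sum_mul_sq_le_sq_mul_sq Finset.univ (fun j => (s j:ℝ)) (fun _ => (1:ℝ))
    simp only [mul_one, one_pow, Finset.sum_const, Finset.card_univ, Fintype.card_fin,
      nsmul_eq_mul] at h
    rw [hcW] at h
    rw [hsq]
    nlinarith [h]
  -- final numeric inequality
  have hfinal : T * ((w:ℝ)*((k:ℝ)*w - sq)) ≤ 4*((w:ℝ)^2 - sq) := by
    have h2u : 2*(u:ℝ) = (b:ℝ)*k - w := by linarith
    have hhint : 0 ≤ ((w:ℝ) - k) * ((b:ℝ)*sq - (w:ℝ)^2) :=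
      mul_nonneg (by linarith) (by linarith)
    rw [hTdef, div_mul_eq_mul_div, div_le_iff₀ huR]
    calc 2*((b:ℝ)-1)*((w:ℝ)*((k:ℝ)*w - sq))
        ≤ 2*((b:ℝ)-1)*((w:ℝ)*((k:ℝ)*w - sq)) + 2*(((w:ℝ)-k)*((b:ℝ)*sq-(w:ℝ)^2)) := by
          linarith
      _ = 2*((b:ℝ)*k - w)*((w:ℝ)^2 - sq) := by ring
      _ = 4*((w:ℝ)^2 - sq)*(u:ℝ) := by rw [← h2u]; ring
  -- assemble the contradiction
  obtain ⟨j0, hj0, j1, hj1, hne01⟩ := Finset.one_lt_card.mp (by omega : 1 < G.card)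
  set F : Finset (Fin b × Fin b) := Finset.univ.filter (fun p : Fin b × Fin b => p.1 ≠ p.2)
    with hF
  have hp0F : (j0, j1) ∈ F := by
    rw [hF, Finset.mem_filter]
    exact ⟨Finset.mem_univ _, hne01⟩
  have hpoint : ∀ p ∈ F, (s p.1:ℝ)*(s p.2:ℝ)*4
      ≤ (s p.1:ℝ)*(s p.2:ℝ)*(T*(Ct p.1 p.1 + Ct p.2 p.2 - Ct p.1 p.2 - Ct p.2 p.1)) := by
    intro p hp
    rcases Nat.eq_zero_or_pos (s p.1) with h1 | h1
    · simp [h1]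
    rcases Nat.eq_zero_or_pos (s p.2) with h2 | h2
    · simp [h2]
    have hne : p.1 ≠ p.2 := by
      rw [hF, Finset.mem_filter] at hp
      exact hp.2
    have hstr := hstrict p.1 p.2 ((hGmem p.1).2 h1) ((hGmem p.2).2 h2) hne
    have hccpos : 0 < (s p.1:ℝ)*(s p.2:ℝ) :=
      mul_pos (by exact_mod_cast h1) (by exact_mod_cast h2)
    exact le_of_lt (mul_lt_mul_of_pos_left hstr hccpos)
  have hstrictpt : (s (j0,j1).1:ℝ)*(s (j0,j1).2:ℝ)*4
      < (s (j0,j1).1:ℝ)*(s (j0,j1).2:ℝ)*(T*(Ct (j0,j1).1 (j0,j1).1 + Ct (j0,j1).2 (j0,j1).2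
        - Ct (j0,j1).1 (j0,j1).2 - Ct (j0,j1).2 (j0,j1).1)) := by
    have h1 : 1 ≤ s j0 := (hGmem j0).1 hj0
    have h2 : 1 ≤ s j1 := (hGmem j1).1 hj1
    have hstr := hstrict j0 j1 hj0 hj1 hne01
    have hccpos : 0 < (s j0:ℝ)*(s j1:ℝ) :=
      mul_pos (by exact_mod_cast h1) (by exact_mod_cast h2)
    exact mul_lt_mul_of_pos_left hstr hccpos
  have hlt := Finset.sum_lt_sum hpoint ⟨(j0, j1), hp0F, hstrictpt⟩
  -- evaluate both sides
  have hA : ∑ p ∈ F, (s p.1:ℝ)*(s p.2:ℝ)*4 = 4*((w:ℝ)^2 - sq) := by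
    have hod := offdiag_sum (fun j j' : Fin b => (s j:ℝ)*(s j':ℝ)*4)
    beta_reduce at hod
    rw [hF, hod]
    have h1 : ∑ j, ∑ j', (s j:ℝ)*(s j':ℝ)*4 = ((w:ℝ)*(w:ℝ))*4 := by
      calc ∑ j, ∑ j', (s j:ℝ)*(s j':ℝ)*4
          = ∑ j, ∑ j', (s j:ℝ)*((s j':ℝ)*4) :=
            Finset.sum_congr rfl fun j _ => Finset.sum_congr rfl fun j' _ => by ring
        _ = (∑ j, (s j:ℝ)) * (∑ j, (s j:ℝ)*4) :=
            double_sum_factor (fun j => (s j:ℝ)) (fun j => (s j:ℝ)*4)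
        _ = ((w:ℝ)*(w:ℝ))*4 := by rw [← Finset.sum_mul, hcW]; ring
    have h2 : ∑ j, (s j:ℝ)*(s j:ℝ)*4 = sq*4 := by
      rw [hsq, Finset.sum_mul]
      exact Finset.sum_congr rfl fun j _ => by ring
    rw [h1, h2]; ring
  have hB : ∑ p ∈ F, (s p.1:ℝ)*(s p.2:ℝ)*(T*(Ct p.1 p.1 + Ct p.2 p.2 - Ct p.1 p.2 - Ct p.2 p.1))
      = T * ∑ j, ∑ j', (s j:ℝ)*(s j':ℝ)*(Ct j j + Ct j' j' - Ct j j' - Ct j' j) := by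
    have hod := offdiag_sum (fun j j' : Fin b =>
      (s j:ℝ)*(s j':ℝ)*(T*(Ct j j + Ct j' j' - Ct j j' - Ct j' j)))
    beta_reduce at hod
    rw [hF, hod]
    have hdiag0 : ∑ j, (s j:ℝ)*(s j:ℝ)*(T*(Ct j j + Ct j j - Ct j j - Ct j j)) = 0 :=
      Finset.sum_eq_zero fun j _ => by ring
    rw [hdiag0, sub_zero, Finset.mul_sum]
    exact Finset.sum_congr rfl fun j _ => by
      rw [Finset.mul_sum]
      exact Finset.sum_congr rfl fun j' _ => by ring
  rw [hA, hB] at hlt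
  have hBle : T * ∑ j, ∑ j', (s j:ℝ)*(s j':ℝ)*(Ct j j + Ct j' j' - Ct j j' - Ct j' j)
      ≤ T * ((w:ℝ)*((k:ℝ)*w - sq)) :=
    mul_le_mul_of_nonneg_left hsumEle hTpos.le
  linarith
end

section
/- Assume additionally that k ≥ k⁺ := 2(u + 1) − b. Then s_j ≥ 1 for every j = 1,…,b, and MV(d₀) ≥ 2 + MV_min, where MV_min is the minimum, over all u × b matrices B with nonnegative integer entries, every row sum equal to 2, and such that C_B := diag(c₁,…,c_b) − (1/2)BᵀB (c_j being the j-th column sum of B) is positive semidefinite with kernel exactly the span of 1_b, of max_{1≤j<j*≤b} (ẽ_j − ẽ_{j*})ᵀ C_B⁺ (ẽ_j − ẽ_{j*}). -/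
open Matrix BigOperators

lemma pinv_unique {n : Type*} [Fintype n] [DecidableEq n] (A X Y : Matrix n n ℝ)
    (hX1 : A*X*A = A) (hX2 : X*A*X = X) (hX3 : (A*X)ᵀ = A*X) (hX4 : (X*A)ᵀ = X*A)
    (hY1 : A*Y*A = A) (hY2 : Y*A*Y = Y) (hY3 : (A*Y)ᵀ = A*Y) (hY4 : (Y*A)ᵀ = Y*A) :
    X = Y := by
  have h1 : X*A*(Y*A) = X*A := by
    rw [mul_assoc, ← mul_assoc A Y A, hY1]
  have h2 : (Y*A)*(X*A) = Y*A := by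
    rw [mul_assoc Y A, ← mul_assoc A X A, hX1]
  have hXA : X*A = Y*A := by
    calc X*A = X*A*(Y*A) := h1.symm
      _ = ((Y*A)ᵀ*(X*A)ᵀ)ᵀ := by rw [← Matrix.transpose_mul, Matrix.transpose_transpose]
      _ = ((Y*A)*(X*A))ᵀ := by rw [hY4, hX4]
      _ = (Y*A)ᵀ := by rw [h2]
      _ = Y*A := hY4
  have h3 : (A*Y)*(A*X) = A*X := by rw [← mul_assoc, hY1]
  have h4 : (A*X)*(A*Y) = A*Y := by rw [← mul_assoc, hX1]
  have hAX : A*X = A*Y := by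
    calc A*X = (A*Y)*(A*X) := h3.symm
      _ = ((A*X)ᵀ*(A*Y)ᵀ)ᵀ := by rw [← Matrix.transpose_mul, Matrix.transpose_transpose]
      _ = ((A*X)*(A*Y))ᵀ := by rw [hX3, hY3]
      _ = (A*Y)ᵀ := by rw [h4]
      _ = A*Y := hY3
  calc X = X*A*X := hX2.symm
    _ = X*(A*X) := by rw [mul_assoc]
    _ = X*(A*Y) := by rw [hAX]
    _ = (X*A)*Y := by rw [mul_assoc]
    _ = (Y*A)*Y := by rw [hXA]
    _ = Y := hY2

lemma pinv_symm {n : Type*} [Fintype n] [DecidableEq n] (A X : Matrix n n ℝ)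
    (hA : Aᵀ = A)
    (h1 : A*X*A = A) (h2 : X*A*X = X) (h3 : (A*X)ᵀ = A*X) (h4 : (X*A)ᵀ = X*A) :
    Xᵀ = X := by
  refine (pinv_unique A Xᵀ X ?_ ?_ ?_ ?_ h1 h2 h3 h4)
  · calc A*Xᵀ*A = (Aᵀ*X*Aᵀ)ᵀ := by simp [Matrix.transpose_mul, Matrix.mul_assoc]
      _ = A := by rw [hA, h1, hA]
  · calc Xᵀ*A*Xᵀ = (X*Aᵀ*X)ᵀ := by simp [Matrix.transpose_mul, Matrix.mul_assoc]
      _ = Xᵀ := by rw [hA, h2]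
  · calc (A*Xᵀ)ᵀ = X*Aᵀ := by simp
      _ = X*A := by rw [hA]
      _ = (X*A)ᵀ := h4.symm
      _ = Aᵀ*Xᵀ := by simp
      _ = A*Xᵀ := by rw [hA]
  · calc (Xᵀ*A)ᵀ = Aᵀ*X := by simp
      _ = A*X := by rw [hA]
      _ = (A*X)ᵀ := h3.symm
      _ = Xᵀ*Aᵀ := by simp
      _ = Xᵀ*A := by rw [hA]

lemma psd_transpose {n : Type*} [Fintype n] [DecidableEq n] (A : Matrix n n ℝ)
    (h : A.PosSemidef) : Aᵀ = A := by
  have h1 := h.1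
  ext i j
  have := congrFun (congrFun h1 i) j
  simpa [Matrix.conjTranspose_apply] using this

lemma pinv_quad_nonneg {n : Type*} [Fintype n] [DecidableEq n] (A X : Matrix n n ℝ)
    (hA : A.PosSemidef)
    (h1 : A*X*A = A) (h2 : X*A*X = X) (h3 : (A*X)ᵀ = A*X) (h4 : (X*A)ᵀ = X*A)
    (v : n → ℝ) : 0 ≤ v ⬝ᵥ X.mulVec v := by
  have hAT : Aᵀ = A := psd_transpose A hA
  have hXT : Xᵀ = X := pinv_symm A X hAT h1 h2 h3 h4
  have key : v ⬝ᵥ X.mulVec v = (X.mulVec v) ⬝ᵥ A.mulVec (X.mulVec v) := by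
    conv_lhs => rw [← h2]
    rw [← Matrix.mulVec_mulVec, ← Matrix.mulVec_mulVec, Matrix.dotProduct_mulVec,
      ← Matrix.mulVec_transpose, hXT]
  rw [key]
  simpa using hA.dotProduct_mulVec_nonneg (X.mulVec v)

/-- Theorem 2(b): if `k ≥ k⁺ = 2(u+1) − b`, then every `s_j ≥ 1` and
`MV(d₀) ≥ 2 + MV_min`, where `MV_min` is the MV-criterion value of an MV-optimal block
design with `b` treatments and `u` blocks each of size two. -/
theorem stmt6
    (u b k : ℕ) (hu : 0 < u) (hb : 3 ≤ b) (hk : 1 ≤ k) (hub : b - 1 ≤ u)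
    (w : ℕ) (hw : 2 * u + w = b * k) (hw1 : 1 ≤ w)
    (hkplus : 2 * u + 2 ≤ k + b)
    (s : Fin b → ℕ) (hs : ∀ j, s j ≤ k - 1) (hssum : ∑ j, s j = w)
    (N : Matrix (Fin u) (Fin b) ℕ)
    (hrow : ∀ i, ∑ j, N i j = 2)
    (hcol : ∀ j, ∑ i, N i j = k - s j)
    (Nr : Matrix (Fin u) (Fin b) ℝ) (hNr : Nr = N.map (Nat.cast : ℕ → ℝ))
    (S : Matrix (Fin b) (Fin b) ℝ) (hS : S = Matrix.diagonal fun j => (s j : ℝ))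
    (C : Matrix (Fin u) (Fin u) ℝ)
    (hC : C = (2 : ℝ) • (1 : Matrix (Fin u) (Fin u) ℝ)
        - Nr * ((k : ℝ) • (1 : Matrix (Fin b) (Fin b) ℝ) - S)⁻¹ * Nrᵀ)
    (Ct : Matrix (Fin b) (Fin b) ℝ)
    (hCt : Ct = (k : ℝ) • (1 : Matrix (Fin b) (Fin b) ℝ) - S - (1/2 : ℝ) • (Nrᵀ * Nr))
    (hCpsd : C.PosSemidef)
    (hCker : ∀ x : Fin u → ℝ, C.mulVec x = 0 ↔ ∃ c : ℝ, x = fun _ => c)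
    (hCtpsd : Ct.PosSemidef)
    (hCtker : ∀ x : Fin b → ℝ, Ct.mulVec x = 0 ↔ ∃ c : ℝ, x = fun _ => c)
    (Cp : Matrix (Fin u) (Fin u) ℝ)
    (hCp1 : C * Cp * C = C) (hCp2 : Cp * C * Cp = Cp)
    (hCp3 : (C * Cp)ᵀ = C * Cp) (hCp4 : (Cp * C)ᵀ = Cp * C)
    (Ctp : Matrix (Fin b) (Fin b) ℝ)
    (hCtp1 : Ct * Ctp * Ct = Ct) (hCtp2 : Ctp * Ct * Ctp = Ctp)
    (hCtp3 : (Ct * Ctp)ᵀ = Ct * Ctp) (hCtp4 : (Ctp * Ct)ᵀ = Ctp * Ct)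
    (G : Finset (Fin b)) (hG : G = Finset.univ.filter fun j => 1 ≤ s j)
    (ξ : Fin u → Fin b → Fin b → ℝ)
    (hξ : ∀ i j, ξ i j
        = (Pi.single j 1 : Fin b → ℝ) - (1/2 : ℝ) • Nrᵀ.mulVec (Pi.single i 1))
    (MVUU MVWW MVUW MV : ℝ)
    (hMVUU : MVUU = sSup {x : ℝ | ∃ i i' : Fin u, i < i' ∧
      x = ((Pi.single i 1 : Fin u → ℝ) - Pi.single i' 1) ⬝ᵥ
            Cp.mulVec ((Pi.single i 1 : Fin u → ℝ) - Pi.single i' 1)})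
    (hMVWW : MVWW = 2 + sSup {x : ℝ | ∃ j j' : Fin b, j ∈ G ∧ j' ∈ G ∧ j < j' ∧
      x = ((Pi.single j 1 : Fin b → ℝ) - Pi.single j' 1) ⬝ᵥ
            Ctp.mulVec ((Pi.single j 1 : Fin b → ℝ) - Pi.single j' 1)})
    (hMVUW : MVUW = 3/2 + sSup {x : ℝ | ∃ (i : Fin u) (j : Fin b), j ∈ G ∧
      x = (ξ i j) ⬝ᵥ Ctp.mulVec (ξ i j)})
    (hMV : MV = max (max MVUU MVWW) MVUW)
    (MVmin : ℝ)
    (hMVmin : MVmin = sInf {x : ℝ |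
      ∃ (B : Matrix (Fin u) (Fin b) ℕ) (CB CBp : Matrix (Fin b) (Fin b) ℝ),
        (∀ i, ∑ j, B i j = 2) ∧
        CB = Matrix.diagonal (fun j => ((∑ i, B i j : ℕ) : ℝ))
          - (1/2 : ℝ) • ((B.map (Nat.cast : ℕ → ℝ))ᵀ * B.map (Nat.cast : ℕ → ℝ)) ∧
        CB.PosSemidef ∧
        (∀ y : Fin b → ℝ, CB.mulVec y = 0 ↔ ∃ c : ℝ, y = fun _ => c) ∧
        CB * CBp * CB = CB ∧ CBp * CB * CBp = CBp ∧
        (CB * CBp)ᵀ = CB * CBp ∧ (CBp * CB)ᵀ = CBp * CB ∧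
        x = sSup {y : ℝ | ∃ j j' : Fin b, j < j' ∧
          y = ((Pi.single j 1 : Fin b → ℝ) - Pi.single j' 1) ⬝ᵥ
                CBp.mulVec ((Pi.single j 1 : Fin b → ℝ) - Pi.single j' 1)}}) :
    (∀ j, 1 ≤ s j) ∧ 2 + MVmin ≤ MV := by

  -- Part (a): every s j ≥ 1
  have parta : ∀ j, 1 ≤ s j := by
    intro j0
    by_contra h
    have hsj0 : s j0 = 0 := by omega
    obtain ⟨B', hB'⟩ : ∃ B', b = B' + 1 := ⟨b - 1, by omega⟩
    obtain ⟨K', hK'⟩ : ∃ K', k = K' + 1 := ⟨k - 1, by omega⟩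
    have hsum : s j0 + ∑ j ∈ Finset.univ.erase j0, s j = w := by
      rw [Finset.add_sum_erase _ _ (Finset.mem_univ j0), hssum]
    have hcard : (Finset.univ.erase j0).card = B' := by
      simp [Finset.card_erase_of_mem, hB']
    have hbound : ∑ j ∈ Finset.univ.erase j0, s j ≤ B' * K' := by
      calc ∑ j ∈ Finset.univ.erase j0, s j ≤ (Finset.univ.erase j0).card * K' := by
            apply Finset.sum_le_card_nsmul
            intro j _
            have := hs j
            omega
        _ = B' * K' := by rw [hcard]
    have hexp : (B'+1)*(K'+1) = B'*K' + B' + K' + 1 := by ring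
    have hwle : w ≤ B' * K' := by omega
    rw [hB', hK'] at hw hkplus
    linarith
  refine ⟨parta, ?_⟩
  -- Ct coincides with the matrix C_B for B = N
  have hskk : ∀ j, s j ≤ k := fun j => le_trans (hs j) (Nat.sub_le _ _)
  have hNk : ∀ j, ((∑ i, N i j : ℕ) : ℝ) = (k : ℝ) - s j := by
    intro j
    rw [hcol j, Nat.cast_sub (hskk j)]
  have hdiag : (k:ℝ) • (1 : Matrix (Fin b) (Fin b) ℝ) - S
      = Matrix.diagonal (fun j => ((∑ i, N i j : ℕ) : ℝ)) := by
    rw [hS]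
    ext i j
    by_cases hij : i = j
    · subst hij
      simp [Matrix.one_apply, hNk]
    · simp [Matrix.one_apply, Matrix.diagonal, hij]
  have hCBeq : Ct = Matrix.diagonal (fun j => ((∑ i, N i j : ℕ) : ℝ))
      - (1/2 : ℝ) • ((N.map (Nat.cast : ℕ → ℝ))ᵀ * N.map (Nat.cast : ℕ → ℝ)) := by
    rw [hCt, ← hdiag, hNr]
  -- the element of the MVmin set coming from B = N
  set x0 : ℝ := sSup {y : ℝ | ∃ j j' : Fin b, j < j' ∧
      y = ((Pi.single j 1 : Fin b → ℝ) - Pi.single j' 1) ⬝ᵥ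
            Ctp.mulVec ((Pi.single j 1 : Fin b → ℝ) - Pi.single j' 1)} with hx0
  have hx0mem : x0 ∈ {x : ℝ |
      ∃ (B : Matrix (Fin u) (Fin b) ℕ) (CB CBp : Matrix (Fin b) (Fin b) ℝ),
        (∀ i, ∑ j, B i j = 2) ∧
        CB = Matrix.diagonal (fun j => ((∑ i, B i j : ℕ) : ℝ))
          - (1/2 : ℝ) • ((B.map (Nat.cast : ℕ → ℝ))ᵀ * B.map (Nat.cast : ℕ → ℝ)) ∧
        CB.PosSemidef ∧
        (∀ y : Fin b → ℝ, CB.mulVec y = 0 ↔ ∃ c : ℝ, y = fun _ => c) ∧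
        CB * CBp * CB = CB ∧ CBp * CB * CBp = CBp ∧
        (CB * CBp)ᵀ = CB * CBp ∧ (CBp * CB)ᵀ = CBp * CB ∧
        x = sSup {y : ℝ | ∃ j j' : Fin b, j < j' ∧
          y = ((Pi.single j 1 : Fin b → ℝ) - Pi.single j' 1) ⬝ᵥ
                CBp.mulVec ((Pi.single j 1 : Fin b → ℝ) - Pi.single j' 1)}} :=
    ⟨N, Ct, Ctp, hrow, hCBeq, hCtpsd, hCtker, hCtp1, hCtp2, hCtp3, hCtp4, hx0⟩
  -- every element of the MVmin set is nonnegative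
  have hlb : ∀ x ∈ {x : ℝ |
      ∃ (B : Matrix (Fin u) (Fin b) ℕ) (CB CBp : Matrix (Fin b) (Fin b) ℝ),
        (∀ i, ∑ j, B i j = 2) ∧
        CB = Matrix.diagonal (fun j => ((∑ i, B i j : ℕ) : ℝ))
          - (1/2 : ℝ) • ((B.map (Nat.cast : ℕ → ℝ))ᵀ * B.map (Nat.cast : ℕ → ℝ)) ∧
        CB.PosSemidef ∧
        (∀ y : Fin b → ℝ, CB.mulVec y = 0 ↔ ∃ c : ℝ, y = fun _ => c) ∧
        CB * CBp * CB = CB ∧ CBp * CB * CBp = CBp ∧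
        (CB * CBp)ᵀ = CB * CBp ∧ (CBp * CB)ᵀ = CBp * CB ∧
        x = sSup {y : ℝ | ∃ j j' : Fin b, j < j' ∧
          y = ((Pi.single j 1 : Fin b → ℝ) - Pi.single j' 1) ⬝ᵥ
                CBp.mulVec ((Pi.single j 1 : Fin b → ℝ) - Pi.single j' 1)}},
      (0:ℝ) ≤ x := by
    rintro x ⟨B, CB, CBp, hB, hCBdef, hpsd, hker, p1, p2, p3, p4, rfl⟩
    set T := {y : ℝ | ∃ j j' : Fin b, j < j' ∧
        y = ((Pi.single j 1 : Fin b → ℝ) - Pi.single j' 1) ⬝ᵥ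
              CBp.mulVec ((Pi.single j 1 : Fin b → ℝ) - Pi.single j' 1)} with hT
    have hquad : ∀ v : Fin b → ℝ, 0 ≤ v ⬝ᵥ CBp.mulVec v :=
      pinv_quad_nonneg CB CBp hpsd p1 p2 p3 p4
    have hj01 : (⟨0, by omega⟩ : Fin b) < (⟨1, by omega⟩ : Fin b) := by
      simp [Fin.mk_lt_mk]
    set d : Fin b → ℝ :=
      (Pi.single (⟨0, by omega⟩ : Fin b) 1 : Fin b → ℝ)
        - Pi.single (⟨1, by omega⟩ : Fin b) 1 with hd
    have hy0mem : d ⬝ᵥ CBp.mulVec d ∈ T := ⟨_, _, hj01, rfl⟩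
    by_cases hbdd : BddAbove T
    · exact le_trans (hquad d) (le_csSup hbdd hy0mem)
    · rw [Real.sSup_of_not_bddAbove hbdd]
  have hMVmin_le : MVmin ≤ x0 := by
    rw [hMVmin]
    exact csInf_le ⟨0, fun x hx => hlb x hx⟩ hx0mem
  -- with all s j ≥ 1, G = univ and MVWW = 2 + x0
  have hGmem : ∀ j : Fin b, j ∈ G := by
    intro j
    rw [hG]
    simp [parta j]
  have hsets : {x : ℝ | ∃ j j' : Fin b, j ∈ G ∧ j' ∈ G ∧ j < j' ∧
      x = ((Pi.single j 1 : Fin b → ℝ) - Pi.single j' 1) ⬝ᵥ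
            Ctp.mulVec ((Pi.single j 1 : Fin b → ℝ) - Pi.single j' 1)}
      = {y : ℝ | ∃ j j' : Fin b, j < j' ∧
      y = ((Pi.single j 1 : Fin b → ℝ) - Pi.single j' 1) ⬝ᵥ
            Ctp.mulVec ((Pi.single j 1 : Fin b → ℝ) - Pi.single j' 1)} := by
    ext x
    simp only [Set.mem_setOf_eq, hGmem, true_and]
  have hMVWWeq : MVWW = 2 + x0 := by rw [hMVWW, hsets, hx0]
  have hle : MVWW ≤ MV := by
    rw [hMV]
    exact le_trans (le_max_right MVUU MVWW) (le_max_left _ MVUW)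
  linarith
end

section
/- tr(C) ≤ 2u − b, and consequently tr(C⁺) ≥ (u − 1)²/(2u − b). -/
open Matrix BigOperators

private lemma mp_unique_s7 {n : Type*} [Fintype n] [DecidableEq n]
    (A G H : Matrix n n ℝ)
    (hG1 : A * G * A = A) (hG2 : G * A * G = G)
    (hG3 : (A * G)ᵀ = A * G) (hG4 : (G * A)ᵀ = G * A)
    (hH1 : A * H * A = A) (hH2 : H * A * H = H)
    (hH3 : (A * H)ᵀ = A * H) (hH4 : (H * A)ᵀ = H * A) :
    G = H := by
  have h2 : Aᵀ = Aᵀ * Hᵀ * Aᵀ := by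
    calc Aᵀ = (A * H * A)ᵀ := by rw [hH1]
      _ = Aᵀ * (Hᵀ * Aᵀ) := by simp only [transpose_mul]
      _ = Aᵀ * Hᵀ * Aᵀ := by rw [mul_assoc]
  have key1 : A * G = A * H := by
    calc A * G = (A * G)ᵀ := hG3.symm
      _ = Gᵀ * Aᵀ := transpose_mul _ _
      _ = Gᵀ * (Aᵀ * Hᵀ * Aᵀ) := by rw [← h2]
      _ = (Gᵀ * Aᵀ) * (Hᵀ * Aᵀ) := by simp only [mul_assoc]
      _ = (A * G)ᵀ * (A * H)ᵀ := by rw [transpose_mul, transpose_mul]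
      _ = (A * G) * (A * H) := by rw [hG3, hH3]
      _ = (A * G * A) * H := by simp only [mul_assoc]
      _ = A * H := by rw [hG1]
  have key2 : G * A = H * A := by
    calc G * A = (G * A)ᵀ := hG4.symm
      _ = Aᵀ * Gᵀ := transpose_mul _ _
      _ = (Aᵀ * Hᵀ * Aᵀ) * Gᵀ := by rw [← h2]
      _ = (Aᵀ * Hᵀ) * (Aᵀ * Gᵀ) := by simp only [mul_assoc]
      _ = (H * A)ᵀ * (G * A)ᵀ := by rw [transpose_mul, transpose_mul]
      _ = (H * A) * (G * A) := by rw [hG4, hH4]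
      _ = H * (A * G * A) := by simp only [mul_assoc]
      _ = H * A := by rw [hG1]
  calc G = G * A * G := hG2.symm
    _ = G * (A * G) := mul_assoc _ _ _
    _ = G * (A * H) := by rw [key1]
    _ = (G * A) * H := (mul_assoc _ _ _).symm
    _ = (H * A) * H := by rw [key2]
    _ = H := hH2

/-- First inequalities in (7): `tr(C) ≤ 2u − b` and consequently
`tr(C⁺) ≥ (u − 1)²/(2u − b)`. -/
theorem stmt7
    (u b k : ℕ) (hu : 0 < u) (hb : 3 ≤ b) (hk : 1 ≤ k) (hub : b - 1 ≤ u)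
    (s : Fin b → ℕ) (hs : ∀ j, s j ≤ k - 1)
    (N : Matrix (Fin u) (Fin b) ℕ)
    (hrow : ∀ i, ∑ j, N i j = 2)
    (hcol : ∀ j, ∑ i, N i j = k - s j)
    (Nr : Matrix (Fin u) (Fin b) ℝ) (hNr : Nr = N.map (Nat.cast : ℕ → ℝ))
    (S : Matrix (Fin b) (Fin b) ℝ) (hS : S = Matrix.diagonal fun j => (s j : ℝ))
    (C : Matrix (Fin u) (Fin u) ℝ)
    (hC : C = (2 : ℝ) • (1 : Matrix (Fin u) (Fin u) ℝ)
        - Nr * ((k : ℝ) • (1 : Matrix (Fin b) (Fin b) ℝ) - S)⁻¹ * Nrᵀ)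
    (hCpsd : C.PosSemidef)
    (hCker : ∀ x : Fin u → ℝ, C.mulVec x = 0 ↔ ∃ c : ℝ, x = fun _ => c)
    (Cp : Matrix (Fin u) (Fin u) ℝ)
    (hCp1 : C * Cp * C = C) (hCp2 : Cp * C * Cp = Cp)
    (hCp3 : (C * Cp)ᵀ = C * Cp) (hCp4 : (Cp * C)ᵀ = Cp * C) :
    C.trace ≤ 2 * (u : ℝ) - (b : ℝ) ∧
      ((u : ℝ) - 1) ^ 2 / (2 * (u : ℝ) - (b : ℝ)) ≤ Cp.trace := by
  -- basic facts
  have hCsym : Cᵀ = C := by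
    have := hCpsd.isHermitian
    rwa [Matrix.IsHermitian, conjTranspose_eq_transpose_of_trivial] at this
  have hsk : ∀ j, s j < k := fun j => by have := hs j; omega
  have hskR : ∀ j, (s j : ℝ) < (k : ℝ) := fun j => by exact_mod_cast hsk j
  have hub' : (b : ℝ) < 2 * (u : ℝ) := by
    have : b < 2 * u := by omega
    exact_mod_cast this
  have h2ub : (0 : ℝ) < 2 * (u : ℝ) - (b : ℝ) := by linarith
  -- Part 1 : trace bound
  set g : Fin b → ℝ := fun j => ((k : ℝ) - s j)⁻¹ with hg
  have hgpos : ∀ j, (0 : ℝ) < (k : ℝ) - s j := fun j => by linarith [hskR j]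
  have hD : ((k : ℝ) • (1 : Matrix (Fin b) (Fin b) ℝ) - S)
      = Matrix.diagonal (fun j => (k : ℝ) - s j) := by
    rw [hS]
    ext i j
    by_cases h : i = j <;>
      simp [Matrix.smul_apply, Matrix.one_apply, Matrix.diagonal_apply, h]
  have hDinv : ((k : ℝ) • (1 : Matrix (Fin b) (Fin b) ℝ) - S)⁻¹ = Matrix.diagonal g := by
    rw [hD]
    apply Matrix.inv_eq_right_inv
    have hone : (fun j => ((k : ℝ) - s j) * g j) = fun _ => (1 : ℝ) :=
      funext fun j => mul_inv_cancel₀ (hgpos j).ne'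
    rw [Matrix.diagonal_mul_diagonal, hone, Matrix.diagonal_one]
  have htr2 : (Nr * Matrix.diagonal g * Nrᵀ).trace = ∑ j, (∑ i, Nr i j ^ 2) * g j := by
    have expand : ∀ i, (Nr * Matrix.diagonal g * Nrᵀ) i i = ∑ j, Nr i j * g j * Nr i j := by
      intro i
      rw [Matrix.mul_apply]
      refine Finset.sum_congr rfl fun j _ => ?_
      rw [Matrix.mul_diagonal, Matrix.transpose_apply]
    simp only [Matrix.trace, Matrix.diag]
    rw [Finset.sum_congr rfl fun i _ => expand i, Finset.sum_comm]
    refine Finset.sum_congr rfl fun j _ => ?_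
    rw [Finset.sum_mul]
    exact Finset.sum_congr rfl fun i _ => by ring
  have hterm : ∀ j, (1 : ℝ) ≤ (∑ i, Nr i j ^ 2) * g j := by
    intro j
    have hN2 : (k - s j : ℕ) ≤ ∑ i, (N i j) ^ 2 := by
      rw [← hcol j]
      exact Finset.sum_le_sum fun i _ => Nat.le_self_pow two_ne_zero _
    have hcast : ((k - s j : ℕ) : ℝ) = (k : ℝ) - s j := by
      have := (hsk j).le
      push_cast [this]; ring
    have hsum : (k : ℝ) - s j ≤ ∑ i, Nr i j ^ 2 := by
      rw [← hcast, hNr]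
      calc ((k - s j : ℕ) : ℝ) ≤ ((∑ i, (N i j) ^ 2 : ℕ) : ℝ) := by exact_mod_cast hN2
        _ = ∑ i, ((N.map (Nat.cast : ℕ → ℝ)) i j) ^ 2 := by
            push_cast [Matrix.map_apply]; rfl
    calc (1 : ℝ) = ((k : ℝ) - s j) * g j := by
          rw [hg]; exact (mul_inv_cancel₀ (hgpos j).ne').symm
      _ ≤ (∑ i, Nr i j ^ 2) * g j := by
          apply mul_le_mul_of_nonneg_right hsum
          rw [hg]
          exact inv_nonneg.mpr (hgpos j).le
  have htrC : C.trace ≤ 2 * (u : ℝ) - (b : ℝ) := by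
    rw [hC, hDinv]
    rw [Matrix.trace_sub, Matrix.trace_smul, Matrix.trace_one, htr2]
    have hb2 : (b : ℝ) ≤ ∑ j, (∑ i, Nr i j ^ 2) * g j := by
      calc (b : ℝ) = ∑ _j : Fin b, (1 : ℝ) := by simp
        _ ≤ _ := Finset.sum_le_sum fun j _ => hterm j
    simp only [smul_eq_mul, Fintype.card_fin]
    push_cast
    linarith
  refine ⟨htrC, ?_⟩
  -- Part 2
  -- symmetry of Cp
  have hH1 : C * Cpᵀ * C = C := by
    calc C * Cpᵀ * C = C * (Cpᵀ * C) := mul_assoc _ _ _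
      _ = Cᵀ * (Cpᵀ * Cᵀ) := by rw [hCsym]
      _ = Cᵀ * (C * Cp)ᵀ := by rw [transpose_mul]
      _ = (C * Cp * C)ᵀ := by rw [transpose_mul (C * Cp) C]
      _ = Cᵀ := by rw [hCp1]
      _ = C := hCsym
  have hH2 : Cpᵀ * C * Cpᵀ = Cpᵀ := by
    calc Cpᵀ * C * Cpᵀ = Cpᵀ * (C * Cpᵀ) := mul_assoc _ _ _
      _ = Cpᵀ * (Cᵀ * Cpᵀ) := by rw [hCsym]
      _ = Cpᵀ * (Cp * C)ᵀ := by rw [transpose_mul]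
      _ = (Cp * C * Cp)ᵀ := by rw [transpose_mul (Cp * C) Cp]
      _ = Cpᵀ := by rw [hCp2]
  have e1 : C * Cpᵀ = Cp * C := by
    calc C * Cpᵀ = Cᵀ * Cpᵀ := by rw [hCsym]
      _ = (Cp * C)ᵀ := (transpose_mul _ _).symm
      _ = Cp * C := hCp4
  have e2 : Cpᵀ * C = C * Cp := by
    calc Cpᵀ * C = Cpᵀ * Cᵀ := by rw [hCsym]
      _ = (C * Cp)ᵀ := (transpose_mul _ _).symm
      _ = C * Cp := hCp3
  have hH3 : (C * Cpᵀ)ᵀ = C * Cpᵀ := by rw [e1, hCp4, ← e1]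
  have hH4 : (Cpᵀ * C)ᵀ = Cpᵀ * C := by rw [e2, hCp3, ← e2]
  have hCpsym : Cpᵀ = Cp :=
    (mp_unique_s7 C Cp Cpᵀ hCp1 hCp2 hCp3 hCp4 hH1 hH2 hH3 hH4).symm
  -- the projection P = C * Cp
  have hPC : (C * Cp) * C = C := hCp1
  have hCP : C * (C * Cp) = C := by
    calc C * (C * Cp) = Cᵀ * (C * Cp)ᵀ := by rw [hCsym, hCp3]
      _ = ((C * Cp) * C)ᵀ := (transpose_mul _ _).symm
      _ = Cᵀ := by rw [hPC]
      _ = C := hCsym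
  set P : Matrix (Fin u) (Fin u) ℝ := C * Cp with hP
  have hC1 : C.mulVec (fun _ => (1 : ℝ)) = 0 := (hCker _).mpr ⟨1, rfl⟩
  have hCsymE : ∀ a c', C a c' = C c' a := by
    intro a c'
    conv_lhs => rw [← hCsym]
    rw [Matrix.transpose_apply]
  have hCcol : ∀ m, ∑ l, C l m = 0 := by
    intro m
    have h0 : ∑ l, C m l = 0 := by
      have := congrFun hC1 m
      simpa [Matrix.mulVec, dotProduct] using this
    calc ∑ l, C l m = ∑ l, C m l :=
          Finset.sum_congr rfl fun l _ => hCsymE l m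
      _ = 0 := h0
  have hPcol : ∀ m, ∑ l, P l m = 0 := by
    intro m
    have hstep : ∑ l, P l m = ∑ q, (∑ l, C l q) * Cp q m := by
      simp only [hP, Matrix.mul_apply]
      rw [Finset.sum_comm]
      exact Finset.sum_congr rfl fun q _ => (Finset.sum_mul _ _ _).symm
    rw [hstep]
    simp [hCcol]
  -- diagonal entries of P
  have hu0 : (u : ℝ) ≠ 0 := Nat.cast_ne_zero.mpr hu.ne'
  have hPdiag : ∀ i, P i i = 1 - (u : ℝ)⁻¹ := by
    intro i
    set x : Fin u → ℝ := Pi.single i (1 : ℝ) with hx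
    have hw : C.mulVec (x - P.mulVec x) = 0 := by
      rw [Matrix.mulVec_sub, Matrix.mulVec_mulVec, hCP, sub_self]
    obtain ⟨c, hc⟩ := (hCker _).mp hw
    have hsum1 : ∑ l, (x - P.mulVec x) l = c * u := by
      rw [hc]; simp [Finset.sum_const, mul_comm]
    have hsumx : ∑ l, x l = 1 := by simp [hx]
    have hsumPx : ∑ l, P.mulVec x l = 0 := by
      simp only [Matrix.mulVec, dotProduct]
      rw [Finset.sum_comm]
      simp only [← Finset.sum_mul]
      simp [hPcol]
    have h1 : ∑ l, (x - P.mulVec x) l = 1 := by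
      simp only [Pi.sub_apply, Finset.sum_sub_distrib, hsumx, hsumPx, sub_zero]
    have hcu : c * u = 1 := by rw [← hsum1, h1]
    have hcval : c = (u : ℝ)⁻¹ := by
      have : c = c * ((u : ℝ) * (u : ℝ)⁻¹) := by rw [mul_inv_cancel₀ hu0, mul_one]
      rw [this, ← mul_assoc, hcu, one_mul]
    have hPx : P.mulVec x i = P i i := by
      simp [hx, Matrix.mulVec_single]
    have hwi : (x - P.mulVec x) i = c := by rw [hc]
    have hxi : x i = 1 := by simp [hx]
    have hfin : 1 - P i i = c := by
      rw [← hxi, ← hPx]; exact hwi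
    rw [hcval] at hfin
    linarith
  have htrP : P.trace = (u : ℝ) - 1 := by
    rw [Matrix.trace]
    simp only [Matrix.diag]
    rw [Finset.sum_congr rfl fun i _ => hPdiag i]
    rw [Finset.sum_const, Finset.card_univ, Fintype.card_fin, nsmul_eq_mul]
    field_simp
  -- Cauchy-Schwarz with the square root of C
  obtain ⟨A, hAherm, hAA0⟩ : ∃ A : Matrix (Fin u) (Fin u) ℝ, A.IsHermitian ∧ A * A = C := by
    open scoped MatrixOrder in
    exact ⟨CFC.sqrt C, (CFC.sqrt_nonneg C).posSemidef.isHermitian,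
      CFC.sqrt_mul_sqrt_self C hCpsd.nonneg⟩
  have hAsym : Aᵀ = A := by
    have := hAherm
    rwa [Matrix.IsHermitian, conjTranspose_eq_transpose_of_trivial] at this
  have hAA : A * A = C := hAA0
  set Y : Matrix (Fin u) (Fin u) ℝ := A * Cp with hY
  have hXtY : Aᵀ * Y = P := by rw [hAsym, hY, ← mul_assoc, hAA, hP]
  have hXtX : Aᵀ * A = C := by rw [hAsym, hAA]
  have hYtY : Yᵀ * Y = Cp := by
    rw [hY, transpose_mul, hCpsym, hAsym, mul_assoc Cp A (A * Cp),
      ← mul_assoc A A Cp, hAA, ← mul_assoc, hCp2]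
  have htr_eq : ∀ X Z : Matrix (Fin u) (Fin u) ℝ,
      (Xᵀ * Z).trace = ∑ p : Fin u × Fin u, X p.1 p.2 * Z p.1 p.2 := by
    intro X Z
    rw [Fintype.sum_prod_type]
    simp only [Matrix.trace, Matrix.diag, Matrix.mul_apply, Matrix.transpose_apply]
    rw [Finset.sum_comm]
  have hCS := Finset.sum_mul_sq_le_sq_mul_sq Finset.univ
      (fun p : Fin u × Fin u => A p.1 p.2) (fun p : Fin u × Fin u => Y p.1 p.2)
  have eq1 : ∑ p : Fin u × Fin u, A p.1 p.2 * Y p.1 p.2 = (u : ℝ) - 1 := by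
    rw [← htr_eq, hXtY, htrP]
  have eq2 : ∑ p : Fin u × Fin u, A p.1 p.2 ^ 2 = C.trace := by
    have h := htr_eq A A
    rw [hXtX] at h
    simp only [pow_two]
    exact h.symm
  have eq3 : ∑ p : Fin u × Fin u, Y p.1 p.2 ^ 2 = Cp.trace := by
    have h := htr_eq Y Y
    rw [hYtY] at h
    simp only [pow_two]
    exact h.symm
  rw [eq1, eq2, eq3] at hCS
  have hCpnn : 0 ≤ Cp.trace := by
    rw [← eq3]
    exact Finset.sum_nonneg fun p _ => sq_nonneg _
  have hfin : ((u : ℝ) - 1) ^ 2 ≤ (2 * (u : ℝ) - b) * Cp.trace := by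
    calc ((u : ℝ) - 1) ^ 2 ≤ C.trace * Cp.trace := hCS
      _ ≤ (2 * (u : ℝ) - b) * Cp.trace := mul_le_mul_of_nonneg_right htrC hCpnn
  rw [div_le_iff₀ h2ub]
  linarith
end

section
/- In the linked block setting, the eigenvalues of C are 0 with multiplicity 1, b/(b − 1) with multiplicity b − 1, and 2 with multiplicity u − b; consequently tr(C⁺) = {2(b − 1)² + b(u − b)}/(2b). -/
open Matrix BigOperators Polynomial

set_option maxHeartbeats 2000000

lemma evalCharpoly {m : Type*} [Fintype m] [DecidableEq m] (A : Matrix m m ℝ) (x : ℝ) :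
    (A.charpoly).eval x = (x • (1 : Matrix m m ℝ) - A).det := by
  unfold Matrix.charpoly
  rw [show (Polynomial.eval x) = ((Polynomial.evalRingHom x : ℝ[X] →+* ℝ) : ℝ[X] → ℝ) from rfl,
    RingHom.map_det]
  congr 1
  ext i j
  by_cases h : i = j <;>
    simp [Matrix.charmatrix_apply, Matrix.one_apply, h, Matrix.sub_apply, Matrix.smul_apply,
      Matrix.diagonal_apply]

lemma pinvUnique {m : Type*} [Fintype m] [DecidableEq m] (A D1 D2 : Matrix m m ℝ)
    (h11 : A * D1 * A = A) (h12 : D1 * A * D1 = D1)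
    (h13 : (A * D1)ᵀ = A * D1) (h14 : (D1 * A)ᵀ = D1 * A)
    (h21 : A * D2 * A = A) (h22 : D2 * A * D2 = D2)
    (h23 : (A * D2)ᵀ = A * D2) (h24 : (D2 * A)ᵀ = D2 * A) : D1 = D2 := by
  have e1 : A * D1 = A * D2 := by
    calc A * D1 = (A * D1)ᵀ := h13.symm
    _ = D1ᵀ * Aᵀ := Matrix.transpose_mul _ _
    _ = D1ᵀ * (A * D2 * A)ᵀ := by rw [h21]
    _ = (A * D1)ᵀ * (A * D2)ᵀ := by simp only [Matrix.transpose_mul, Matrix.mul_assoc]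
    _ = (A * D1) * (A * D2) := by rw [h13, h23]
    _ = (A * D1 * A) * D2 := by simp only [Matrix.mul_assoc]
    _ = A * D2 := by rw [h11]
  have e2 : D1 * A = D2 * A := by
    calc D1 * A = (D1 * A)ᵀ := h14.symm
    _ = Aᵀ * D1ᵀ := Matrix.transpose_mul _ _
    _ = (A * D2 * A)ᵀ * D1ᵀ := by rw [h21]
    _ = (D2 * A)ᵀ * (D1 * A)ᵀ := by simp only [Matrix.transpose_mul, Matrix.mul_assoc]
    _ = (D2 * A) * (D1 * A) := by rw [h14, h24]
    _ = D2 * (A * D1 * A) := by simp only [Matrix.mul_assoc]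
    _ = D2 * A := by rw [h11]
  calc D1 = D1 * A * D1 := h12.symm
  _ = D1 * (A * D2) := by rw [Matrix.mul_assoc, e1]
  _ = D2 * A * D2 := by rw [← Matrix.mul_assoc, e2]
  _ = D2 := h22

/-- Linked block setting: the eigenvalues of `C` are `0` (multiplicity 1), `b/(b−1)`
(multiplicity `b−1`) and `2` (multiplicity `u−b`), expressed via the characteristic
polynomial; consequently `tr(C⁺) = (2(b−1)² + b(u−b))/(2b)`. -/
theorem stmt13
    (l b u k : ℕ) (hl : 1 ≤ l) (hb : 3 ≤ b)
    (hu : 2 * u = l * b * (b - 1)) (hk : l * (b - 1) + 1 ≤ k)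
    (N : Matrix (Fin u) (Fin b) ℕ)
    (h01 : ∀ i j, N i j = 0 ∨ N i j = 1)
    (hrow : ∀ i, ∑ j, N i j = 2)
    (hpair : ∀ j j' : Fin b, j < j' →
      (Finset.univ.filter fun i => N i j = 1 ∧ N i j' = 1).card = l)
    (hcol : ∀ j, ∑ i, N i j = l * (b - 1))
    (Nr : Matrix (Fin u) (Fin b) ℝ) (hNr : Nr = N.map (Nat.cast : ℕ → ℝ))
    (s : Fin b → ℕ) (hs : ∀ j, s j = k - l * (b - 1))
    (S : Matrix (Fin b) (Fin b) ℝ) (hS : S = Matrix.diagonal fun j => (s j : ℝ))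
    (C : Matrix (Fin u) (Fin u) ℝ)
    (hC : C = (2 : ℝ) • (1 : Matrix (Fin u) (Fin u) ℝ)
        - Nr * ((k : ℝ) • (1 : Matrix (Fin b) (Fin b) ℝ) - S)⁻¹ * Nrᵀ)
    (hC' : C = (2 : ℝ) • (1 : Matrix (Fin u) (Fin u) ℝ)
        - (1 / ((l : ℝ) * ((b : ℝ) - 1))) • (Nr * Nrᵀ))
    (Cp : Matrix (Fin u) (Fin u) ℝ)
    (hCp1 : C * Cp * C = C) (hCp2 : Cp * C * Cp = Cp)
    (hCp3 : (C * Cp)ᵀ = C * Cp) (hCp4 : (Cp * C)ᵀ = Cp * C) :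
    C.charpoly = X * (X - Polynomial.C ((b : ℝ) / ((b : ℝ) - 1))) ^ (b - 1)
        * (X - Polynomial.C 2) ^ (u - b) ∧
      Cp.trace = (2 * ((b : ℝ) - 1) ^ 2 + (b : ℝ) * ((u : ℝ) - (b : ℝ))) / (2 * (b : ℝ)) := by
  set L : ℝ := (l : ℝ) with hL
  set B : ℝ := (b : ℝ) with hB
  have hL1 : (1:ℝ) ≤ L := by rw [hL]; exact_mod_cast hl
  have hB3 : (3:ℝ) ≤ B := by rw [hB]; exact_mod_cast hb
  have hub : b ≤ u := by
    have h2 : 2 * b ≤ 2 * u := by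
      rw [hu]
      calc 2 * b = 1 * b * 2 := by ring
      _ ≤ l * b * (b - 1) :=
        Nat.mul_le_mul (Nat.mul_le_mul hl (le_refl b)) (by omega)
    omega
  have hUval : (u:ℝ) = L * B * (B - 1) / 2 := by
    have : ((2 * u : ℕ) : ℝ) = ((l * b * (b-1) : ℕ) : ℝ) := Nat.cast_inj.mpr hu
    push_cast [Nat.cast_sub (by omega : 1 ≤ b)] at this
    linarith
  -- row sums in ℝ
  have hrowR : ∀ i, ∑ j, Nr i j = 2 := by
    intro i
    rw [hNr]
    simp only [Matrix.map_apply]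
    rw [← Nat.cast_sum]
    exact_mod_cast congrArg (Nat.cast : ℕ → ℝ) (hrow i)
  have hcolR : ∀ j, ∑ i, Nr i j = L * (B - 1) := by
    intro j
    rw [hNr]
    simp only [Matrix.map_apply]
    rw [← Nat.cast_sum, hcol j]
    push_cast [Nat.cast_sub (by omega : 1 ≤ b)]
    ring
  -- squares
  have hsq : ∀ i j, Nr i j * Nr i j = Nr i j := by
    intro i j
    rcases h01 i j with h | h <;> simp [hNr, Matrix.map_apply, h]
  -- pairs, symmetric version
  have hpairR : ∀ j j' : Fin b, j ≠ j' → ∑ i, Nr i j * Nr i j' = L := by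
    intro j j' hne
    have key : ∀ (a c : Fin b), a < c → ∑ i, Nr i a * Nr i c = L := by
      intro a c hac
      have : ∑ i, Nr i a * Nr i c =
          ∑ i, (if N i a = 1 ∧ N i c = 1 then (1:ℝ) else 0) := by
        apply Finset.sum_congr rfl
        intro i _
        rcases h01 i a with h1 | h1 <;> rcases h01 i c with h2 | h2 <;>
          simp [hNr, Matrix.map_apply, h1, h2]
      rw [this, Finset.sum_boole, hpair a c hac]
    rcases lt_or_gt_of_ne hne with h | h
    · exact key _ _ h
    · rw [show ∑ i, Nr i j * Nr i j' = ∑ i, Nr i j' * Nr i j from by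
        apply Finset.sum_congr rfl; intros; ring]
      exact key _ _ h
  -- the all-ones matrices
  set Jb : Matrix (Fin b) (Fin b) ℝ := Matrix.of (fun _ _ => (1:ℝ)) with hJb
  set Ju : Matrix (Fin u) (Fin u) ℝ := Matrix.of (fun _ _ => (1:ℝ)) with hJu
  set M : Matrix (Fin u) (Fin u) ℝ := Nr * Nrᵀ with hM
  -- Gram matrix identity
  have hGram : Nrᵀ * Nr = (L * (B - 2)) • (1 : Matrix (Fin b) (Fin b) ℝ) + L • Jb := by
    ext j j'
    simp only [Matrix.mul_apply, Matrix.transpose_apply, Matrix.add_apply, Matrix.smul_apply,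
      Matrix.one_apply, hJb, Matrix.of_apply, smul_eq_mul]
    by_cases h : j = j'
    · subst h
      simp only [if_pos rfl, mul_one]
      norm_num
      rw [show ∑ i, Nr i j * Nr i j = ∑ i, Nr i j from Finset.sum_congr rfl fun i _ => hsq i j,
        hcolR j]
      ring
    · simp only [if_neg h, mul_zero, mul_one, zero_add]
      exact hpairR j j' h
  have hNJb : Nr * Jb * Nrᵀ = (4:ℝ) • Ju := by
    ext i i'
    simp only [Matrix.mul_apply, hJb, hJu, Matrix.of_apply, Matrix.transpose_apply,
      Matrix.smul_apply, smul_eq_mul, mul_one]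
    calc ∑ j', (∑ j, Nr i j) * Nr i' j' = ∑ j', 2 * Nr i' j' :=
          Finset.sum_congr rfl fun j' _ => by rw [hrowR i]
    _ = 2 * ∑ j', Nr i' j' := by rw [Finset.mul_sum]
    _ = 4 := by rw [hrowR i']; norm_num
  have hMM : M * M = (L * (B - 2)) • M + (4 * L) • Ju := by
    calc M * M = Nr * (Nrᵀ * Nr) * Nrᵀ := by
          simp only [hM, Matrix.mul_assoc]
    _ = Nr * ((L * (B - 2)) • (1 : Matrix (Fin b) (Fin b) ℝ) + L • Jb) * Nrᵀ := by rw [hGram]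
    _ = (L * (B - 2)) • M + L • (Nr * Jb * Nrᵀ) := by
          simp only [Matrix.mul_add, Matrix.add_mul, Matrix.mul_smul, Matrix.smul_mul,
            Matrix.mul_one, hM]
    _ = (L * (B - 2)) • M + (4 * L) • Ju := by rw [hNJb, smul_smul]; ring_nf
  have hMJ : M * Ju = (2 * L * (B - 1)) • Ju := by
    ext i i'
    simp only [Matrix.mul_apply, hM, hJu, Matrix.of_apply, Matrix.smul_apply, smul_eq_mul,
      mul_one, Matrix.transpose_apply]
    calc ∑ i'', ∑ j, Nr i j * Nr i'' j = ∑ j, ∑ i'', Nr i j * Nr i'' j := Finset.sum_comm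
    _ = ∑ j, Nr i j * (L * (B-1)) := by
          apply Finset.sum_congr rfl
          intro j _
          rw [← Finset.mul_sum, hcolR j]
    _ = (∑ j, Nr i j) * (L * (B-1)) := by rw [Finset.sum_mul]
    _ = 2 * L * (B - 1) := by rw [hrowR i]; ring
  have hMT : Mᵀ = M := by
    rw [hM, Matrix.transpose_mul, Matrix.transpose_transpose]
  have hJT : Juᵀ = Ju := by
    ext i i'; simp [hJu]
  have hJM : Ju * M = (2 * L * (B - 1)) • Ju := by
    have := congrArg Matrix.transpose hMJ
    rw [Matrix.transpose_mul, hMT, hJT, Matrix.transpose_smul, hJT] at this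
    exact this
  have hJJ : Ju * Ju = (u : ℝ) • Ju := by
    ext i i'
    simp [hJu, Matrix.mul_apply, Finset.sum_const]
  have htrM : M.trace = 2 * (u : ℝ) := by
    rw [Matrix.trace]
    simp only [Matrix.diag_apply, hM, Matrix.mul_apply, Matrix.transpose_apply]
    calc ∑ i, ∑ j, Nr i j * Nr i j = ∑ i, ∑ j, Nr i j :=
          Finset.sum_congr rfl fun i _ => Finset.sum_congr rfl fun j _ => hsq i j
    _ = ∑ i : Fin u, (2:ℝ) := Finset.sum_congr rfl fun i _ => hrowR i
    _ = 2 * (u:ℝ) := by simp [mul_comm]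
  have htrJ : Ju.trace = (u : ℝ) := by
    rw [Matrix.trace]
    simp [hJu, Matrix.diag_apply]
  have hLne : L ≠ 0 := by linarith
  have hBne : B ≠ 0 := by linarith
  have hB1ne : B - 1 ≠ 0 := by linarith
  have hB2ne : B - 2 ≠ 0 := by linarith
  have hUne : (u : ℝ) ≠ 0 := by
    have h1 : (0:ℝ) < L := by linarith
    have h2 : (0:ℝ) < B := by linarith
    have h3 : (0:ℝ) < B - 1 := by linarith
    have : (0:ℝ) < (u:ℝ) := by
      rw [hUval]
      have := mul_pos (mul_pos h1 h2) h3
      linarith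
    linarith
  -- key product formula in the commutative subalgebra spanned by 1, M, Ju
  have key : ∀ a₁ a₂ a₃ c₁ c₂ c₃ : ℝ,
      (a₁ • (1 : Matrix (Fin u) (Fin u) ℝ) + a₂ • M + a₃ • Ju) *
        (c₁ • (1 : Matrix (Fin u) (Fin u) ℝ) + c₂ • M + c₃ • Ju) =
      (a₁ * c₁) • (1 : Matrix (Fin u) (Fin u) ℝ)
        + (a₁ * c₂ + a₂ * c₁ + a₂ * c₂ * (L * (B - 2))) • M
        + (a₁ * c₃ + a₃ * c₁ + 4 * L * (a₂ * c₂) + 2 * L * (B - 1) * (a₂ * c₃ + a₃ * c₂)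
            + (u : ℝ) * (a₃ * c₃)) • Ju := by
    intro a₁ a₂ a₃ c₁ c₂ c₃
    simp only [Matrix.add_mul, Matrix.mul_add, Matrix.smul_mul, Matrix.mul_smul,
      Matrix.one_mul, Matrix.mul_one, hMM, hMJ, hJM, hJJ, smul_add, smul_smul]
    match_scalars <;> ring
  -- ===== characteristic polynomial =====
  set c : ℝ := 1 / (L * (B - 1)) with hc
  have hCharpoly : C.charpoly
      = X * (X - Polynomial.C (B / (B - 1))) ^ (b - 1) * (X - Polynomial.C 2) ^ (u - b) := by
    apply Polynomial.eq_of_infinite_eval_eq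
    have hfin : ({(2:ℝ), B / (B - 1)} : Set ℝ).Finite := Set.Finite.insert _ (Set.finite_singleton _)
    apply Set.Infinite.mono (s := ({(2:ℝ), B / (B - 1)} : Set ℝ)ᶜ)
    · intro x hx
      simp only [Set.mem_compl_iff, Set.mem_insert_iff, Set.mem_singleton_iff, not_or] at hx
      obtain ⟨hx2, hxB⟩ := hx
      set δ : ℝ := x - 2 with hδdef
      set β : ℝ := x - B / (B - 1) with hβdef
      have hδ : δ ≠ 0 := sub_ne_zero.mpr hx2
      have hβ : β ≠ 0 := sub_ne_zero.mpr hxB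
      have hβ' : 1 + c / δ * (L * (B - 2)) = β / δ := by
        rw [hc, hβdef]
        field_simp
        ring
      have hβ'ne : 1 + c / δ * (L * (B - 2)) ≠ 0 := by
        rw [hβ']
        exact div_ne_zero hβ hδ
      have hnum : 1 + c / δ * (L * (B - 2)) = (δ + c * (L * (B - 2))) / δ := by
        field_simp
      have hnumne : δ + c * (L * (B - 2)) ≠ 0 := by
        intro h0
        rw [hnum, h0, zero_div] at hβ'ne
        exact hβ'ne rfl
      have hβalt : β = ((B - 1) * x - B) / (B - 1) := by
        rw [hβdef]
        field_simp
      have hβnumne : (B - 1) * x - B ≠ 0 := by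
        intro h0
        apply hβ
        rw [hβalt, h0, zero_div]
      show (C.charpoly).eval x = _
      rw [evalCharpoly C x]
      have hxC : x • (1 : Matrix (Fin u) (Fin u) ℝ) - C = δ • ((1 : Matrix (Fin u) (Fin u) ℝ) + (c / δ) • M) := by
        rw [hC', smul_add, smul_smul, mul_div_cancel₀ _ hδ, hδdef]
        module
      rw [hxC, Matrix.det_smul, Fintype.card_fin]
      have step1 : ((1 : Matrix (Fin u) (Fin u) ℝ) + (c / δ) • M).det
          = ((1 : Matrix (Fin b) (Fin b) ℝ) + (c / δ) • (Nrᵀ * Nr)).det := by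
        rw [hM, ← Matrix.smul_mul, Matrix.det_one_add_mul_comm, Matrix.mul_smul]
      have step2 : (1 : Matrix (Fin b) (Fin b) ℝ) + (c / δ) • (Nrᵀ * Nr)
          = (1 + c / δ * (L * (B - 2))) • ((1 : Matrix (Fin b) (Fin b) ℝ)
              + (c / δ * L / (1 + c / δ * (L * (B - 2)))) • Jb) := by
        rw [hGram]
        match_scalars
        · ring
        · field_simp [hnumne]
          have hX : -(c * L * 2) + c * L * B + δ ≠ 0 := by
            intro h; apply hnumne; linear_combination h
          have := mul_inv_cancel₀ hX
          linear_combination (-c) * this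
      have step3 : ((1 : Matrix (Fin b) (Fin b) ℝ)
          + (c / δ * L / (1 + c / δ * (L * (B - 2)))) • Jb).det
          = 1 + (b : ℝ) * (c / δ * L / (1 + c / δ * (L * (B - 2)))) := by
        set e : ℝ := c / δ * L / (1 + c / δ * (L * (B - 2)))
        have hcol : e • Jb = Matrix.replicateCol (Fin 1) (fun _ => e) * Matrix.replicateRow (Fin 1) (fun _ => (1:ℝ)) := by
          ext i j
          simp [hJb, Matrix.mul_apply]
        rw [hcol]; refine (Matrix.det_one_add_replicateCol_mul_replicateRow (ι := Fin 1) _ _).trans ?_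
        simp [dotProduct, mul_comm]
      rw [step1, step2, Matrix.det_smul, Fintype.card_fin, step3, hβ']
      -- now pure scalar computation
      have he : c / δ * L / (β / δ) = 1 / ((B - 1) * β) := by
        rw [hc]
        field_simp
      rw [he]
      have hx1 : 1 + (b:ℝ) * (1 / ((B - 1) * β)) = x / β := by
        rw [← hB, hβalt]
        field_simp [hβnumne]
        ring
      rw [hx1]
      simp only [eval_mul, eval_pow, eval_sub, eval_X, eval_C]
      rw [← hβdef, ← hδdef]
      have hδu : δ ^ u = δ ^ (u - b) * δ ^ b := by
        rw [← pow_add, Nat.sub_add_cancel hub]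
      have hβb : (β / δ) ^ b = β ^ (b - 1) * β / δ ^ b := by
        rw [div_pow,
          show β ^ b = β ^ (b - 1) * β by rw [← pow_succ, Nat.sub_add_cancel (by omega : 1 ≤ b)]]
      rw [hδu, hβb]
      field_simp
    · apply Set.Finite.infinite_compl hfin
  refine ⟨hCharpoly, ?_⟩
  -- C as a combination
  have hCcomb : C = (2:ℝ) • (1 : Matrix (Fin u) (Fin u) ℝ)
      + (-(1 / (L * (B - 1)))) • M + (0:ℝ) • Ju := by
    rw [hC']
    module
  set D : Matrix (Fin u) (Fin u) ℝ :=
    (1/2 : ℝ) • (1 : Matrix (Fin u) (Fin u) ℝ) + (1 / (2 * L * B)) • M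
      + (-((3 * B - 2) / (2 * B * (u:ℝ)))) • Ju with hD
  have hD1 : C * D * C = C := by
    rw [hCcomb, hD, key, key, hUval]
    match_scalars <;> field_simp <;> ring
  have hD2 : D * C * D = D := by
    rw [hCcomb, hD, key, key, hUval]
    match_scalars <;> field_simp <;> ring
  have hCDcomb : ∀ E F : Matrix (Fin u) (Fin u) ℝ, ∀ a₁ a₂ a₃ : ℝ,
      E = a₁ • (1 : Matrix (Fin u) (Fin u) ℝ) + a₂ • M + a₃ • Ju → Eᵀ = E := by
    intro E F a₁ a₂ a₃ hE
    rw [hE]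
    simp only [Matrix.transpose_add, Matrix.transpose_smul, Matrix.transpose_one, hMT, hJT]
  have hD3 : (C * D)ᵀ = C * D := by
    apply hCDcomb _ C _ _ _ (by rw [hCcomb, hD, key])
  have hD4 : (D * C)ᵀ = D * C := by
    apply hCDcomb _ C _ _ _ (by rw [hCcomb, hD, key])
  have hCpD : Cp = D := pinvUnique C Cp D hCp1 hCp2 hCp3 hCp4 hD1 hD2 hD3 hD4
  rw [hCpD, hD]
  simp only [Matrix.trace_add, Matrix.trace_smul, Matrix.trace_one, htrM, htrJ, smul_eq_mul]
  rw [hUval]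
  simp only [Fintype.card_fin]
  rw [hUval]
  field_simp
  ring
end

section
/- In the linked block setting, MV(d₀) = 2 + 4/(λb); since 2(b − 1)/u = 4/(λb), this attains the lower bound of Theorem 2(a), so the full design d₀ is MV-optimal. -/
open Matrix BigOperators

lemma mp_unique_s14 {n : Type*} [Fintype n] [DecidableEq n] (A X Y : Matrix n n ℝ)
    (h1 : A*X*A = A) (h2 : X*A*X = X) (h3 : (A*X)ᵀ = A*X) (h4 : (X*A)ᵀ = X*A)
    (g1 : A*Y*A = A) (g2 : Y*A*Y = Y) (g3 : (A*Y)ᵀ = A*Y) (g4 : (Y*A)ᵀ = Y*A) :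
    X = Y := by
  have hA1 : Aᵀ = Aᵀ*(A*Y) := by
    conv_lhs => rw [← g1]
    rw [Matrix.transpose_mul, g3]
  have hA2 : Aᵀ = (Y*A)*Aᵀ := by
    conv_lhs => rw [← g1]
    rw [Matrix.mul_assoc, Matrix.transpose_mul, g4]
  have hAX : A*X = A*Y := by
    calc A*X = (A*X)ᵀ := h3.symm
    _ = Xᵀ*Aᵀ := by rw [Matrix.transpose_mul]
    _ = Xᵀ*(Aᵀ*(A*Y)) := by rw [← hA1]
    _ = (Xᵀ*Aᵀ)*(A*Y) := by rw [Matrix.mul_assoc]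
    _ = (A*X)ᵀ*(A*Y) := by rw [Matrix.transpose_mul]
    _ = (A*X)*(A*Y) := by rw [h3]
    _ = (A*X*A)*Y := by simp only [Matrix.mul_assoc]
    _ = A*Y := by rw [h1]
  have hXA : X*A = Y*A := by
    calc X*A = (X*A)ᵀ := h4.symm
    _ = Aᵀ*Xᵀ := by rw [Matrix.transpose_mul]
    _ = ((Y*A)*Aᵀ)*Xᵀ := by rw [← hA2]
    _ = (Y*A)*(Aᵀ*Xᵀ) := by rw [Matrix.mul_assoc]
    _ = (Y*A)*(X*A)ᵀ := by rw [Matrix.transpose_mul]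
    _ = (Y*A)*(X*A) := by rw [h4]
    _ = Y*(A*X*A) := by simp only [Matrix.mul_assoc]
    _ = Y*A := by rw [h1]
  calc X = X*A*X := h2.symm
  _ = (Y*A)*X := by rw [hXA]
  _ = Y*(A*X) := by rw [Matrix.mul_assoc]
  _ = Y*(A*Y) := by rw [hAX]
  _ = Y*A*Y := by rw [Matrix.mul_assoc]
  _ = Y := g2

lemma mulIJ {n : Type*} [Fintype n] [DecidableEq n] (Jn : Matrix n n ℝ) (m a c a' c' : ℝ)
    (hJ : Jn*Jn = m • Jn) :
    (a•(1:Matrix n n ℝ) + c•Jn) * (a'•(1:Matrix n n ℝ) + c'•Jn)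
      = (a*a')•(1:Matrix n n ℝ) + (a*c' + c*a' + c*c'*m)•Jn := by
  simp only [add_mul, mul_add, smul_mul_assoc, mul_smul_comm, one_mul, mul_one, hJ, smul_smul]
  match_scalars <;> ring

lemma mulIPJ {n : Type*} [Fintype n] [DecidableEq n] (P Jn : Matrix n n ℝ)
    (e f g m a p q a' p' q' : ℝ)
    (hPP : P*P = e•Jn + f•P) (hPJ : P*Jn = g•Jn) (hJP : Jn*P = g•Jn) (hJJ : Jn*Jn = m•Jn) :
    (a•(1:Matrix n n ℝ) + p•P + q•Jn) * (a'•(1:Matrix n n ℝ) + p'•P + q'•Jn)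
      = (a*a')•(1:Matrix n n ℝ) + (a*p' + p*a' + p*p'*f)•P
        + (a*q' + q*a' + p*p'*e + (p*q' + q*p')*g + q*q'*m)•Jn := by
  simp only [add_mul, mul_add, smul_mul_assoc, mul_smul_comm, one_mul, mul_one,
    hPP, hPJ, hJP, hJJ, smul_add, smul_smul]
  match_scalars <;> ring

set_option maxHeartbeats 2000000 in
/-- Linked block setting with `k ≥ λb`: `MV(d₀) = 2 + 4/(λb)`, and since
`2(b−1)/u = 4/(λb)` this attains the lower bound of Theorem 2(a), so `d₀` is MV-optimal. -/
theorem stmt14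
    (l b u k : ℕ) (hl : 1 ≤ l) (hb : 3 ≤ b)
    (hu : 2 * u = l * b * (b - 1)) (hk : l * b ≤ k)
    (N : Matrix (Fin u) (Fin b) ℕ)
    (h01 : ∀ i j, N i j = 0 ∨ N i j = 1)
    (hrow : ∀ i, ∑ j, N i j = 2)
    (hpair : ∀ j j' : Fin b, j < j' →
      (Finset.univ.filter fun i => N i j = 1 ∧ N i j' = 1).card = l)
    (hcol : ∀ j, ∑ i, N i j = l * (b - 1))
    (Nr : Matrix (Fin u) (Fin b) ℝ) (hNr : Nr = N.map (Nat.cast : ℕ → ℝ))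
    (s : Fin b → ℕ) (hs : ∀ j, s j = k - l * (b - 1)) (hs1 : ∀ j, 1 ≤ s j)
    (S : Matrix (Fin b) (Fin b) ℝ) (hS : S = Matrix.diagonal fun j => (s j : ℝ))
    (C : Matrix (Fin u) (Fin u) ℝ)
    (hC : C = (2 : ℝ) • (1 : Matrix (Fin u) (Fin u) ℝ)
        - Nr * ((k : ℝ) • (1 : Matrix (Fin b) (Fin b) ℝ) - S)⁻¹ * Nrᵀ)
    (Ct : Matrix (Fin b) (Fin b) ℝ)
    (hCt : Ct = (k : ℝ) • (1 : Matrix (Fin b) (Fin b) ℝ) - S - (1/2 : ℝ) • (Nrᵀ * Nr))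
    (Cp : Matrix (Fin u) (Fin u) ℝ)
    (hCp1 : C * Cp * C = C) (hCp2 : Cp * C * Cp = Cp)
    (hCp3 : (C * Cp)ᵀ = C * Cp) (hCp4 : (Cp * C)ᵀ = Cp * C)
    (Ctp : Matrix (Fin b) (Fin b) ℝ)
    (hCtp1 : Ct * Ctp * Ct = Ct) (hCtp2 : Ctp * Ct * Ctp = Ctp)
    (hCtp3 : (Ct * Ctp)ᵀ = Ct * Ctp) (hCtp4 : (Ctp * Ct)ᵀ = Ctp * Ct)
    (ξ : Fin u → Fin b → Fin b → ℝ)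
    (hξ : ∀ i j, ξ i j
        = (Pi.single j 1 : Fin b → ℝ) - (1/2 : ℝ) • Nrᵀ.mulVec (Pi.single i 1))
    (MVUU MVWW MVUW MV : ℝ)
    (hMVUU : MVUU = sSup {x : ℝ | ∃ i i' : Fin u, i < i' ∧
      x = ((Pi.single i 1 : Fin u → ℝ) - Pi.single i' 1) ⬝ᵥ
            Cp.mulVec ((Pi.single i 1 : Fin u → ℝ) - Pi.single i' 1)})
    (hMVWW : MVWW = 2 + sSup {x : ℝ | ∃ j j' : Fin b, j < j' ∧
      x = ((Pi.single j 1 : Fin b → ℝ) - Pi.single j' 1) ⬝ᵥ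
            Ctp.mulVec ((Pi.single j 1 : Fin b → ℝ) - Pi.single j' 1)})
    (hMVUW : MVUW = 3/2 + sSup {x : ℝ | ∃ (i : Fin u) (j : Fin b),
      x = (ξ i j) ⬝ᵥ Ctp.mulVec (ξ i j)})
    (hMV : MV = max (max MVUU MVWW) MVUW) :
    MV = 2 + 4 / ((l : ℝ) * (b : ℝ)) ∧
      2 * ((b : ℝ) - 1) / (u : ℝ) = 4 / ((l : ℝ) * (b : ℝ)) := by
  -- numeric facts
  have hb1 : (1:ℕ) ≤ b := by omega
  have hBr : ((b - 1 : ℕ) : ℝ) = (b:ℝ) - 1 := by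
    rw [Nat.cast_sub hb1]; norm_num
  have hL0 : (0:ℝ) < (l:ℝ) := by exact_mod_cast hl
  have hB3 : (3:ℝ) ≤ (b:ℝ) := by exact_mod_cast hb
  have hB0 : (0:ℝ) < (b:ℝ) := by linarith
  have hB1 : (0:ℝ) < (b:ℝ) - 1 := by linarith
  have hLne : (l:ℝ) ≠ 0 := ne_of_gt hL0
  have hBne : (b:ℝ) ≠ 0 := ne_of_gt hB0
  have hB1ne : (b:ℝ) - 1 ≠ 0 := ne_of_gt hB1
  have hu3 : 3 ≤ u := by
    have h6 : 6 ≤ l * b * (b-1) := by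
      have h1 : 3 ≤ l * b := by
        calc 3 = 1 * 3 := by norm_num
        _ ≤ l * b := Nat.mul_le_mul hl hb
      have h2 : 2 ≤ b - 1 := by omega
      calc 6 = 3 * 2 := by norm_num
      _ ≤ (l*b) * (b-1) := Nat.mul_le_mul h1 h2
    omega
  have hur : 2 * (u:ℝ) = (l:ℝ) * (b:ℝ) * ((b:ℝ)-1) := by
    have h := congrArg (fun n : ℕ => (n:ℝ)) hu
    push_cast [hBr] at h
    linarith
  have hu0r : (u:ℝ) ≠ 0 := by
    have : (3:ℝ) ≤ (u:ℝ) := by exact_mod_cast hu3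
    linarith
  -- all-ones matrices
  set Jb : Matrix (Fin b) (Fin b) ℝ := Matrix.of (fun _ _ => 1) with hJbdef
  set Ju : Matrix (Fin u) (Fin u) ℝ := Matrix.of (fun _ _ => 1) with hJudef
  set Jub : Matrix (Fin u) (Fin b) ℝ := Matrix.of (fun _ _ => 1) with hJubdef
  set Jbu : Matrix (Fin b) (Fin u) ℝ := Matrix.of (fun _ _ => 1) with hJbudef
  -- entrywise facts about Nr
  have hNre : ∀ i j, Nr i j = (N i j : ℝ) := by intro i j; rw [hNr]; rfl
  have hNr01 : ∀ i j, Nr i j = 0 ∨ Nr i j = 1 := by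
    intro i j
    rcases h01 i j with h | h
    · left; rw [hNre, h]; norm_num
    · right; rw [hNre, h]; norm_num
  have hNsq : ∀ i j, Nr i j * Nr i j = Nr i j := by
    intro i j; rcases hNr01 i j with h | h <;> rw [h] <;> ring
  have hNnn : ∀ i j, 0 ≤ Nr i j := by
    intro i j; rcases hNr01 i j with h | h <;> rw [h] <;> norm_num
  have hrowr : ∀ i, ∑ j, Nr i j = 2 := by
    intro i
    simp only [hNre]
    rw [← Nat.cast_sum, hrow]; norm_num
  have hcolr : ∀ j, ∑ i, Nr i j = (l:ℝ) * ((b:ℝ)-1) := by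
    intro j
    simp only [hNre]
    rw [← Nat.cast_sum, hcol]
    push_cast [hBr]; ring
  -- the key combinatorial identity
  have key : ∀ j j' : Fin b, j ≠ j' → ∑ i, Nr i j * Nr i j' = (l:ℝ) := by
    intro j j' hne
    have hsum : ∀ jA jB : Fin b, (∑ i, Nr i jA * Nr i jB)
        = (((Finset.univ.filter fun i => N i jA = 1 ∧ N i jB = 1).card : ℕ) : ℝ) := by
      intro jA jB
      rw [Finset.card_filter]
      push_cast
      apply Finset.sum_congr rfl
      intro i _
      rcases h01 i jA with h1 | h1 <;> rcases h01 i jB with h2 | h2 <;>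
        simp [hNre, h1, h2]
    rcases lt_or_gt_of_ne hne with h | h
    · rw [hsum j j', hpair j j' h]
    · rw [hsum j j']
      have hfe : (Finset.univ.filter fun i => N i j = 1 ∧ N i j' = 1)
          = (Finset.univ.filter fun i => N i j' = 1 ∧ N i j = 1) := by
        apply Finset.filter_congr
        intro i _
        simp [and_comm]
      rw [hfe, hpair j' j h]
  -- structural matrix identities
  have hNtN : Nrᵀ * Nr = (l:ℝ) • Jb + ((l:ℝ) * ((b:ℝ)-2)) • (1 : Matrix (Fin b) (Fin b) ℝ) := by
    ext j j'
    simp only [Matrix.mul_apply, Matrix.transpose_apply, Matrix.add_apply, Matrix.smul_apply,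
      Matrix.one_apply, hJbdef, Matrix.of_apply, smul_eq_mul]
    rcases eq_or_ne j j' with h | h
    · subst h
      simp only [eq_self_iff_true, if_true]
      rw [Finset.sum_congr rfl (fun i _ => hNsq i j), hcolr j]
      ring
    · simp only [if_neg h]
      rw [key j j' h]
      ring
  have hJbJb : Jb * Jb = (b:ℝ) • Jb := by
    ext j j'
    simp [Matrix.mul_apply, hJbdef, Finset.sum_const, Fintype.card_fin]
  have hJuJu : Ju * Ju = ((l:ℝ) * (b:ℝ) * ((b:ℝ)-1) / 2) • Ju := by
    ext i i'
    simp [Matrix.mul_apply, hJudef, Finset.sum_const, Fintype.card_fin]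
    linarith
  have hJbNt : Jb * Nrᵀ = (2:ℝ) • Jbu := by
    ext j i
    simp only [Matrix.mul_apply, hJbdef, hJbudef, Matrix.of_apply, Matrix.transpose_apply,
      Matrix.smul_apply, smul_eq_mul, one_mul, mul_one]
    rw [hrowr i]
  have hNJbu : Nr * Jbu = (2:ℝ) • Ju := by
    ext i i'
    simp only [Matrix.mul_apply, hJbudef, hJudef, Matrix.of_apply,
      Matrix.smul_apply, smul_eq_mul, mul_one]
    rw [hrowr i]
  have hJuN : Ju * Nr = ((l:ℝ) * ((b:ℝ)-1)) • Jub := by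
    ext i j
    simp only [Matrix.mul_apply, hJudef, hJubdef, Matrix.of_apply,
      Matrix.smul_apply, smul_eq_mul, one_mul, mul_one]
    rw [hcolr j]
  have hJubNt : Jub * Nrᵀ = (2:ℝ) • Ju := by
    ext i i'
    simp only [Matrix.mul_apply, hJubdef, hJudef, Matrix.of_apply, Matrix.transpose_apply,
      Matrix.smul_apply, smul_eq_mul, one_mul, mul_one]
    rw [hrowr i']
  set P : Matrix (Fin u) (Fin u) ℝ := Nr * Nrᵀ with hPdef
  have hPsymm : Pᵀ = P := by
    rw [hPdef, Matrix.transpose_mul, Matrix.transpose_transpose]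
  have hJusymm : Juᵀ = Ju := by
    ext i i'; simp [hJudef]
  have hJbsymm : Jbᵀ = Jb := by
    ext j j'; simp [hJbdef]
  have hPP : P * P = (4*(l:ℝ)) • Ju + ((l:ℝ)*((b:ℝ)-2)) • P := by
    have h1 : P * P = Nr * ((Nrᵀ * Nr) * Nrᵀ) := by
      rw [hPdef]; simp only [Matrix.mul_assoc]
    rw [h1, hNtN]
    simp only [Matrix.add_mul, Matrix.smul_mul, Matrix.one_mul, hJbNt, Matrix.mul_add,
      Matrix.mul_smul, hNJbu, smul_smul, ← hPdef]
    match_scalars <;> ring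
  have hJuP : Ju * P = (2*(l:ℝ)*((b:ℝ)-1)) • Ju := by
    have h1 : Ju * P = (Ju * Nr) * Nrᵀ := by rw [hPdef, Matrix.mul_assoc]
    rw [h1, hJuN, Matrix.smul_mul, hJubNt, smul_smul]
    match_scalars
    ring
  have hPJu : P * Ju = (2*(l:ℝ)*((b:ℝ)-1)) • Ju := by
    have h := congrArg Matrix.transpose hJuP
    rw [Matrix.transpose_mul, hPsymm, hJusymm, Matrix.transpose_smul, hJusymm] at h
    exact h
  have hPd : ∀ i, P i i = 2 := by
    intro i
    rw [hPdef]
    simp only [Matrix.mul_apply, Matrix.transpose_apply]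
    rw [Finset.sum_congr rfl (fun j _ => hNsq i j), hrowr i]
  have hPoff : ∀ i i', P i i' = ∑ j, Nr i j * Nr i' j := by
    intro i i'
    rw [hPdef]; simp [Matrix.mul_apply]
  -- k I - S
  have hlbk : l * (b-1) ≤ k := by
    have : l * (b-1) ≤ l * b := Nat.mul_le_mul_left l (by omega)
    omega
  have hsr : ∀ j, (s j : ℝ) = (k:ℝ) - (l:ℝ)*((b:ℝ)-1) := by
    intro j
    rw [hs j, Nat.cast_sub hlbk]
    push_cast [hBr]; ring
  have hKS : (k : ℝ) • (1 : Matrix (Fin b) (Fin b) ℝ) - S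
      = ((l:ℝ)*((b:ℝ)-1)) • (1 : Matrix (Fin b) (Fin b) ℝ) := by
    rw [hS]
    ext j j'
    rcases eq_or_ne j j' with h | h
    · subst h
      simp [Matrix.sub_apply, Matrix.one_apply_eq, Matrix.diagonal_apply_eq, hsr j]
    · simp [Matrix.sub_apply, Matrix.one_apply_ne h, Matrix.diagonal_apply_ne _ h]
  have hcne : (l:ℝ)*((b:ℝ)-1) ≠ 0 := mul_ne_zero hLne hB1ne
  have hInv : ((k : ℝ) • (1 : Matrix (Fin b) (Fin b) ℝ) - S)⁻¹
      = (((l:ℝ)*((b:ℝ)-1))⁻¹) • (1 : Matrix (Fin b) (Fin b) ℝ) := by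
    rw [hKS]
    apply Matrix.inv_eq_right_inv
    rw [Matrix.smul_mul, Matrix.mul_smul, Matrix.one_mul, smul_smul, mul_inv_cancel₀ hcne, one_smul]
  -- C and Ct in canonical form
  have hCform : C = (2:ℝ) • (1 : Matrix (Fin u) (Fin u) ℝ)
      + (-(((l:ℝ)*((b:ℝ)-1))⁻¹)) • P + (0:ℝ) • Ju := by
    rw [hC, hInv]
    simp only [Matrix.mul_smul, Matrix.mul_one, Matrix.smul_mul, ← hPdef]
    match_scalars <;> ring
  have hCtform : Ct = ((l:ℝ)*(b:ℝ)/2) • (1 : Matrix (Fin b) (Fin b) ℝ) + (-((l:ℝ)/2)) • Jb := by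
    rw [hCt, hKS, hNtN]
    match_scalars <;> ring
  -- the explicit Moore-Penrose inverses
  set E : Matrix (Fin b) (Fin b) ℝ :=
    (2/((l:ℝ)*(b:ℝ))) • (1 : Matrix (Fin b) (Fin b) ℝ) + (-(2/((l:ℝ)*(b:ℝ)^2))) • Jb with hEdef
  have hpen1 : Ct * E * Ct = Ct := by
    rw [hCtform, hEdef, mulIJ Jb ((b:ℝ)) _ _ _ _ hJbJb, mulIJ Jb ((b:ℝ)) _ _ _ _ hJbJb]
    match_scalars <;> field_simp <;> ring
  have hpen2 : E * Ct * E = E := by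
    rw [hCtform, hEdef, mulIJ Jb ((b:ℝ)) _ _ _ _ hJbJb, mulIJ Jb ((b:ℝ)) _ _ _ _ hJbJb]
    match_scalars <;> field_simp <;> ring
  have hpen3 : (Ct * E)ᵀ = Ct * E := by
    rw [hCtform, hEdef, mulIJ Jb ((b:ℝ)) _ _ _ _ hJbJb]
    simp [Matrix.transpose_add, Matrix.transpose_smul, Matrix.transpose_one, hJbsymm]
  have hpen4 : (E * Ct)ᵀ = E * Ct := by
    rw [hCtform, hEdef, mulIJ Jb ((b:ℝ)) _ _ _ _ hJbJb]
    simp [Matrix.transpose_add, Matrix.transpose_smul, Matrix.transpose_one, hJbsymm]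
  have hCtpE : Ctp = E := mp_unique_s14 Ct Ctp E hCtp1 hCtp2 hCtp3 hCtp4 hpen1 hpen2 hpen3 hpen4
  set D : Matrix (Fin u) (Fin u) ℝ :=
    (1/2:ℝ) • (1 : Matrix (Fin u) (Fin u) ℝ) + (1/(2*(b:ℝ)*(l:ℝ))) • P
      + (-((3*(b:ℝ)-2)/((l:ℝ)*(b:ℝ)^2*((b:ℝ)-1)))) • Ju with hDdef
  have hqen1 : C * D * C = C := by
    rw [hCform, hDdef,
      mulIPJ P Ju _ _ _ _ _ _ _ _ _ _ hPP hPJu hJuP hJuJu,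
      mulIPJ P Ju _ _ _ _ _ _ _ _ _ _ hPP hPJu hJuP hJuJu]
    match_scalars <;> field_simp <;> ring
  have hqen2 : D * C * D = D := by
    rw [hCform, hDdef,
      mulIPJ P Ju _ _ _ _ _ _ _ _ _ _ hPP hPJu hJuP hJuJu,
      mulIPJ P Ju _ _ _ _ _ _ _ _ _ _ hPP hPJu hJuP hJuJu]
    match_scalars <;> field_simp <;> ring
  have hqen3 : (C * D)ᵀ = C * D := by
    rw [hCform, hDdef, mulIPJ P Ju _ _ _ _ _ _ _ _ _ _ hPP hPJu hJuP hJuJu]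
    simp [Matrix.transpose_add, Matrix.transpose_smul, Matrix.transpose_one, hPsymm, hJusymm]
  have hqen4 : (D * C)ᵀ = D * C := by
    rw [hCform, hDdef, mulIPJ P Ju _ _ _ _ _ _ _ _ _ _ hPP hPJu hJuP hJuJu]
    simp [Matrix.transpose_add, Matrix.transpose_smul, Matrix.transpose_one, hPsymm, hJusymm]
  have hCpD : Cp = D := mp_unique_s14 C Cp D hCp1 hCp2 hCp3 hCp4 hqen1 hqen2 hqen3 hqen4
  -- index elements
  obtain ⟨j0, j1, hj01⟩ : ∃ jA jB : Fin b, jA < jB :=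
    ⟨⟨0, by omega⟩, ⟨1, by omega⟩, by simp [Fin.lt_def]⟩
  obtain ⟨i0, i1, hi01⟩ : ∃ iA iB : Fin u, iA < iB :=
    ⟨⟨0, by omega⟩, ⟨1, by omega⟩, by simp [Fin.lt_def]⟩
  have hlb0 : (0:ℝ) < (l:ℝ) * (b:ℝ) := by positivity
  have hlbne : (l:ℝ) * (b:ℝ) ≠ 0 := ne_of_gt hlb0
  -- WW quadratic form
  have hEq : ∀ (j j' : Fin b), j ≠ j' →
      ((Pi.single j 1 : Fin b → ℝ) - Pi.single j' 1) ⬝ᵥ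
        E.mulVec ((Pi.single j 1 : Fin b → ℝ) - Pi.single j' 1) = 4/((l:ℝ)*(b:ℝ)) := by
    intro j j' hne
    set v : Fin b → ℝ := (Pi.single j 1 : Fin b → ℝ) - Pi.single j' 1 with hv
    have hsumv : ∑ m, v m = 0 := by
      simp [hv, Finset.sum_sub_distrib, Finset.sum_pi_single']
    have hJbv : Jb.mulVec v = 0 := by
      ext m
      simp only [Matrix.mulVec, dotProduct, hJbdef, Matrix.of_apply, one_mul,
        Pi.zero_apply]
      exact hsumv
    have hEv : E.mulVec v = (2/((l:ℝ)*(b:ℝ))) • v := by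
      rw [hEdef, Matrix.add_mulVec, Matrix.smul_mulVec, Matrix.smul_mulVec,
        Matrix.one_mulVec, hJbv]
      simp
    have hvv : v ⬝ᵥ v = 2 := by
      simp [hv, sub_dotProduct, dotProduct_sub, dotProduct_single,
        single_dotProduct, Pi.single_eq_same, Pi.single_eq_of_ne hne.symm,
        Pi.single_eq_of_ne hne]
      norm_num
    rw [hEv, dotProduct_smul, hvv, smul_eq_mul]
    ring
  have hWWsup : sSup {x : ℝ | ∃ j j' : Fin b, j < j' ∧
      x = ((Pi.single j 1 : Fin b → ℝ) - Pi.single j' 1) ⬝ᵥ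
            Ctp.mulVec ((Pi.single j 1 : Fin b → ℝ) - Pi.single j' 1)} = 4/((l:ℝ)*(b:ℝ)) := by
    have hset : {x : ℝ | ∃ j j' : Fin b, j < j' ∧
        x = ((Pi.single j 1 : Fin b → ℝ) - Pi.single j' 1) ⬝ᵥ
              Ctp.mulVec ((Pi.single j 1 : Fin b → ℝ) - Pi.single j' 1)}
        = {4/((l:ℝ)*(b:ℝ))} := by
      ext x
      simp only [Set.mem_setOf_eq, Set.mem_singleton_iff]
      constructor
      · rintro ⟨j, j', hlt, rfl⟩
        rw [hCtpE]
        exact hEq j j' (ne_of_lt hlt)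
      · rintro rfl
        refine ⟨j0, j1, hj01, ?_⟩
        rw [hCtpE, hEq j0 j1 (ne_of_lt hj01)]
    rw [hset, csSup_singleton]
  -- UW quadratic form
  have hUWval : ∀ (i : Fin u) (j : Fin b),
      (ξ i j) ⬝ᵥ Ctp.mulVec (ξ i j) = (2/((l:ℝ)*(b:ℝ))) * (3/2 - Nr i j) := by
    intro i j
    have hw : Nrᵀ.mulVec (Pi.single i 1) = fun m => Nr i m := by
      ext m; simp [Matrix.mulVec_single]
    rw [hCtpE, hξ i j, hw]
    set z : Fin b → ℝ := (Pi.single j 1 : Fin b → ℝ) - (1/2:ℝ) • (fun m => Nr i m) with hz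
    have hsumz : ∑ m, z m = 0 := by
      simp only [hz, Pi.sub_apply, Pi.smul_apply, smul_eq_mul, Finset.sum_sub_distrib,
        Finset.sum_pi_single', ← Finset.mul_sum]
      rw [hrowr i]
      norm_num
    have hJbz : Jb.mulVec z = 0 := by
      ext m
      simp only [Matrix.mulVec, dotProduct, hJbdef, Matrix.of_apply, one_mul,
        Pi.zero_apply]
      exact hsumz
    have hEz : E.mulVec z = (2/((l:ℝ)*(b:ℝ))) • z := by
      rw [hEdef, Matrix.add_mulVec, Matrix.smul_mulVec, Matrix.smul_mulVec,
        Matrix.one_mulVec, hJbz]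
      simp
    have hzz : z ⬝ᵥ z = 3/2 - Nr i j := by
      rw [hz, sub_dotProduct, dotProduct_sub, dotProduct_sub]
      have h1 : (Pi.single j 1 : Fin b → ℝ) ⬝ᵥ (Pi.single j 1 : Fin b → ℝ) = 1 := by
        simp [dotProduct_single]
      have h2 : (Pi.single j 1 : Fin b → ℝ) ⬝ᵥ ((1/2:ℝ) • fun m => Nr i m) = (1/2) * Nr i j := by
        rw [dotProduct_smul, smul_eq_mul]
        simp [single_dotProduct]
      have h3 : ((1/2:ℝ) • fun m => Nr i m) ⬝ᵥ (Pi.single j 1 : Fin b → ℝ) = (1/2) * Nr i j := by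
        rw [smul_dotProduct, smul_eq_mul]
        simp [dotProduct_single]
      have h4 : ((1/2:ℝ) • fun m => Nr i m) ⬝ᵥ ((1/2:ℝ) • fun m => Nr i m) = 1/2 := by
        rw [smul_dotProduct, dotProduct_smul, smul_eq_mul, smul_eq_mul]
        have h5 : (fun m => Nr i m) ⬝ᵥ (fun m => Nr i m) = 2 := by
          simp only [dotProduct]
          rw [Finset.sum_congr rfl (fun m _ => hNsq i m), hrowr i]
        rw [h5]; norm_num
      rw [h1, h2, h3, h4]
      ring
    rw [hEz, dotProduct_smul, hzz, smul_eq_mul]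
  have hUWub : ∀ x ∈ {x : ℝ | ∃ (i : Fin u) (j : Fin b),
      x = (ξ i j) ⬝ᵥ Ctp.mulVec (ξ i j)}, x ≤ 3/((l:ℝ)*(b:ℝ)) := by
    rintro x ⟨i, j, rfl⟩
    rw [hUWval i j]
    have h2 : (0:ℝ) < 2/((l:ℝ)*(b:ℝ)) := by positivity
    have h3 := hNnn i j
    calc (2/((l:ℝ)*(b:ℝ))) * (3/2 - Nr i j) ≤ (2/((l:ℝ)*(b:ℝ))) * (3/2) := by nlinarith
    _ = 3/((l:ℝ)*(b:ℝ)) := by ring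
  have hUWsup : sSup {x : ℝ | ∃ (i : Fin u) (j : Fin b),
      x = (ξ i j) ⬝ᵥ Ctp.mulVec (ξ i j)} = 3/((l:ℝ)*(b:ℝ)) := by
    apply le_antisymm
    · exact csSup_le ⟨_, i0, j0, rfl⟩ hUWub
    · obtain ⟨j, hj⟩ : ∃ j, N i0 j = 0 := by
        by_contra hcon
        push_neg at hcon
        have hall : ∀ j, N i0 j = 1 := fun j => (h01 i0 j).resolve_left (hcon j)
        have hsb : ∑ j, N i0 j = b := by simp [hall]
        rw [hrow i0] at hsb
        omega
      apply le_csSup ⟨3/((l:ℝ)*(b:ℝ)), fun x hx => hUWub x hx⟩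
      refine ⟨i0, j, ?_⟩
      rw [hUWval i0 j, hNre, hj]
      norm_num
  -- UU bound
  have hUUub : ∀ x ∈ {x : ℝ | ∃ i i' : Fin u, i < i' ∧
      x = ((Pi.single i 1 : Fin u → ℝ) - Pi.single i' 1) ⬝ᵥ
            Cp.mulVec ((Pi.single i 1 : Fin u → ℝ) - Pi.single i' 1)},
      x ≤ 1 + 2/((b:ℝ)*(l:ℝ)) := by
    rintro x ⟨i, i', hlt, rfl⟩
    have hne : i ≠ i' := ne_of_lt hlt
    rw [hCpD]
    set v : Fin u → ℝ := (Pi.single i 1 : Fin u → ℝ) - Pi.single i' 1 with hv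
    have hsumv : ∑ m, v m = 0 := by
      simp [hv, Finset.sum_sub_distrib, Finset.sum_pi_single']
    have hJuv : Ju.mulVec v = 0 := by
      ext m
      simp only [Matrix.mulVec, dotProduct, hJudef, Matrix.of_apply, one_mul,
        Pi.zero_apply]
      exact hsumv
    have hvv : v ⬝ᵥ v = 2 := by
      simp [hv, sub_dotProduct, dotProduct_sub, dotProduct_single,
        single_dotProduct, Pi.single_eq_same, Pi.single_eq_of_ne hne.symm,
        Pi.single_eq_of_ne hne]
      norm_num
    have hPv : v ⬝ᵥ P.mulVec v = P i i + P i' i' - P i i' - P i' i := by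
      rw [hv, Matrix.mulVec_sub, sub_dotProduct, dotProduct_sub,
        dotProduct_sub]
      simp [Matrix.mulVec_single, single_dotProduct]
      ring
    have hDv : v ⬝ᵥ D.mulVec v
        = 1 + (1/(2*(b:ℝ)*(l:ℝ))) * (P i i + P i' i' - P i i' - P i' i) := by
      rw [hDdef, Matrix.add_mulVec, Matrix.add_mulVec, Matrix.smul_mulVec,
        Matrix.smul_mulVec, Matrix.smul_mulVec, Matrix.one_mulVec, hJuv, smul_zero,
        add_zero, dotProduct_add, dotProduct_smul, dotProduct_smul,
        hvv, hPv, smul_eq_mul, smul_eq_mul]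
      ring
    have hPsym2 : P i' i = P i i' := by
      conv_lhs => rw [← hPsymm]
      rw [Matrix.transpose_apply]
    have hP0 : (0:ℝ) ≤ P i i' := by
      rw [hPoff]
      exact Finset.sum_nonneg fun m _ => mul_nonneg (hNnn i m) (hNnn i' m)
    rw [hDv, hPd i, hPd i', hPsym2]
    have h2bl : (0:ℝ) < 1/(2*(b:ℝ)*(l:ℝ)) := by positivity
    have hkey : (1/(2*(b:ℝ)*(l:ℝ))) * (2 + 2 - P i i' - P i i')
        ≤ (1/(2*(b:ℝ)*(l:ℝ))) * 4 := by
      apply mul_le_mul_of_nonneg_left _ h2bl.le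
      linarith
    have he : (1/(2*(b:ℝ)*(l:ℝ))) * 4 = 2/((b:ℝ)*(l:ℝ)) := by
      field_simp
      ring
    linarith
  have hMVUUle : MVUU ≤ 1 + 2/((b:ℝ)*(l:ℝ)) := by
    rw [hMVUU]
    exact csSup_le ⟨_, i0, i1, hi01, rfl⟩ hUUub
  -- assembling
  have hWW : MVWW = 2 + 4/((l:ℝ)*(b:ℝ)) := by rw [hMVWW, hWWsup]
  have hUW : MVUW = 3/2 + 3/((l:ℝ)*(b:ℝ)) := by rw [hMVUW, hUWsup]
  have ecomm : 2/((b:ℝ)*(l:ℝ)) = 2/((l:ℝ)*(b:ℝ)) := by rw [mul_comm]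
  have e2 : 2/((l:ℝ)*(b:ℝ)) ≤ 4/((l:ℝ)*(b:ℝ)) := by
    have h24 : (0:ℝ) < 2/((l:ℝ)*(b:ℝ)) := by positivity
    have h44 : 4/((l:ℝ)*(b:ℝ)) = 2/((l:ℝ)*(b:ℝ)) + 2/((l:ℝ)*(b:ℝ)) := by ring
    linarith
  have e3 : 3/((l:ℝ)*(b:ℝ)) ≤ 4/((l:ℝ)*(b:ℝ)) := by
    have h14 : (0:ℝ) < 1/((l:ℝ)*(b:ℝ)) := by positivity
    have h44 : 4/((l:ℝ)*(b:ℝ)) = 3/((l:ℝ)*(b:ℝ)) + 1/((l:ℝ)*(b:ℝ)) := by ring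
    linarith
  have hle1 : MVUU ≤ MVWW := by
    rw [hWW]
    linarith [hMVUUle, ecomm ▸ e2]
  have hle2 : MVUW ≤ MVWW := by
    rw [hWW, hUW]
    linarith
  constructor
  · rw [hMV, max_eq_right hle1, max_eq_left hle2, hWW]
  · rw [div_eq_div_iff hu0r hlbne]
    linear_combination (-2:ℝ) * hur
end

section
/- Let B be a u × b matrix with nonnegative integer entries, every row sum equal to 2, such that C_B := diag(c₁,…,c_b) − (1/2)BᵀB (c_j being the j-th column sum of B) is positive semidefinite with kernel exactly the span of 1_b. Then max_{1≤j<j*≤b} (ẽ_j − ẽ_{j*})ᵀ C_B⁺ (ẽ_j − ẽ_{j*}) ≥ 2(b − 1)/u. (Hence MV_min ≥ 2(b − 1)/u, so the bound of Theorem 2(b) is at least as sharp as that of Theorem 2(a).) -/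
open Matrix BigOperators

/-- For any connected block design with `b` treatments and `u` blocks each of size two
(blocks given by the rows of `B`), the maximal pairwise variance term satisfies
`max_{j<j*} (ẽ_j − ẽ_{j*})ᵀ C_B⁺ (ẽ_j − ẽ_{j*}) ≥ 2(b − 1)/u`; hence `MV_min ≥ 2(b−1)/u`. -/
theorem stmt17
    (u b : ℕ) (hu : 0 < u) (hb : 2 ≤ b)
    (B : Matrix (Fin u) (Fin b) ℕ)
    (hrow : ∀ i, ∑ j, B i j = 2)
    (CB : Matrix (Fin b) (Fin b) ℝ)
    (hCB : CB = Matrix.diagonal (fun j => ((∑ i, B i j : ℕ) : ℝ))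
        - (1/2 : ℝ) • ((B.map (Nat.cast : ℕ → ℝ))ᵀ * B.map (Nat.cast : ℕ → ℝ)))
    (hpsd : CB.PosSemidef)
    (hker : ∀ x : Fin b → ℝ, CB.mulVec x = 0 ↔ ∃ c : ℝ, x = fun _ => c)
    (CBp : Matrix (Fin b) (Fin b) ℝ)
    (hCBp1 : CB * CBp * CB = CB) (hCBp2 : CBp * CB * CBp = CBp)
    (hCBp3 : (CB * CBp)ᵀ = CB * CBp) (hCBp4 : (CBp * CB)ᵀ = CBp * CB) :
    2 * ((b : ℝ) - 1) / (u : ℝ)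
      ≤ sSup {x : ℝ | ∃ j j' : Fin b, j < j' ∧
          x = ((Pi.single j 1 : Fin b → ℝ) - Pi.single j' 1) ⬝ᵥ
                CBp.mulVec ((Pi.single j 1 : Fin b → ℝ) - Pi.single j' 1)} := by
  classical
  have hb1 : (2:ℝ) ≤ (b:ℝ) := by exact_mod_cast hb
  have hbpos : (0:ℝ) < (b:ℝ) - 1 := by linarith
  have hupos : (0:ℝ) < (u:ℝ) := by exact_mod_cast hu
  have hCsymm : CBᵀ = CB := by simpa [Matrix.IsHermitian] using hpsd.1
  set one : Fin b → ℝ := fun _ => 1 with hone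
  have hC1 : CB *ᵥ one = 0 := (hker one).mpr ⟨1, rfl⟩
  -- CBpᵀ *ᵥ one = 0
  have hCpT1 : CBpᵀ *ᵥ one = 0 := by
    have h2 : CBpᵀ = CBpᵀ * (CBp * CB) := by
      calc CBpᵀ = (CBp * CB * CBp)ᵀ := by rw [hCBp2]
        _ = CBpᵀ * (CBp * CB)ᵀ := by rw [Matrix.transpose_mul]
        _ = CBpᵀ * (CBp * CB) := by rw [hCBp4]
    calc CBpᵀ *ᵥ one = (CBpᵀ * (CBp * CB)) *ᵥ one := by rw [← h2]
      _ = CBpᵀ *ᵥ (CBp *ᵥ (CB *ᵥ one)) := by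
            rw [← Matrix.mulVec_mulVec, ← Matrix.mulVec_mulVec]
      _ = 0 := by rw [hC1, Matrix.mulVec_zero, Matrix.mulVec_zero]
  -- E = 1 - CB * CBp; CB * E = 0
  set E : Matrix (Fin b) (Fin b) ℝ := 1 - CB * CBp with hE
  have hCE : CB * E = 0 := by
    have h1 : E * CB = 0 := by
      rw [hE, Matrix.sub_mul, Matrix.one_mul, hCBp1, sub_self]
    have hEt : Eᵀ = E := by rw [hE, Matrix.transpose_sub, Matrix.transpose_one, hCBp3]
    calc CB * E = (Eᵀ * CBᵀ)ᵀ := by rw [Matrix.transpose_mul, Matrix.transpose_transpose, Matrix.transpose_transpose]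
      _ = (E * CB)ᵀ := by rw [hEt, hCsymm]
      _ = 0 := by rw [h1, Matrix.transpose_zero]
  have hEconst : ∀ v : Fin b → ℝ, ∃ c : ℝ, E *ᵥ v = fun _ => c := by
    intro v
    refine (hker (E *ᵥ v)).mp ?_
    rw [Matrix.mulVec_mulVec, hCE, Matrix.zero_mulVec]
  -- sqrt of CB
  obtain ⟨S, hSsymm, hSS⟩ : ∃ S : Matrix (Fin b) (Fin b) ℝ, Sᵀ = S ∧ S * S = CB := by
    open scoped MatrixOrder in
    obtain ⟨X, hX, -, hXX⟩ := CFC.exists_sqrt_of_isSelfAdjoint_of_quasispectrumRestricts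
      hpsd.isHermitian (QuasispectrumRestricts.nnreal_of_nonneg hpsd.nonneg)
    refine ⟨X, ?_, hXX⟩
    simpa [Matrix.star_eq_conjTranspose, Matrix.conjTranspose_eq_transpose_of_trivial] using hX.star_eq
  -- Cauchy-Schwarz for CB
  have hCS : ∀ v w : Fin b → ℝ,
      (v ⬝ᵥ CB *ᵥ w) ^ 2 ≤ (v ⬝ᵥ CB *ᵥ v) * (w ⬝ᵥ CB *ᵥ w) := by
    intro v w
    have key : ∀ x y : Fin b → ℝ, x ⬝ᵥ CB *ᵥ y = (S *ᵥ x) ⬝ᵥ (S *ᵥ y) := by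
      intro x y
      rw [← hSS, ← Matrix.mulVec_mulVec, Matrix.dotProduct_mulVec x S]
      congr 1
      nth_rewrite 1 [← hSsymm]
      rw [Matrix.vecMul_transpose]
    rw [key v w, key v v, key w w]
    have := Finset.sum_mul_sq_le_sq_mul_sq Finset.univ (S *ᵥ v) (S *ᵥ w)
    simpa [dotProduct, pow_two, mul_comm] using this
  -- pair difference vectors
  set dv : Fin b → Fin b → (Fin b → ℝ) :=
    fun j j' => (Pi.single j 1 : Fin b → ℝ) - Pi.single j' 1 with hdv
  have hdot_const : ∀ (j j' : Fin b) (c : ℝ), dv j j' ⬝ᵥ (fun _ => c) = 0 := by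
    intro j j' c
    simp [hdv, sub_dotProduct, single_dotProduct]
  have hdecomp : ∀ v : Fin b → ℝ, (CB * CBp) *ᵥ v = v - E *ᵥ v := by
    intro v
    rw [hE, Matrix.sub_mulVec, Matrix.one_mulVec]
    abel
  have hsub : ∀ j j', dv j j' ⬝ᵥ ((CB * CBp) *ᵥ (dv j j')) = dv j j' ⬝ᵥ dv j j' := by
    intro j j'
    obtain ⟨c, hc⟩ := hEconst (dv j j')
    rw [hdecomp, dotProduct_sub, hc, hdot_const, sub_zero]
  have hqp : ∀ j j', (dv j j' ⬝ᵥ dv j j') ^ 2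
      ≤ (dv j j' ⬝ᵥ CB *ᵥ dv j j') * (dv j j' ⬝ᵥ CBp *ᵥ dv j j') := by
    intro j j'
    set d := dv j j' with hd
    set y := CBp *ᵥ d with hy
    have h1 : d ⬝ᵥ d = d ⬝ᵥ CB *ᵥ y := by
      rw [hy, Matrix.mulVec_mulVec, hsub j j']
    have hsumy : ∀ c : ℝ, y ⬝ᵥ (fun _ => c) = 0 := by
      intro c
      have e0 : one ⬝ᵥ y = 0 := by
        rw [hy, Matrix.dotProduct_mulVec]
        have : one ᵥ* CBp = 0 := by
          nth_rewrite 1 [← Matrix.transpose_transpose CBp]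
          rw [Matrix.vecMul_transpose, hCpT1]
        rw [this, zero_dotProduct]
      have : y ⬝ᵥ (fun _ => c) = c * (one ⬝ᵥ y) := by
        simp [dotProduct, hone, Finset.mul_sum]
        ring_nf
        exact Finset.sum_congr rfl fun k _ => by ring
      rw [this, e0, mul_zero]
    have h2 : y ⬝ᵥ CB *ᵥ y = d ⬝ᵥ y := by
      obtain ⟨c, hc⟩ := hEconst d
      rw [hy, Matrix.mulVec_mulVec, ← hy, hdecomp, hc, dotProduct_sub, hsumy, sub_zero,
        dotProduct_comm]
    have hCSdy := hCS d y
    rw [← h1, h2, hy] at hCSdy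
    exact hCSdy
  have hqnn : ∀ j j', 0 ≤ dv j j' ⬝ᵥ CB *ᵥ dv j j' := by
    intro j j'
    simpa using hpsd.dotProduct_mulVec_nonneg (dv j j')
  have hqpos : ∀ j j', j ≠ j' → 0 < dv j j' ⬝ᵥ CB *ᵥ dv j j' := by
    intro j j' hne
    rcases (hqnn j j').lt_or_eq with h | h
    · exact h
    · exfalso
      have hz : CB *ᵥ dv j j' = 0 := by
        have := (hpsd.dotProduct_mulVec_zero_iff (dv j j')).mp (by simpa using h.symm)
        exact this
      obtain ⟨c, hc⟩ := (hker (dv j j')).mp hz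
      have e1 : dv j j' j = 1 := by
        simp [hdv, Pi.single_eq_same, Pi.single_eq_of_ne hne]
      have e2 : dv j j' j' = -1 := by
        simp [hdv, Pi.single_eq_same, Pi.single_eq_of_ne hne.symm]
      rw [hc] at e1 e2
      linarith
  have hdd : ∀ j j', j ≠ j' → dv j j' ⬝ᵥ dv j j' = 2 := by
    intro j j' hne
    simp [hdv, sub_dotProduct, dotProduct_sub, single_dotProduct,
      dotProduct_single, Pi.single_eq_same, Pi.single_eq_of_ne hne,
      Pi.single_eq_of_ne hne.symm]
    norm_num
  -- trace bound
  have htr : ∑ j, CB j j ≤ (u : ℝ) := by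
    have hdiag : ∀ j, CB j j
        = (∑ i, (B i j : ℝ)) - (1/2) * ∑ i, (B i j : ℝ) * (B i j : ℝ) := by
      intro j
      rw [hCB]
      simp [Matrix.sub_apply, Matrix.diagonal_apply_eq, Matrix.smul_apply,
        Matrix.mul_apply, Matrix.transpose_apply, Matrix.map_apply]
      try push_cast
      try ring_nf
    have e1 : ∑ j, ∑ i, (B i j : ℝ) = 2 * (u : ℝ) := by
      rw [Finset.sum_comm]
      have : ∀ i : Fin u, ∑ j, (B i j : ℝ) = 2 := by
        intro i
        rw [← Nat.cast_sum]
        exact_mod_cast congrArg (Nat.cast : ℕ → ℝ) (hrow i)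
      rw [Finset.sum_congr rfl fun i _ => this i]
      simp [Finset.sum_const, Finset.card_univ]
      ring
    have e2 : ∑ j, ∑ i, (B i j : ℝ) ≤ ∑ j, ∑ i, (B i j : ℝ) * (B i j : ℝ) := by
      refine Finset.sum_le_sum fun j _ => Finset.sum_le_sum fun i _ => ?_
      have : B i j ≤ B i j * B i j := by nlinarith [Nat.zero_le (B i j)]
      exact_mod_cast this
    calc ∑ j, CB j j
        = (∑ j, ∑ i, (B i j : ℝ)) - (1/2) * ∑ j, ∑ i, (B i j : ℝ) * (B i j : ℝ) := by
          rw [Finset.sum_congr rfl fun j _ => hdiag j, Finset.sum_sub_distrib, ← Finset.mul_sum]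
      _ ≤ (2 : ℝ) * u - (1/2) * (2 * u) := by
          rw [e1]
          have := e2
          rw [e1] at this
          linarith
      _ = (u : ℝ) := by ring
  -- expansion of the quadratic form
  have hsym' : ∀ a c : Fin b, CB a c = CB c a := by
    intro a c
    exact congrFun (congrFun hCsymm c) a
  have hq_expand : ∀ j j', dv j j' ⬝ᵥ CB *ᵥ dv j j'
      = CB j j + CB j' j' - CB j j' - CB j' j := by
    intro j j'
    simp [hdv, Matrix.mulVec_sub, Matrix.mulVec_single, sub_dotProduct,
      dotProduct_sub, single_dotProduct]
    ring
  have hrowzero : ∀ j, ∑ j', CB j j' = 0 := by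
    intro j
    have := congrFun hC1 j
    simpa [Matrix.mulVec, dotProduct, hone] using this
  have hsumall : ∑ j, ∑ j', (dv j j' ⬝ᵥ CB *ᵥ dv j j') = 2 * (b : ℝ) * ∑ j, CB j j := by
    have inner : ∀ j, ∑ j', (dv j j' ⬝ᵥ CB *ᵥ dv j j')
        = (b : ℝ) * CB j j + ∑ j', CB j' j' := by
      intro j
      have colzero : ∑ j', CB j' j = 0 := by
        rw [Finset.sum_congr rfl fun j' _ => hsym' j' j]
        exact hrowzero j
      rw [Finset.sum_congr rfl fun j' _ => hq_expand j j']
      rw [Finset.sum_sub_distrib, Finset.sum_sub_distrib, Finset.sum_add_distrib,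
        hrowzero, colzero, Finset.sum_const, Finset.card_univ]
      simp
      try ring
    rw [Finset.sum_congr rfl fun j _ => inner j, Finset.sum_add_distrib, ← Finset.mul_sum,
      Finset.sum_const, Finset.card_univ]
    simp
    try ring
  -- find a minimizing off-diagonal pair
  set f : Fin b × Fin b → ℝ := fun pr => dv pr.1 pr.2 ⬝ᵥ CB *ᵥ dv pr.1 pr.2 with hf
  set sOD : Finset (Fin b × Fin b) := (Finset.univ : Finset (Fin b)).offDiag with hsOD
  have hsne : sOD.Nonempty := by
    refine ⟨(⟨0, by omega⟩, ⟨1, by omega⟩), Finset.mem_offDiag.mpr ⟨Finset.mem_univ _, Finset.mem_univ _, ?_⟩⟩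
    simp [Fin.ext_iff]
  obtain ⟨m, hmmem, hmin⟩ := Finset.exists_min_image sOD f hsne
  have hmne : m.1 ≠ m.2 := (Finset.mem_offDiag.mp hmmem).2.2
  have hsum_s : ∑ pr ∈ sOD, f pr = 2 * (b : ℝ) * ∑ j, CB j j := by
    have hdiag0 : ∀ pr : Fin b × Fin b, pr.1 = pr.2 → f pr = 0 := by
      intro pr h
      have : dv pr.1 pr.2 = 0 := by
        rw [hdv, h]; simp
      rw [hf]
      simp [this]
    have : ∑ pr ∈ sOD, f pr = ∑ pr ∈ Finset.univ ×ˢ Finset.univ, f pr := by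
      rw [hsOD, show (Finset.univ : Finset (Fin b)).offDiag = (Finset.univ ×ˢ Finset.univ).filter (fun pr : Fin b × Fin b => pr.1 ≠ pr.2) from by ext x; simp [Finset.mem_offDiag]]
      rw [← Finset.sum_filter_add_sum_filter_not (Finset.univ ×ˢ Finset.univ)
        (fun pr : Fin b × Fin b => pr.1 ≠ pr.2) f]
      have hz : ∑ pr ∈ (Finset.univ ×ˢ Finset.univ).filter
          (fun pr : Fin b × Fin b => ¬ pr.1 ≠ pr.2), f pr = 0 := by
        refine Finset.sum_eq_zero fun pr hpr => ?_
        exact hdiag0 pr (not_not.mp (Finset.mem_filter.mp hpr).2)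
      rw [hz, add_zero]
    rw [this, Finset.sum_product, ← hsumall]
  have hcard : (sOD.card : ℝ) = (b : ℝ) * ((b : ℝ) - 1) := by
    rw [hsOD, Finset.offDiag_card]
    simp only [Finset.card_univ, Fintype.card_fin]
    have hle : b ≤ b * b := Nat.le_mul_of_pos_left b (by omega)
    push_cast [Nat.cast_sub hle]
    ring
  have hqm : f m * ((b : ℝ) - 1) ≤ 2 * (u : ℝ) := by
    have h1 : (sOD.card : ℝ) * f m ≤ ∑ pr ∈ sOD, f pr := by
      have := Finset.card_nsmul_le_sum sOD f (f m) (fun x hx => hmin x hx)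
      simpa [nsmul_eq_mul] using this
    rw [hsum_s, hcard] at h1
    have hbp : (0 : ℝ) < (b : ℝ) := by linarith
    have h2 : 2 * (b : ℝ) * ∑ j, CB j j ≤ 2 * (b : ℝ) * u := by
      have := htr
      nlinarith
    nlinarith
  have hqmpos : 0 < f m := hqpos m.1 m.2 hmne
  have h4 : (4 : ℝ) ≤ f m * (dv m.1 m.2 ⬝ᵥ CBp *ᵥ dv m.1 m.2) := by
    have := hqp m.1 m.2
    rw [hdd m.1 m.2 hmne] at this
    norm_num at this
    exact this
  set pm : ℝ := dv m.1 m.2 ⬝ᵥ CBp *ᵥ dv m.1 m.2 with hpm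
  have hfinal : 2 * ((b : ℝ) - 1) / (u : ℝ) ≤ pm := by
    rw [div_le_iff₀ hupos]
    nlinarith [mul_pos hqmpos hupos]
  -- conclude via sSup
  set Sset : Set ℝ := {x : ℝ | ∃ j j' : Fin b, j < j' ∧
      x = ((Pi.single j 1 : Fin b → ℝ) - Pi.single j' 1) ⬝ᵥ
            CBp.mulVec ((Pi.single j 1 : Fin b → ℝ) - Pi.single j' 1)} with hSset
  have hbdd : BddAbove Sset := by
    refine Set.Finite.bddAbove (Set.Finite.subset (Set.finite_range
      (fun pr : Fin b × Fin b => dv pr.1 pr.2 ⬝ᵥ CBp *ᵥ dv pr.1 pr.2)) ?_)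
    rintro x ⟨j, j', _, rfl⟩
    exact ⟨(j, j'), rfl⟩
  have hpm_mem : pm ∈ Sset := by
    rcases lt_or_gt_of_ne hmne with h | h
    · exact ⟨m.1, m.2, h, rfl⟩
    · refine ⟨m.2, m.1, h, ?_⟩
      have hneg : dv m.2 m.1 = -dv m.1 m.2 := by
        rw [hdv]; simp [neg_sub]
      show pm = dv m.2 m.1 ⬝ᵥ CBp *ᵥ dv m.2 m.1
      rw [hneg, Matrix.mulVec_neg, neg_dotProduct, dotProduct_neg, neg_neg]
  exact le_trans hfinal (le_csSup hbdd hpm_mem)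
end
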